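/- arXiv:2212.13681 — 12 statements merged into one kernel-verified Lean document; each statement's English description precedes it below -/
import Mathlib

section
/- Let (x_j)_{j∈J} be a frame of a Hilbert space H with frame bounds B ≥ A > 0. Let 0 < ε < A and let (y_j)_{j∈J} be a family of vectors in H such that Σ_{j∈J} ‖x_j − y_j‖² < ε. Then (y_j)_{j∈J} is a frame of H with upper frame bound B(1 + √(ε/B))² and lower frame bound A(1 − √(ε/A))². -/
open scoped ComplexInnerProductSpace

lemma aux_minkowski {J : Type*} {b d : J → ℝ} (hb : ∀ j, 0 ≤ b j) (hd : ∀ j, 0 ≤ d j)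
    (hbs : Summable fun j => b j ^ 2) (hds : Summable fun j => d j ^ 2) :
    (Summable fun j => (b j + d j) ^ 2) ∧
      Real.sqrt (∑' j, (b j + d j) ^ 2) ≤
        Real.sqrt (∑' j, b j ^ 2) + Real.sqrt (∑' j, d j ^ 2) := by
  have hbs' : Summable fun j => b j ^ (2:ℝ) := by
    simpa [Real.rpow_two] using hbs
  have hds' : Summable fun j => d j ^ (2:ℝ) := by
    simpa [Real.rpow_two] using hds
  obtain ⟨h1, h2⟩ := Real.Lp_add_le_tsum_of_nonneg one_le_two hb hd hbs' hds'
  constructor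
  · simpa [Real.rpow_two] using h1
  · simpa [Real.rpow_two, Real.sqrt_eq_rpow] using h2

/-- **Christensen's perturbation theorem.** If `(x j)` is a frame of a Hilbert space `H`
with frame bounds `B ≥ A > 0`, `0 < ε < A`, and `(y j)` satisfies `∑ ‖x j - y j‖² < ε`,
then `(y j)` is a frame with upper frame bound `B(1+√(ε/B))²` and lower frame bound
`A(1-√(ε/A))²`. -/
theorem stmt_0 {H : Type*} [NormedAddCommGroup H] [InnerProductSpace ℂ H] [CompleteSpace H]
    {J : Type*} (x y : J → H) (A B ε : ℝ) (hA : 0 < A) (hAB : A ≤ B)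
    (hx_summable : ∀ u : H, Summable fun j => ‖⟪u, x j⟫‖ ^ 2)
    (hx_frame : ∀ u : H,
      A * ‖u‖ ^ 2 ≤ ∑' j, ‖⟪u, x j⟫‖ ^ 2 ∧ ∑' j, ‖⟪u, x j⟫‖ ^ 2 ≤ B * ‖u‖ ^ 2)
    (hε : 0 < ε) (hεA : ε < A)
    (hpert_summable : Summable fun j => ‖x j - y j‖ ^ 2)
    (hpert : ∑' j, ‖x j - y j‖ ^ 2 < ε) :
    (∀ u : H, Summable fun j => ‖⟪u, y j⟫‖ ^ 2) ∧
      (∀ u : H,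
        A * (1 - Real.sqrt (ε / A)) ^ 2 * ‖u‖ ^ 2 ≤ ∑' j, ‖⟪u, y j⟫‖ ^ 2 ∧
          ∑' j, ‖⟪u, y j⟫‖ ^ 2 ≤ B * (1 + Real.sqrt (ε / B)) ^ 2 * ‖u‖ ^ 2) := by
  have hB : (0:ℝ) < B := hA.trans_le hAB
  -- notation
  set a : H → J → ℝ := fun u j => ‖⟪u, x j⟫‖ with ha_def
  set b : H → J → ℝ := fun u j => ‖⟪u, y j⟫‖ with hb_def
  set d : H → J → ℝ := fun u j => ‖⟪u, x j - y j⟫‖ with hd_def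
  have ha0 : ∀ u j, 0 ≤ a u j := fun u j => norm_nonneg _
  have hb0 : ∀ u j, 0 ≤ b u j := fun u j => norm_nonneg _
  have hd0 : ∀ u j, 0 ≤ d u j := fun u j => norm_nonneg _
  -- summability of d²
  have hd_sum : ∀ u : H, Summable fun j => d u j ^ 2 := by
    intro u
    apply Summable.of_nonneg_of_le (fun j => by positivity)
      (fun j => ?_) (hpert_summable.mul_left (‖u‖ ^ 2))
    have := norm_inner_le_norm (𝕜 := ℂ) u (x j - y j)
    calc d u j ^ 2 ≤ (‖u‖ * ‖x j - y j‖) ^ 2 := by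
          apply pow_le_pow_left₀ (hd0 u j) this
      _ = ‖u‖ ^ 2 * ‖x j - y j‖ ^ 2 := by ring
  -- bound on ∑ d²
  have hd_tsum : ∀ u : H, ∑' j, d u j ^ 2 ≤ ε * ‖u‖ ^ 2 := by
    intro u
    calc ∑' j, d u j ^ 2 ≤ ∑' j, ‖u‖ ^ 2 * ‖x j - y j‖ ^ 2 := by
          apply Summable.tsum_le_tsum (fun j => ?_) (hd_sum u) (hpert_summable.mul_left _)
          have := norm_inner_le_norm (𝕜 := ℂ) u (x j - y j)
          calc d u j ^ 2 ≤ (‖u‖ * ‖x j - y j‖) ^ 2 := pow_le_pow_left₀ (hd0 u j) this 2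
            _ = ‖u‖ ^ 2 * ‖x j - y j‖ ^ 2 := by ring
      _ = ‖u‖ ^ 2 * ∑' j, ‖x j - y j‖ ^ 2 := tsum_mul_left
      _ ≤ ‖u‖ ^ 2 * ε := by
          apply mul_le_mul_of_nonneg_left hpert.le (by positivity)
      _ = ε * ‖u‖ ^ 2 := by ring
  -- pointwise inequalities
  have hba : ∀ u j, b u j ≤ a u j + d u j := by
    intro u j
    have : ⟪u, y j⟫ = ⟪u, x j⟫ - ⟪u, x j - y j⟫ := by
      rw [inner_sub_right]; ring
    rw [hb_def]; simp only [this]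
    exact (norm_sub_le _ _).trans (by rfl)
  have hab : ∀ u j, a u j ≤ b u j + d u j := by
    intro u j
    have : ⟪u, x j⟫ = ⟪u, y j⟫ + ⟪u, x j - y j⟫ := by
      rw [inner_sub_right]; ring
    rw [ha_def]; simp only [this]
    exact norm_add_le _ _
  -- summability of b²
  have hb_sum : ∀ u : H, Summable fun j => b u j ^ 2 := by
    intro u
    apply Summable.of_nonneg_of_le (fun j => by positivity) (fun j => ?_)
      (aux_minkowski (ha0 u) (hd0 u) (hx_summable u) (hd_sum u)).1
    exact pow_le_pow_left₀ (hb0 u j) (hba u j) 2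
  refine ⟨hb_sum, fun u => ?_⟩
  have htb0 : 0 ≤ ∑' j, b u j ^ 2 := tsum_nonneg fun j => by positivity
  have hta0 : 0 ≤ ∑' j, a u j ^ 2 := tsum_nonneg fun j => by positivity
  have hsd : Real.sqrt (∑' j, d u j ^ 2) ≤ Real.sqrt ε * ‖u‖ := by
    have := Real.sqrt_le_sqrt (hd_tsum u)
    rwa [Real.sqrt_mul hε.le, Real.sqrt_sq (norm_nonneg u)] at this
  have hsa_up : Real.sqrt (∑' j, a u j ^ 2) ≤ Real.sqrt B * ‖u‖ := by
    have := Real.sqrt_le_sqrt (hx_frame u).2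
    rwa [Real.sqrt_mul hB.le, Real.sqrt_sq (norm_nonneg u)] at this
  have hsa_lo : Real.sqrt A * ‖u‖ ≤ Real.sqrt (∑' j, a u j ^ 2) := by
    have := Real.sqrt_le_sqrt (hx_frame u).1
    rwa [Real.sqrt_mul hA.le, Real.sqrt_sq (norm_nonneg u)] at this
  constructor
  · -- lower bound
    have hmk := (aux_minkowski (hb0 u) (hd0 u) (hb_sum u) (hd_sum u)).2
    have h1 : Real.sqrt (∑' j, a u j ^ 2) ≤
        Real.sqrt (∑' j, (b u j + d u j) ^ 2) := by
      apply Real.sqrt_le_sqrt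
      apply Summable.tsum_le_tsum (fun j => ?_) (hx_summable u)
        (aux_minkowski (hb0 u) (hd0 u) (hb_sum u) (hd_sum u)).1
      exact pow_le_pow_left₀ (ha0 u j) (hab u j) 2
    have h2 : (Real.sqrt A - Real.sqrt ε) * ‖u‖ ≤ Real.sqrt (∑' j, b u j ^ 2) := by
      nlinarith [h1.trans hmk, hsa_lo, hsd]
    have hAε : Real.sqrt ε ≤ Real.sqrt A := Real.sqrt_le_sqrt hεA.le
    have heq : A * (1 - Real.sqrt (ε / A)) ^ 2 = (Real.sqrt A - Real.sqrt ε) ^ 2 := by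
      have hsA : (0:ℝ) < Real.sqrt A := Real.sqrt_pos.2 hA
      rw [Real.sqrt_div hε.le A]
      conv_lhs => rw [← Real.sq_sqrt hA.le]
      field_simp
      rw [Real.sqrt_sq hsA.le]
    have hnn : 0 ≤ (Real.sqrt A - Real.sqrt ε) * ‖u‖ := by
      apply mul_nonneg (by linarith) (norm_nonneg u)
    calc A * (1 - Real.sqrt (ε / A)) ^ 2 * ‖u‖ ^ 2
        = ((Real.sqrt A - Real.sqrt ε) * ‖u‖) ^ 2 := by rw [heq]; ring
      _ ≤ Real.sqrt (∑' j, b u j ^ 2) ^ 2 := pow_le_pow_left₀ hnn h2 2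
      _ = ∑' j, b u j ^ 2 := Real.sq_sqrt htb0
  · -- upper bound
    have hmk := (aux_minkowski (ha0 u) (hd0 u) (hx_summable u) (hd_sum u)).2
    have h1 : Real.sqrt (∑' j, b u j ^ 2) ≤
        Real.sqrt (∑' j, (a u j + d u j) ^ 2) := by
      apply Real.sqrt_le_sqrt
      apply Summable.tsum_le_tsum (fun j => ?_) (hb_sum u)
        (aux_minkowski (ha0 u) (hd0 u) (hx_summable u) (hd_sum u)).1
      exact pow_le_pow_left₀ (hb0 u j) (hba u j) 2
    have h2 : Real.sqrt (∑' j, b u j ^ 2) ≤ (Real.sqrt B + Real.sqrt ε) * ‖u‖ := by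
      nlinarith [h1.trans hmk, hsa_up, hsd]
    have heq : B * (1 + Real.sqrt (ε / B)) ^ 2 = (Real.sqrt B + Real.sqrt ε) ^ 2 := by
      have hsB : (0:ℝ) < Real.sqrt B := Real.sqrt_pos.2 hB
      rw [Real.sqrt_div hε.le B]
      conv_lhs => rw [← Real.sq_sqrt hB.le]
      field_simp
      rw [Real.sqrt_sq hsB.le]
    calc ∑' j, b u j ^ 2 = Real.sqrt (∑' j, b u j ^ 2) ^ 2 := (Real.sq_sqrt htb0).symm
      _ ≤ ((Real.sqrt B + Real.sqrt ε) * ‖u‖) ^ 2 := pow_le_pow_left₀ (Real.sqrt_nonneg _) h2 2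
      _ = B * (1 + Real.sqrt (ε / B)) ^ 2 * ‖u‖ ^ 2 := by rw [heq]; ring
end

section
/- Let (x_j)_{j∈J} be a frame of a Hilbert space H. Then for all x, y ∈ H there exist x₀, y₀ ∈ H with ⟨x₀, y₀⟩ = 0 so that min_{|λ|=1} ‖x − λy‖ = ‖x₀ − y₀‖ and ||⟨x₀, x_j⟩| − |⟨y₀, x_j⟩|| ≤ ||⟨x, x_j⟩| − |⟨y, x_j⟩|| for all j ∈ J. -/
open scoped ComplexInnerProductSpace

lemma key_ineq (α β : ℂ) (t : ℝ) (ht0 : 0 ≤ t) (ht1 : t ≤ 1) :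
    |‖α + (t:ℂ)*β‖ - ‖α - (t:ℂ)*β‖| ≤ |‖α + β‖ - ‖α - β‖| := by
  have h1 : ‖α + (t:ℂ)*β‖ * ‖α - (t:ℂ)*β‖ = ‖α^2 - (t:ℂ)^2*β^2‖ := by
    rw [← norm_mul]; ring_nf
  have h2 : ‖α + β‖ * ‖α - β‖ = ‖α^2 - β^2‖ := by
    rw [← norm_mul]; ring_nf
  have hsq1 : ‖α + (t:ℂ)*β‖^2 + ‖α - (t:ℂ)*β‖^2 = 2*‖α‖^2 + 2*t^2*‖β‖^2 := by
    simp only [Complex.sq_norm, Complex.normSq_apply, Complex.add_re,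
      Complex.add_im, Complex.sub_re, Complex.sub_im, Complex.mul_re, Complex.mul_im,
      Complex.ofReal_re, Complex.ofReal_im]
    ring
  have hsq2 : ‖α + β‖^2 + ‖α - β‖^2 = 2*‖α‖^2 + 2*‖β‖^2 := by
    simp only [Complex.sq_norm, Complex.normSq_apply, Complex.add_re,
      Complex.add_im, Complex.sub_re, Complex.sub_im, Complex.mul_re, Complex.mul_im,
      Complex.ofReal_re, Complex.ofReal_im]
    ring
  have h3 : ‖(t:ℂ)^2*β^2 - β^2‖ = (1-t^2)*‖β‖^2 := by
    rw [show (t:ℂ)^2*β^2 - β^2 = ((t^2-1 : ℝ):ℂ) * β^2 by push_cast; ring]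
    rw [norm_mul, norm_pow, Complex.norm_real]
    rw [Real.norm_eq_abs, abs_of_nonpos (by nlinarith)]
    ring
  have htri : ‖α^2 - β^2‖ ≤ ‖α^2 - (t:ℂ)^2*β^2‖ + (1 - t^2)*‖β‖^2 := by
    calc ‖α^2 - β^2‖ ≤ ‖α^2 - (t:ℂ)^2*β^2‖ + ‖(t:ℂ)^2*β^2 - β^2‖ := norm_sub_le_norm_sub_add_norm_sub _ _ _
    _ = _ := by rw [h3]
  have hfin : (‖α + (t:ℂ)*β‖ - ‖α - (t:ℂ)*β‖)^2 ≤ (‖α + β‖ - ‖α - β‖)^2 := by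
    nlinarith [h1, h2, hsq1, hsq2, htri]
  rw [← Real.sqrt_sq_eq_abs, ← Real.sqrt_sq_eq_abs]
  exact Real.sqrt_le_sqrt hfin

/-- **Orthogonality reduction lemma.** If `(x j)` is a frame of a Hilbert space `H` then for
all `u, v ∈ H` there are orthogonal `u₀, v₀ ∈ H` with
`min_{|λ|=1} ‖u - λ v‖ = ‖u₀ - v₀‖` and
`||⟨u₀,xⱼ⟩| - |⟨v₀,xⱼ⟩|| ≤ ||⟨u,xⱼ⟩| - |⟨v,xⱼ⟩||` for all `j`. -/
theorem stmt_2 {H : Type*} [NormedAddCommGroup H] [InnerProductSpace ℂ H] [CompleteSpace H]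
    {J : Type*} (x : J → H) (A B : ℝ) (hA : 0 < A) (hAB : A ≤ B)
    (hx_summable : ∀ u : H, Summable fun j => ‖⟪u, x j⟫‖ ^ 2)
    (hx_frame : ∀ u : H,
      A * ‖u‖ ^ 2 ≤ ∑' j, ‖⟪u, x j⟫‖ ^ 2 ∧ ∑' j, ‖⟪u, x j⟫‖ ^ 2 ≤ B * ‖u‖ ^ 2) :
    ∀ u v : H, ∃ u₀ v₀ : H, ⟪u₀, v₀⟫ = 0 ∧
      (⨅ lam : {c : ℂ // ‖c‖ = 1}, ‖u - (lam : ℂ) • v‖) = ‖u₀ - v₀‖ ∧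
      ∀ j : J, |‖⟪u₀, x j⟫‖ - ‖⟪v₀, x j⟫‖| ≤ |‖⟪u, x j⟫‖ - ‖⟪v, x j⟫‖| := by
  intro u v
  set c : ℂ := ⟪u, v⟫ with hc
  set lam0 : ℂ := if c = 0 then 1 else (starRingEnd ℂ) c / ‖c‖ with hlam0
  have hl1 : ‖lam0‖ = 1 := by
    rw [hlam0]
    split_ifs with h
    · simp
    · rw [norm_div, RCLike.norm_conj, Complex.norm_real, Real.norm_eq_abs,
        abs_of_nonneg (norm_nonneg _), div_self (norm_ne_zero_iff.mpr h)]
  have hl2 : lam0 * c = (‖c‖ : ℂ) := by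
    rw [hlam0]
    split_ifs with h
    · simp [h]
    · have hcn : (‖c‖ : ℂ) ≠ 0 := by simpa using norm_ne_zero_iff.mpr h
      have hcc : (starRingEnd ℂ) c * c = (‖c‖ : ℂ)^2 := by
        rw [mul_comm, Complex.mul_conj, Complex.normSq_eq_norm_sq]
        push_cast; ring
      rw [div_mul_eq_mul_div, hcc, pow_two, mul_div_assoc, div_self hcn, mul_one]
  set w : H := lam0 • v with hwdef
  have huw : ⟪u, w⟫ = (‖c‖ : ℂ) := by rw [hwdef, inner_smul_right, ← hc, hl2]
  have hwu : ⟪w, u⟫ = (‖c‖ : ℂ) := by rw [← inner_conj_symm, huw, Complex.conj_ofReal]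
  have hnw : ‖w‖ = ‖v‖ := by rw [hwdef, norm_smul, hl1, one_mul]
  set a : H := u - w with hadef
  set b : H := u + w with hbdef
  have hna : ‖a‖^2 = ‖u‖^2 - 2*‖c‖ + ‖w‖^2 := by
    rw [hadef, @norm_sub_sq ℂ, huw]; simp
  have hnb : ‖b‖^2 = ‖u‖^2 + 2*‖c‖ + ‖w‖^2 := by
    rw [hbdef, @norm_add_sq ℂ, huw]; simp
  have hc0 : (0:ℝ) ≤ ‖c‖ := norm_nonneg _
  have hab : ‖a‖ ≤ ‖b‖ := by
    have h : ‖a‖^2 ≤ ‖b‖^2 := by rw [hna, hnb]; linarith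
    exact (pow_le_pow_iff_left₀ (norm_nonneg _) (norm_nonneg _) two_ne_zero).mp h
  set t : ℝ := ‖a‖ / ‖b‖ with htdef
  have ht0 : 0 ≤ t := div_nonneg (norm_nonneg _) (norm_nonneg _)
  have ht1 : t ≤ 1 := by
    rcases eq_or_ne b 0 with hb | hb
    · simp [htdef, hb]
    · rw [htdef]; exact div_le_one_of_le₀ hab (norm_nonneg _)
  have ht2 : t^2 * ‖b‖^2 = ‖a‖^2 := by
    rcases eq_or_ne b 0 with hb | hb
    · have ha : ‖a‖ = 0 := le_antisymm (by simpa [hb] using hab) (norm_nonneg _)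
      simp [hb, ha]
    · rw [htdef, div_pow, div_mul_cancel₀ _ (pow_ne_zero 2 (norm_ne_zero_iff.mpr hb))]
  have hco : ∀ r : ℝ, (RCLike.ofReal r : ℂ) = Complex.ofReal r := fun _ => rfl
  have hab2 : ⟪a, b⟫ = ((‖u‖^2 - ‖w‖^2 : ℝ) : ℂ) := by
    rw [hadef, hbdef]
    simp only [inner_sub_left, inner_add_right, huw, hwu,
      inner_self_eq_norm_sq_to_K (𝕜 := ℂ), hco]
    push_cast; ring
  have hba2 : ⟪b, a⟫ = ((‖u‖^2 - ‖w‖^2 : ℝ) : ℂ) := by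
    rw [← inner_conj_symm, hab2, Complex.conj_ofReal]
  have hcast : ((‖a‖:ℂ))^2 = (t:ℂ)^2 * ((‖b‖:ℂ))^2 := by exact_mod_cast ht2.symm
  refine ⟨(2:ℂ)⁻¹ • (a + (t:ℂ) • b), (2:ℂ)⁻¹ • ((t:ℂ) • b - a), ?_, ?_, ?_⟩
  · -- orthogonality
    simp only [inner_smul_left, inner_smul_right, inner_add_left, inner_sub_right,
      hab2, hba2, inner_self_eq_norm_sq_to_K (𝕜 := ℂ), hco, Complex.conj_ofReal,
      map_inv₀, map_ofNat]
    linear_combination (-(4:ℂ)⁻¹) * hcast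
  · -- infimum
    have hdiff : (2:ℂ)⁻¹ • (a + (t:ℂ) • b) - (2:ℂ)⁻¹ • ((t:ℂ) • b - a) = a := by
      module
    rw [hdiff]
    haveI : Nonempty {c : ℂ // ‖c‖ = 1} := ⟨⟨1, by simp⟩⟩
    apply le_antisymm
    · have hle := ciInf_le (f := fun lam : {c : ℂ // ‖c‖ = 1} => ‖u - (lam : ℂ) • v‖)
        ⟨0, by rintro y ⟨i, rfl⟩; exact norm_nonneg _⟩ ⟨lam0, hl1⟩
      calc (⨅ lam : {c : ℂ // ‖c‖ = 1}, ‖u - (lam : ℂ) • v‖) ≤ ‖u - lam0 • v‖ := hle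
        _ = ‖a‖ := by rw [hadef, hwdef]
    · apply le_ciInf
      rintro ⟨lam, hlam⟩
      have h1 : ‖u - lam • v‖^2 = ‖u‖^2 - 2*(lam*c).re + ‖v‖^2 := by
        rw [@norm_sub_sq ℂ, inner_smul_right, ← hc, norm_smul, hlam, one_mul]
        norm_num
      have h2 : (lam*c).re ≤ ‖c‖ := by
        calc (lam*c).re ≤ ‖lam*c‖ := Complex.re_le_norm _
          _ = ‖lam‖*‖c‖ := by rw [norm_mul]
          _ = ‖c‖ := by rw [hlam, one_mul]
      have h3 : ‖a‖^2 ≤ ‖u - lam • v‖^2 := by rw [hna, h1, hnw]; linarith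
      exact (pow_le_pow_iff_left₀ (norm_nonneg _) (norm_nonneg _) two_ne_zero).mp h3
  · -- coordinatewise inequality
    intro j
    set α : ℂ := ⟪a, x j⟫ with hα
    set β : ℂ := ⟪b, x j⟫ with hβ
    have hhalf : ‖((starRingEnd ℂ) (2:ℂ)⁻¹)‖ = 2⁻¹ := by
      rw [RCLike.norm_conj]; norm_num
    have hu0 : ‖⟪(2:ℂ)⁻¹ • (a + (t:ℂ) • b), x j⟫‖ = 2⁻¹ * ‖α + (t:ℂ)*β‖ := by
      rw [inner_smul_left, norm_mul, hhalf, inner_add_left, inner_smul_left,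
        Complex.conj_ofReal]
    have hv0 : ‖⟪(2:ℂ)⁻¹ • ((t:ℂ) • b - a), x j⟫‖ = 2⁻¹ * ‖α - (t:ℂ)*β‖ := by
      rw [inner_smul_left, norm_mul, hhalf, inner_sub_left, inner_smul_left,
        Complex.conj_ofReal, norm_sub_rev]
    have hu2 : u = (2:ℂ)⁻¹ • (a + b) := by rw [hadef, hbdef]; module
    have hw2 : w = (2:ℂ)⁻¹ • (b - a) := by rw [hadef, hbdef]; module
    have hun : ‖⟪u, x j⟫‖ = 2⁻¹ * ‖α + β‖ := by
      rw [hu2, inner_smul_left, norm_mul, hhalf, inner_add_left]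
    have hvn : ‖⟪v, x j⟫‖ = 2⁻¹ * ‖α - β‖ := by
      have hwv : ⟪w, x j⟫ = (starRingEnd ℂ) lam0 * ⟪v, x j⟫ := by
        rw [hwdef, inner_smul_left]
      have : ‖⟪v, x j⟫‖ = ‖⟪w, x j⟫‖ := by
        rw [hwv, norm_mul, RCLike.norm_conj, hl1, one_mul]
      rw [this, hw2, inner_smul_left, norm_mul, hhalf, inner_sub_left, norm_sub_rev]
    rw [hu0, hv0, hun, hvn, ← mul_sub, ← mul_sub, abs_mul, abs_mul]
    have hk := key_ineq α β t ht0 ht1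
    have h2 : |(2:ℝ)⁻¹| = 2⁻¹ := by norm_num
    rw [h2]
    have h2' : (0:ℝ) < 2⁻¹ := by norm_num
    exact mul_le_mul_of_nonneg_left hk (by norm_num)
end

section
/- Let (x_j)_{j∈J} be a frame of a Hilbert space H and let C > 0. Then (x_j)_{j∈J} does C-stable phase retrieval if and only if for all x₀, y₀ ∈ H with ⟨x₀, y₀⟩ = 0 one has (‖x₀‖² + ‖y₀‖²)^{1/2} ≤ C (Σ_{j∈J} ||⟨x₀, x_j⟩| − |⟨y₀, x_j⟩||²)^{1/2}. -/
open scoped ComplexInnerProductSpace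

lemma sq_norm_complex (z : ℂ) : ‖z‖^2 = z.re^2 + z.im^2 := by
  rw [Complex.sq_norm, Complex.normSq_apply]; ring

lemma key_ineq_s3 (ω γ : ℂ) (c : ℝ) (hc0 : 0 ≤ c) (hc1 : c ≤ 1) :
    (‖ω + (c:ℂ)*γ‖ - ‖ω - (c:ℂ)*γ‖)^2 ≤ (‖ω + γ‖ - ‖ω - γ‖)^2 := by
  have e1 : ‖ω + (c:ℂ)*γ‖^2 + ‖ω - (c:ℂ)*γ‖^2 = 2*‖ω‖^2 + 2*c^2*‖γ‖^2 := by
    simp only [sq_norm_complex, Complex.add_re, Complex.add_im, Complex.sub_re, Complex.sub_im,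
      Complex.mul_re, Complex.mul_im, Complex.ofReal_re, Complex.ofReal_im]
    ring
  have e1' : ‖ω + γ‖^2 + ‖ω - γ‖^2 = 2*‖ω‖^2 + 2*‖γ‖^2 := by
    simp only [sq_norm_complex, Complex.add_re, Complex.add_im, Complex.sub_re, Complex.sub_im]
    ring
  have e2 : ‖ω + (c:ℂ)*γ‖ * ‖ω - (c:ℂ)*γ‖ = ‖ω^2 - (c:ℂ)^2*γ^2‖ := by
    rw [← norm_mul]; ring_nf
  have e3 : ‖ω + γ‖ * ‖ω - γ‖ = ‖ω^2 - γ^2‖ := by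
    rw [← norm_mul]; ring_nf
  have tri : ‖ω^2 - γ^2‖ ≤ ‖ω^2 - (c:ℂ)^2*γ^2‖ + (1 - c^2)*‖γ‖^2 := by
    have h1 : ω^2 - γ^2 = (ω^2 - (c:ℂ)^2*γ^2) + (((c^2 - 1 : ℝ)):ℂ)*γ^2 := by
      push_cast; ring
    have h2 : ‖(((c^2 - 1 : ℝ)):ℂ)*γ^2‖ = (1 - c^2)*‖γ‖^2 := by
      rw [norm_mul, Complex.norm_real, norm_pow]
      rw [Real.norm_eq_abs, abs_of_nonpos (by nlinarith)]
      ring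
    calc ‖ω^2 - γ^2‖ ≤ ‖ω^2 - (c:ℂ)^2*γ^2‖ + ‖(((c^2 - 1 : ℝ)):ℂ)*γ^2‖ := by
          rw [h1]; exact norm_add_le _ _
      _ = _ := by rw [h2]
  have l1 : (‖ω + (c:ℂ)*γ‖ - ‖ω - (c:ℂ)*γ‖)^2
      = 2*‖ω‖^2 + 2*c^2*‖γ‖^2 - 2*‖ω^2 - (c:ℂ)^2*γ^2‖ := by
    have : (‖ω + (c:ℂ)*γ‖ - ‖ω - (c:ℂ)*γ‖)^2
        = (‖ω + (c:ℂ)*γ‖^2 + ‖ω - (c:ℂ)*γ‖^2) - 2*(‖ω + (c:ℂ)*γ‖ * ‖ω - (c:ℂ)*γ‖) := by ring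
    rw [this, e1, e2]
  have l2 : (‖ω + γ‖ - ‖ω - γ‖)^2 = 2*‖ω‖^2 + 2*‖γ‖^2 - 2*‖ω^2 - γ^2‖ := by
    have : (‖ω + γ‖ - ‖ω - γ‖)^2
        = (‖ω + γ‖^2 + ‖ω - γ‖^2) - 2*(‖ω + γ‖ * ‖ω - γ‖) := by ring
    rw [this, e1', e3]
  rw [l1, l2]; linarith


/-- A family `(x j)` in a Hilbert space `H` does `C`-stable phase retrieval if
`min_{|λ|=1} ‖u - λ v‖ ≤ C (∑ⱼ ||⟨u,xⱼ⟩| - |⟨v,xⱼ⟩||²)^{1/2}` for all `u, v ∈ H`. -/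
def DoesStablePhaseRetrieval {H : Type*} [NormedAddCommGroup H] [InnerProductSpace ℂ H]
    {J : Type*} (x : J → H) (C : ℝ) : Prop :=
  ∀ u v : H,
    (⨅ lam : {c : ℂ // ‖c‖ = 1}, ‖u - (lam : ℂ) • v‖) ≤
      C * Real.sqrt (∑' j, (‖⟪u, x j⟫‖ - ‖⟪v, x j⟫‖) ^ 2)

set_option maxHeartbeats 1000000 in
/-- A frame `(x j)` of a Hilbert space `H` does `C`-stable phase retrieval if and only if
`(‖u₀‖² + ‖v₀‖²)^{1/2} ≤ C (∑ⱼ ||⟨u₀,xⱼ⟩| - |⟨v₀,xⱼ⟩||²)^{1/2}` for all orthogonal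
`u₀, v₀ ∈ H`. -/
theorem stmt_3 {H : Type*} [NormedAddCommGroup H] [InnerProductSpace ℂ H] [CompleteSpace H]
    {J : Type*} (x : J → H) (A B : ℝ) (hA : 0 < A) (hAB : A ≤ B)
    (hx_summable : ∀ u : H, Summable fun j => ‖⟪u, x j⟫‖ ^ 2)
    (hx_frame : ∀ u : H,
      A * ‖u‖ ^ 2 ≤ ∑' j, ‖⟪u, x j⟫‖ ^ 2 ∧ ∑' j, ‖⟪u, x j⟫‖ ^ 2 ≤ B * ‖u‖ ^ 2)
    (C : ℝ) (hC : 0 < C) :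
    DoesStablePhaseRetrieval x C ↔
      ∀ u₀ v₀ : H, ⟪u₀, v₀⟫ = 0 →
        Real.sqrt (‖u₀‖ ^ 2 + ‖v₀‖ ^ 2) ≤
          C * Real.sqrt (∑' j, (‖⟪u₀, x j⟫‖ - ‖⟪v₀, x j⟫‖) ^ 2) := by
  haveI : Nonempty {c : ℂ // ‖c‖ = 1} := ⟨⟨1, norm_one⟩⟩
  constructor
  · intro h u₀ v₀ horth
    refine le_trans ?_ (h u₀ v₀)
    apply le_ciInf
    intro lam
    have h1 : ‖u₀ - (lam : ℂ) • v₀‖^2 = ‖u₀‖^2 + ‖v₀‖^2 := by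
      rw [norm_sub_sq (𝕜 := ℂ), inner_smul_right, horth]
      simp [norm_smul, lam.2]
    exact le_of_eq (by rw [← h1, Real.sqrt_sq (norm_nonneg _)])
  · intro h u v
    have hbdd : BddBelow (Set.range fun lam : {c : ℂ // ‖c‖ = 1} => ‖u - (lam : ℂ) • v‖) := by
      refine ⟨0, ?_⟩
      rintro r ⟨lam, rfl⟩
      exact norm_nonneg _
    by_cases h00 : u = 0 ∧ v = 0
    · obtain ⟨hu, hv⟩ := h00
      have h1 : (⨅ lam : {c : ℂ // ‖c‖ = 1}, ‖u - (lam : ℂ) • v‖) ≤ 0 := by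
        have := ciInf_le hbdd (⟨1, norm_one⟩ : {c : ℂ // ‖c‖ = 1})
        simpa [hu, hv] using this
      refine le_trans h1 ?_
      positivity
    -- main case
    set z : ℂ := ⟪u, v⟫ with hz
    set s : ℝ := ‖z‖ with hs
    have hs0 : 0 ≤ s := norm_nonneg _
    obtain ⟨μ, hμ1, hμ2⟩ : ∃ μ : ℂ, ‖μ‖ = 1 ∧ μ * z = -(s:ℂ) := by
      by_cases hz0 : z = 0
      · exact ⟨1, norm_one, by simp [hz0, hs]⟩
      · have hsne : (s:ℂ) ≠ 0 := by
          simpa [hs] using norm_ne_zero_iff.mpr hz0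
        refine ⟨-(starRingEnd ℂ) z / (s:ℂ), ?_, ?_⟩
        · rw [norm_div, norm_neg, RCLike.norm_conj]
          simp only [hs, Complex.norm_real, Real.norm_eq_abs, abs_of_nonneg hs0]
          rw [abs_of_nonneg (norm_nonneg z)]; exact div_self (norm_ne_zero_iff.mpr hz0)
        · field_simp
          rw [mul_comm]
          rw [Complex.mul_conj]
          rw [Complex.normSq_eq_norm_sq]
          push_cast [← hs]
          ring
    set y : H := μ • v with hy
    have h_uy : ⟪u, y⟫ = -(s:ℂ) := by rw [hy, inner_smul_right, ← hz, hμ2]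
    have h_yu : ⟪y, u⟫ = -(s:ℂ) := by
      rw [← inner_conj_symm, h_uy]; simp
    have hyv : ‖y‖ = ‖v‖ := by rw [hy, norm_smul, hμ1, one_mul]
    set N : ℝ := ‖u‖^2 + ‖v‖^2 with hN
    have hN0 : 0 < N := by
      rw [not_and_or] at h00
      rcases h00 with h0 | h0
      · have : 0 < ‖u‖ := norm_pos_iff.mpr h0
        have := sq_nonneg ‖v‖
        nlinarith
      · have : 0 < ‖v‖ := norm_pos_iff.mpr h0
        have := sq_nonneg ‖u‖
        nlinarith
    have hsN : 2*s ≤ N := by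
      have h1 : s ≤ ‖u‖ * ‖v‖ := by rw [hs, hz]; exact norm_inner_le_norm u v
      nlinarith [sq_nonneg (‖u‖ - ‖v‖)]
    have hden : 0 < N + 2*s := by linarith
    set c : ℝ := Real.sqrt ((N - 2*s)/(N + 2*s)) with hc
    have hc0 : 0 ≤ c := Real.sqrt_nonneg _
    have hc2 : c^2 = (N - 2*s)/(N + 2*s) :=
      Real.sq_sqrt (div_nonneg (by linarith) hden.le)
    have hc1 : c ≤ 1 := by
      rw [hc]
      refine Real.sqrt_le_one.mpr ?_
      rw [div_le_one hden]
      linarith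
    have hc2' : c^2 * (N + 2*s) = N - 2*s := by
      rw [hc2]; field_simp
    set p : ℝ := (1 + c)/2 with hp
    set q : ℝ := (1 - c)/2 with hq
    set x₀ : H := ((p:ℂ)) • u + ((q:ℂ)) • y with hx₀
    set y₀ : H := ((q:ℂ)) • u + ((p:ℂ)) • y with hy₀
    have horth : ⟪x₀, y₀⟫ = 0 := by
      have hreal : p*q*‖u‖^2 + p*q*‖v‖^2 - p^2*s - q^2*s = 0 := by
        rw [hp, hq]
        have hNodef : ‖u‖^2 + ‖v‖^2 = N := hN.symm
        nlinarith [hc2']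
      have hrealC : (p:ℂ)*(q:ℂ)*((‖u‖:ℂ))^2 + (p:ℂ)*(q:ℂ)*((‖v‖:ℂ))^2
          - (p:ℂ)^2*(s:ℂ) - (q:ℂ)^2*(s:ℂ) = 0 := by
        have := congrArg (fun t : ℝ => (t : ℂ)) hreal
        push_cast at this
        convert this using 1
      have hu_self : (⟪u, u⟫ : ℂ) = ((‖u‖^2 : ℝ) : ℂ) := by
        rw [inner_self_eq_norm_sq_to_K]; norm_cast
      have hy_self : (⟪y, y⟫ : ℂ) = ((‖v‖^2 : ℝ) : ℂ) := by
        rw [inner_self_eq_norm_sq_to_K, hyv]; norm_cast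
      rw [hx₀, hy₀]
      simp only [inner_add_left, inner_add_right, inner_smul_left, inner_smul_right,
        Complex.conj_ofReal, hu_self, hy_self, h_uy, h_yu]
      linear_combination (norm := (push_cast; ring1)) hrealC
    have hsum : x₀ + y₀ = u + y := by
      have hpq : (p:ℂ) + (q:ℂ) = 1 := by
        push_cast [hp, hq]; ring
      rw [hx₀, hy₀]
      have : ((p:ℂ)) • u + ((q:ℂ)) • y + (((q:ℂ)) • u + ((p:ℂ)) • y)
          = ((p:ℂ) + (q:ℂ)) • u + ((p:ℂ) + (q:ℂ)) • y := by module
      rw [this, hpq, one_smul, one_smul]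
    have hpyth : ‖x₀ + y₀‖^2 = ‖x₀‖^2 + ‖y₀‖^2 := by
      rw [norm_add_sq (𝕜 := ℂ), horth]
      simp
    -- pointwise inequality
    have hpt : ∀ j, (‖⟪x₀, x j⟫‖ - ‖⟪y₀, x j⟫‖)^2 ≤ (‖⟪u, x j⟫‖ - ‖⟪v, x j⟫‖)^2 := by
      intro j
      set α : ℂ := ⟪u, x j⟫ with hα
      set β : ℂ := ⟪y, x j⟫ with hβ
      have hβv : ‖β‖ = ‖⟪v, x j⟫‖ := by
        rw [hβ, hy, inner_smul_left, norm_mul, RCLike.norm_conj, hμ1, one_mul]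
      have hx₀j : ⟪x₀, x j⟫ = (α + β)/2 + (c:ℂ) * ((α - β)/2) := by
        rw [hx₀]
        simp only [inner_add_left, inner_smul_left, Complex.conj_ofReal, ← hα, ← hβ]
        push_cast [hp, hq]; ring
      have hy₀j : ⟪y₀, x j⟫ = (α + β)/2 - (c:ℂ) * ((α - β)/2) := by
        rw [hy₀]
        simp only [inner_add_left, inner_smul_left, Complex.conj_ofReal, ← hα, ← hβ]
        push_cast [hp, hq]; ring
      have hαω : α = (α + β)/2 + (α - β)/2 := by ring
      have hβω : β = (α + β)/2 - (α - β)/2 := by ring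
      calc (‖⟪x₀, x j⟫‖ - ‖⟪y₀, x j⟫‖)^2
          = (‖(α + β)/2 + (c:ℂ) * ((α - β)/2)‖ - ‖(α + β)/2 - (c:ℂ) * ((α - β)/2)‖)^2 := by
            rw [hx₀j, hy₀j]
        _ ≤ (‖(α + β)/2 + (α - β)/2‖ - ‖(α + β)/2 - (α - β)/2‖)^2 :=
            key_ineq_s3 _ _ c hc0 hc1
        _ = (‖α‖ - ‖β‖)^2 := by rw [← hαω, ← hβω]
        _ = (‖⟪u, x j⟫‖ - ‖⟪v, x j⟫‖)^2 := by rw [hα, hβv]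
    -- summability
    have hsumm_big : Summable (fun j => (‖⟪u, x j⟫‖ - ‖⟪v, x j⟫‖)^2) := by
      refine Summable.of_nonneg_of_le (fun j => sq_nonneg _) (fun j => ?_)
        (((hx_summable u).add (hx_summable v)).mul_left 2)
      have := norm_nonneg (⟪u, x j⟫ : ℂ)
      have := norm_nonneg (⟪v, x j⟫ : ℂ)
      nlinarith [sq_nonneg (‖(⟪u, x j⟫ : ℂ)‖ + ‖(⟪v, x j⟫ : ℂ)‖)]
    have hsumm_small : Summable (fun j => (‖⟪x₀, x j⟫‖ - ‖⟪y₀, x j⟫‖)^2) :=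
      Summable.of_nonneg_of_le (fun j => sq_nonneg _) hpt hsumm_big
    have htsum : (∑' j, (‖⟪x₀, x j⟫‖ - ‖⟪y₀, x j⟫‖)^2)
        ≤ ∑' j, (‖⟪u, x j⟫‖ - ‖⟪v, x j⟫‖)^2 :=
      Summable.tsum_le_tsum hpt hsumm_small hsumm_big
    -- chain
    have hμneg : ‖-μ‖ = 1 := by rw [norm_neg, hμ1]
    have step1 : (⨅ lam : {c : ℂ // ‖c‖ = 1}, ‖u - (lam : ℂ) • v‖) ≤ ‖u + y‖ := by
      have := ciInf_le hbdd (⟨-μ, hμneg⟩ : {c : ℂ // ‖c‖ = 1})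
      simpa [hy, neg_smul, sub_neg_eq_add] using this
    have step2 : ‖u + y‖ = Real.sqrt (‖x₀‖^2 + ‖y₀‖^2) := by
      rw [← hsum, ← hpyth, Real.sqrt_sq (norm_nonneg _)]
    calc (⨅ lam : {c : ℂ // ‖c‖ = 1}, ‖u - (lam : ℂ) • v‖)
        ≤ ‖u + y‖ := step1
      _ = Real.sqrt (‖x₀‖^2 + ‖y₀‖^2) := step2
      _ ≤ C * Real.sqrt (∑' j, (‖⟪x₀, x j⟫‖ - ‖⟪y₀, x j⟫‖)^2) := h x₀ y₀ horth
      _ ≤ C * Real.sqrt (∑' j, (‖⟪u, x j⟫‖ - ‖⟪v, x j⟫‖)^2) := by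
          exact mul_le_mul_of_nonneg_left (Real.sqrt_le_sqrt htsum) hC.le
end

section
/- Let (x_j)_{j∈J} be a frame of a Hilbert space H with upper frame bound B, let ε > 0, and let (y_j)_{j∈J} be a family of vectors in H with Σ_{j∈J} ‖x_j − y_j‖² < ε. Then for every x ∈ H one has Σ_{j∈J} |⟨x, y_j⟩|² ≥ Σ_{j∈J} |⟨x, x_j⟩|² − 2 B^{1/2} ε^{1/2} ‖x‖². -/
open scoped ComplexInnerProductSpace

/-!
Put `a j = |⟨u, x j⟩|`, `b j = |⟨u, y j⟩|` and `c j = ‖u‖ ‖x j - y j‖`, so that `|a j - b j| ≤ c j`.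
Since `a ≤ b + c` with `a, c ≥ 0` forces `a² - b² ≤ 2ac`, summing and applying Cauchy–Schwarz in
`ℓ²(J)` bounds the loss `‖a‖₂² - ‖b‖₂²` by `2 ‖a‖₂ ‖c‖₂`, where `‖a‖₂ ≤ √B ‖u‖` by the upper frame
bound and `‖c‖₂ ≤ √ε ‖u‖`.
-/

lemma sq_sub_sq_le_two_mul_mul {a b c : ℝ} (ha : 0 ≤ a) (hc : 0 ≤ c) (h : a ≤ b + c) :
    a ^ 2 - b ^ 2 ≤ 2 * (a * c) := by
  rcases le_or_gt c a with hca | hac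
  · have hb : a - c ≤ b := by linarith
    nlinarith
  · nlinarith [sq_nonneg b]

lemma Real.sqrt_le_sqrt_mul_of_le_mul_sq {s K r : ℝ} (hr : 0 ≤ r) (h : s ≤ K * r ^ 2) :
    √s ≤ √K * r := by
  rw [← Real.sqrt_sq hr, ← Real.sqrt_mul' _ (sq_nonneg r)]
  exact Real.sqrt_le_sqrt h

lemma norm_inner_sub_norm_inner_le {𝕜 E : Type*} [RCLike 𝕜] [SeminormedAddCommGroup E]
    [InnerProductSpace 𝕜 E] (u x y : E) :
    |‖inner 𝕜 u x‖ - ‖inner 𝕜 u y‖| ≤ ‖u‖ * ‖x - y‖ := by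
  calc |‖inner 𝕜 u x‖ - ‖inner 𝕜 u y‖| ≤ ‖inner 𝕜 u x - inner 𝕜 u y‖ := abs_norm_sub_norm_le _ _
    _ = ‖inner 𝕜 u (x - y)‖ := by rw [inner_sub_right]
    _ ≤ ‖u‖ * ‖x - y‖ := norm_inner_le_norm _ _

section SquareSummable

variable {ι : Type*} {a b c : ι → ℝ}

lemma summable_sq_of_le_add (hb : ∀ i, 0 ≤ b i) (h : ∀ i, b i ≤ a i + c i)
    (ha : Summable fun i => a i ^ 2) (hc : Summable fun i => c i ^ 2) :
    Summable fun i => b i ^ 2 := by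
  refine .of_nonneg_of_le (fun i => sq_nonneg _) (fun i => ?_) ((ha.add hc).mul_left 2)
  have : b i ^ 2 ≤ (a i + c i) ^ 2 := pow_le_pow_left₀ (hb i) (h i) 2
  nlinarith [sq_nonneg (a i - c i)]

lemma summable_mul_and_tsum_mul_le_sqrt_mul_sqrt (ha : ∀ i, 0 ≤ a i) (hc : ∀ i, 0 ≤ c i)
    (ha2 : Summable fun i => a i ^ 2) (hc2 : Summable fun i => c i ^ 2) :
    (Summable fun i => a i * c i) ∧
      ∑' i, a i * c i ≤ √(∑' i, a i ^ 2) * √(∑' i, c i ^ 2) := by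
  simp_rw [← Real.rpow_two] at ha2 hc2
  simpa only [Real.rpow_two, Real.sqrt_eq_rpow] using
    Real.summable_and_inner_le_Lp_mul_Lq_tsum_of_nonneg .two_two ha hc ha2 hc2

theorem tsum_sq_sub_tsum_sq_le (ha : ∀ i, 0 ≤ a i) (hb : ∀ i, 0 ≤ b i)
    (h : ∀ i, |a i - b i| ≤ c i) (ha2 : Summable fun i => a i ^ 2)
    (hc2 : Summable fun i => c i ^ 2) :
    ∑' i, a i ^ 2 - ∑' i, b i ^ 2 ≤ 2 * √(∑' i, a i ^ 2) * √(∑' i, c i ^ 2) := by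
  have hc : ∀ i, 0 ≤ c i := fun i => (abs_nonneg _).trans (h i)
  have hab : ∀ i, a i ≤ b i + c i := fun i => by linarith [le_abs_self (a i - b i), h i]
  have hba : ∀ i, b i ≤ a i + c i := fun i => by linarith [neg_abs_le (a i - b i), h i]
  have hb2 := summable_sq_of_le_add hb hba ha2 hc2
  obtain ⟨hac, hCS⟩ := summable_mul_and_tsum_mul_le_sqrt_mul_sqrt ha hc ha2 hc2
  calc ∑' i, a i ^ 2 - ∑' i, b i ^ 2 = ∑' i, (a i ^ 2 - b i ^ 2) := (ha2.tsum_sub hb2).symm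
    _ ≤ ∑' i, 2 * (a i * c i) :=
      (ha2.sub hb2).tsum_le_tsum (fun i => sq_sub_sq_le_two_mul_mul (ha i) (hc i) (hab i))
        (hac.mul_left 2)
    _ = 2 * ∑' i, a i * c i := tsum_mul_left
    _ ≤ 2 * √(∑' i, a i ^ 2) * √(∑' i, c i ^ 2) := by linarith

end SquareSummable

theorem stmt_5_general {H : Type*} [NormedAddCommGroup H] [InnerProductSpace ℂ H]
    {J : Type*} (x y : J → H) (B ε : ℝ)
    (hx_summable : ∀ u : H, Summable fun j => ‖⟪u, x j⟫‖ ^ 2)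
    (hx_upper : ∀ u : H, ∑' j, ‖⟪u, x j⟫‖ ^ 2 ≤ B * ‖u‖ ^ 2)
    (hpert_summable : Summable fun j => ‖x j - y j‖ ^ 2)
    (hpert : ∑' j, ‖x j - y j‖ ^ 2 < ε) :
    ∀ u : H,
      (∑' j, ‖⟪u, x j⟫‖ ^ 2) - 2 * Real.sqrt B * Real.sqrt ε * ‖u‖ ^ 2 ≤
        ∑' j, ‖⟪u, y j⟫‖ ^ 2 := by
  intro u
  have hc2 : Summable fun j => (‖u‖ * ‖x j - y j‖) ^ 2 := by
    simpa only [mul_pow] using hpert_summable.mul_left (‖u‖ ^ 2)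
  have hloss := tsum_sq_sub_tsum_sq_le (fun _ => norm_nonneg _) (fun _ => norm_nonneg _)
    (fun j => norm_inner_sub_norm_inner_le u (x j) (y j)) (hx_summable u) hc2
  have hframe := Real.sqrt_le_sqrt_mul_of_le_mul_sq (norm_nonneg u) (hx_upper u)
  have hpert_u : ∑' j, (‖u‖ * ‖x j - y j‖) ^ 2 ≤ ε * ‖u‖ ^ 2 := by
    simp_rw [mul_pow, tsum_mul_left, mul_comm ε]
    exact mul_le_mul_of_nonneg_left hpert.le (sq_nonneg _)
  have hsmall := Real.sqrt_le_sqrt_mul_of_le_mul_sq (norm_nonneg u) hpert_u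
  have hprod := mul_le_mul hframe hsmall (Real.sqrt_nonneg _)
    (mul_nonneg (Real.sqrt_nonneg _) (norm_nonneg u))
  linarith

/-- If `(x j)` is a frame of a Hilbert space `H` with upper frame bound `B`, `ε > 0`, and
`(y j)` satisfies `∑ ‖x j - y j‖² < ε`, then for every `u ∈ H`,
`∑ⱼ |⟨u,yⱼ⟩|² ≥ ∑ⱼ |⟨u,xⱼ⟩|² - 2 B^{1/2} ε^{1/2} ‖u‖²`. -/
theorem stmt_5 {H : Type*} [NormedAddCommGroup H] [InnerProductSpace ℂ H] [CompleteSpace H]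
    {J : Type*} (x y : J → H) (B ε : ℝ) (hB : 0 < B)
    (hx_summable : ∀ u : H, Summable fun j => ‖⟪u, x j⟫‖ ^ 2)
    (hx_upper : ∀ u : H, ∑' j, ‖⟪u, x j⟫‖ ^ 2 ≤ B * ‖u‖ ^ 2)
    (hε : 0 < ε)
    (hpert_summable : Summable fun j => ‖x j - y j‖ ^ 2)
    (hpert : ∑' j, ‖x j - y j‖ ^ 2 < ε) :
    ∀ u : H,
      (∑' j, ‖⟪u, x j⟫‖ ^ 2) - 2 * Real.sqrt B * Real.sqrt ε * ‖u‖ ^ 2 ≤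
        ∑' j, ‖⟪u, y j⟫‖ ^ 2 :=
  stmt_5_general x y B ε hx_summable hx_upper hpert_summable hpert
end

section
/- Let (x_j)_{j∈J} be a frame of a Hilbert space H with upper frame bound B, let 0 < ε < B, and let (y_j)_{j∈J} be a family of vectors in H with Σ_{j∈J} ‖x_j − y_j‖² < ε. Then for all x, y ∈ H one has Σ_{j∈J} ||⟨x, y_j⟩| − |⟨y, y_j⟩||² ≥ Σ_{j∈J} ||⟨x, x_j⟩| − |⟨y, x_j⟩||² − 2 ε^{1/2} B^{1/2} (‖x‖ + ‖y‖)². -/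
/-!
Write `c j = |⟨u, x j⟩| - |⟨v, x j⟩|` and `d j = |⟨u, y j⟩| - |⟨v, y j⟩|`. Both are vectors of
`ℓ²(J)`: the upper frame bound gives `‖c‖ ≤ √B (‖u‖ + ‖v‖)`, and Cauchy–Schwarz applied to
`⟨w, x j - y j⟩` gives `‖c - d‖ ≤ √ε (‖u‖ + ‖v‖)`. The claim is then the elementary inequality
`‖c‖² - ‖d‖² ≤ 2 ‖c‖ ‖c - d‖`, valid in any normed group.
-/

open scoped ComplexInnerProductSpace

theorem sq_norm_sub_sq_norm_le {E : Type*} [SeminormedAddCommGroup E] (a b : E) :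
    ‖a‖ ^ 2 - ‖b‖ ^ 2 ≤ 2 * ‖a‖ * ‖a - b‖ := by
  rcases le_total ‖a‖ ‖b‖ with hab | hab
  · nlinarith [norm_nonneg a, norm_nonneg (a - b)]
  · calc ‖a‖ ^ 2 - ‖b‖ ^ 2 = (‖a‖ - ‖b‖) * (‖a‖ + ‖b‖) := by ring
      _ ≤ ‖a - b‖ * (‖a‖ + ‖b‖) := by gcongr; exact norm_sub_norm_le a b
      _ ≤ ‖a - b‖ * (2 * ‖a‖) := by gcongr; linarith
      _ = 2 * ‖a‖ * ‖a - b‖ := by ring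

theorem sub_sq_le_sq_add_sq {R : Type*} [CommRing R] [LinearOrder R] [IsStrictOrderedRing R]
    {a b : R} (ha : 0 ≤ a) (hb : 0 ≤ b) : (a - b) ^ 2 ≤ a ^ 2 + b ^ 2 := by
  nlinarith [mul_nonneg ha hb]

section L2

variable {J : Type*}

theorem memℓp_two_of_summable_sq {f : J → ℝ} (hf : Summable fun j => f j ^ 2) : Memℓp f 2 :=
  memℓp_gen (by simpa using hf)

theorem lp.norm_sq_eq_tsum {E : J → Type*} [∀ j, NormedAddCommGroup (E j)] (f : lp E 2) :
    ‖f‖ ^ 2 = ∑' j, ‖f j‖ ^ 2 := by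
  have h := lp.norm_rpow_eq_tsum (p := 2) (by norm_num) f
  norm_cast at h

theorem tsum_sq_sub_tsum_sq_le_s7 {c d : J → ℝ} (hc : Summable fun j => c j ^ 2)
    (hcd : Summable fun j => (c j - d j) ^ 2) :
    ∑' j, c j ^ 2 - ∑' j, d j ^ 2 ≤ 2 * √(∑' j, c j ^ 2) * √(∑' j, (c j - d j) ^ 2) := by
  let F : lp (fun _ : J => ℝ) 2 := ⟨c, memℓp_two_of_summable_sq hc⟩
  let G : lp (fun _ : J => ℝ) 2 := ⟨c - d, memℓp_two_of_summable_sq hcd⟩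
  have hF : ∑' j, c j ^ 2 = ‖F‖ ^ 2 := by simp [lp.norm_sq_eq_tsum, F]
  have hG : ∑' j, (c j - d j) ^ 2 = ‖G‖ ^ 2 := by simp [lp.norm_sq_eq_tsum, G]
  have hFG : ∑' j, d j ^ 2 = ‖F - G‖ ^ 2 := by
    rw [lp.norm_sq_eq_tsum]
    refine tsum_congr fun j => ?_
    rw [lp.coeFn_sub, Pi.sub_apply, Real.norm_eq_abs, sq_abs]
    show d j ^ 2 = (c j - (c j - d j)) ^ 2
    ring
  rw [hF, hG, hFG, Real.sqrt_sq (norm_nonneg _), Real.sqrt_sq (norm_nonneg _)]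
  simpa using sq_norm_sub_sq_norm_le F (F - G)

end L2

section Frame

variable {𝕜 E J : Type*} [RCLike 𝕜] [NormedAddCommGroup E] [InnerProductSpace 𝕜 E]

theorem abs_norm_inner_sub_norm_inner_le (w p q : E) :
    |‖inner 𝕜 w p‖ - ‖inner 𝕜 w q‖| ≤ ‖w‖ * ‖p - q‖ :=
  calc |‖inner 𝕜 w p‖ - ‖inner 𝕜 w q‖| ≤ ‖inner 𝕜 w p - inner 𝕜 w q‖ := abs_norm_sub_norm_le _ _
    _ = ‖inner 𝕜 w (p - q)‖ := by rw [inner_sub_right]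
    _ ≤ ‖w‖ * ‖p - q‖ := norm_inner_le_norm _ _

theorem sq_sub_norm_inner_sub_le (u v p q : E) :
    ((‖inner 𝕜 u p‖ - ‖inner 𝕜 v p‖) - (‖inner 𝕜 u q‖ - ‖inner 𝕜 v q‖)) ^ 2 ≤
      (‖u‖ + ‖v‖) ^ 2 * ‖p - q‖ ^ 2 := by
  have hu := abs_norm_inner_sub_norm_inner_le (𝕜 := 𝕜) u p q
  have hv := abs_norm_inner_sub_norm_inner_le (𝕜 := 𝕜) v p q
  have habs : |(‖inner 𝕜 u p‖ - ‖inner 𝕜 v p‖) - (‖inner 𝕜 u q‖ - ‖inner 𝕜 v q‖)| ≤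
      (‖u‖ + ‖v‖) * ‖p - q‖ :=
    calc _ = |(‖inner 𝕜 u p‖ - ‖inner 𝕜 u q‖) - (‖inner 𝕜 v p‖ - ‖inner 𝕜 v q‖)| := by ring_nf
      _ ≤ |‖inner 𝕜 u p‖ - ‖inner 𝕜 u q‖| + |‖inner 𝕜 v p‖ - ‖inner 𝕜 v q‖| := abs_sub _ _
      _ ≤ (‖u‖ + ‖v‖) * ‖p - q‖ := by linarith
  rw [← mul_pow]
  exact sq_le_sq' (neg_le_of_abs_le habs) (le_of_abs_le habs)

variable {x y : J → E}

theorem summable_sq_sub_norm_inner (hx : ∀ w, Summable fun j => ‖inner 𝕜 w (x j)‖ ^ 2)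
    (u v : E) : Summable fun j => (‖inner 𝕜 u (x j)‖ - ‖inner 𝕜 v (x j)‖) ^ 2 :=
  .of_nonneg_of_le (fun _ => sq_nonneg _)
    (fun _ => sub_sq_le_sq_add_sq (norm_nonneg _) (norm_nonneg _)) ((hx u).add (hx v))

theorem tsum_sq_sub_norm_inner_le {B : ℝ} (hB : 0 ≤ B)
    (hx : ∀ w, Summable fun j => ‖inner 𝕜 w (x j)‖ ^ 2)
    (hxB : ∀ w, ∑' j, ‖inner 𝕜 w (x j)‖ ^ 2 ≤ B * ‖w‖ ^ 2) (u v : E) :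
    ∑' j, (‖inner 𝕜 u (x j)‖ - ‖inner 𝕜 v (x j)‖) ^ 2 ≤ B * (‖u‖ + ‖v‖) ^ 2 :=
  calc ∑' j, (‖inner 𝕜 u (x j)‖ - ‖inner 𝕜 v (x j)‖) ^ 2
      ≤ ∑' j, (‖inner 𝕜 u (x j)‖ ^ 2 + ‖inner 𝕜 v (x j)‖ ^ 2) :=
        (summable_sq_sub_norm_inner hx u v).tsum_le_tsum
          (fun _ => sub_sq_le_sq_add_sq (norm_nonneg _) (norm_nonneg _)) ((hx u).add (hx v))
    _ ≤ B * ‖u‖ ^ 2 + B * ‖v‖ ^ 2 := by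
        rw [(hx u).tsum_add (hx v)]; exact add_le_add (hxB u) (hxB v)
    _ ≤ B * (‖u‖ + ‖v‖) ^ 2 := by
        nlinarith [mul_nonneg hB (mul_nonneg (norm_nonneg u) (norm_nonneg v))]

theorem summable_sq_sub_of_summable_sq_norm_sub (hxy : Summable fun j => ‖x j - y j‖ ^ 2)
    (u v : E) :
    Summable fun j => ((‖inner 𝕜 u (x j)‖ - ‖inner 𝕜 v (x j)‖) -
      (‖inner 𝕜 u (y j)‖ - ‖inner 𝕜 v (y j)‖)) ^ 2 :=
  .of_nonneg_of_le (fun _ => sq_nonneg _) (fun _ => sq_sub_norm_inner_sub_le u v _ _)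
    (hxy.mul_left _)

theorem tsum_sq_sub_le_of_summable_sq_norm_sub (hxy : Summable fun j => ‖x j - y j‖ ^ 2)
    (u v : E) :
    ∑' j, ((‖inner 𝕜 u (x j)‖ - ‖inner 𝕜 v (x j)‖) -
      (‖inner 𝕜 u (y j)‖ - ‖inner 𝕜 v (y j)‖)) ^ 2 ≤
        (‖u‖ + ‖v‖) ^ 2 * ∑' j, ‖x j - y j‖ ^ 2 := by
  rw [← tsum_mul_left]
  exact (summable_sq_sub_of_summable_sq_norm_sub hxy u v).tsum_le_tsum
    (fun _ => sq_sub_norm_inner_sub_le u v _ _) (hxy.mul_left _)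

end Frame

theorem stmt_7_general {H : Type*} [NormedAddCommGroup H] [InnerProductSpace ℂ H]
    {J : Type*} (x y : J → H) (B ε : ℝ) (hB : 0 < B)
    (hx_summable : ∀ u : H, Summable fun j => ‖⟪u, x j⟫‖ ^ 2)
    (hx_upper : ∀ u : H, ∑' j, ‖⟪u, x j⟫‖ ^ 2 ≤ B * ‖u‖ ^ 2)
    (hpert_summable : Summable fun j => ‖x j - y j‖ ^ 2)
    (hpert : ∑' j, ‖x j - y j‖ ^ 2 < ε) :
    ∀ u v : H,
      (∑' j, (‖⟪u, x j⟫‖ - ‖⟪v, x j⟫‖) ^ 2) -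
          2 * Real.sqrt ε * Real.sqrt B * (‖u‖ + ‖v‖) ^ 2 ≤
        ∑' j, (‖⟪u, y j⟫‖ - ‖⟪v, y j⟫‖) ^ 2 := by
  intro u v
  set s := ‖u‖ + ‖v‖
  have hs : 0 ≤ s := by positivity
  have hcB : √(∑' j, (‖⟪u, x j⟫‖ - ‖⟪v, x j⟫‖) ^ 2) ≤ √B * s := by
    rw [← Real.sqrt_sq hs, ← Real.sqrt_mul hB.le]
    exact Real.sqrt_le_sqrt (tsum_sq_sub_norm_inner_le hB.le hx_summable hx_upper u v)
  have hcdε : √(∑' j, ((‖⟪u, x j⟫‖ - ‖⟪v, x j⟫‖) - (‖⟪u, y j⟫‖ - ‖⟪v, y j⟫‖)) ^ 2) ≤ √ε * s := by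
    rw [← Real.sqrt_sq hs, ← Real.sqrt_mul' _ (sq_nonneg s), mul_comm ε]
    refine Real.sqrt_le_sqrt ((tsum_sq_sub_le_of_summable_sq_norm_sub hpert_summable u v).trans ?_)
    exact mul_le_mul_of_nonneg_left hpert.le (sq_nonneg s)
  have hsq := tsum_sq_sub_tsum_sq_le_s7 (summable_sq_sub_norm_inner hx_summable u v)
    (summable_sq_sub_of_summable_sq_norm_sub hpert_summable u v)
  have hprod := mul_le_mul hcB hcdε (Real.sqrt_nonneg _) (by positivity)
  linarith

/-- If `(x j)` is a frame of a Hilbert space `H` with upper frame bound `B`, `0 < ε < B`, and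
`(y j)` satisfies `∑ ‖x j - y j‖² < ε`, then for all `u, v ∈ H`,
`∑ⱼ ||⟨u,yⱼ⟩| - |⟨v,yⱼ⟩||² ≥ ∑ⱼ ||⟨u,xⱼ⟩| - |⟨v,xⱼ⟩||² - 2 ε^{1/2} B^{1/2} (‖u‖ + ‖v‖)²`. -/
theorem stmt_7 {H : Type*} [NormedAddCommGroup H] [InnerProductSpace ℂ H] [CompleteSpace H]
    {J : Type*} (x y : J → H) (B ε : ℝ) (hB : 0 < B)
    (hx_summable : ∀ u : H, Summable fun j => ‖⟪u, x j⟫‖ ^ 2)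
    (hx_upper : ∀ u : H, ∑' j, ‖⟪u, x j⟫‖ ^ 2 ≤ B * ‖u‖ ^ 2)
    (hε : 0 < ε) (hεB : ε < B)
    (hpert_summable : Summable fun j => ‖x j - y j‖ ^ 2)
    (hpert : ∑' j, ‖x j - y j‖ ^ 2 < ε) :
    ∀ u v : H,
      (∑' j, (‖⟪u, x j⟫‖ - ‖⟪v, x j⟫‖) ^ 2) -
          2 * Real.sqrt ε * Real.sqrt B * (‖u‖ + ‖v‖) ^ 2 ≤
        ∑' j, (‖⟪u, y j⟫‖ - ‖⟪v, y j⟫‖) ^ 2 :=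
  stmt_7_general x y B ε hB hx_summable hx_upper hpert_summable hpert
end

section
/- Let (x_j)_{j=1}^m be a frame of ℂⁿ. Then (x_j)_{j=1}^m does phase retrieval if and only if there is a constant a₀ > 0 so that for all x, y ∈ ℂⁿ one has Σ_{j=1}^m ||⟨x, x_j⟩|² − |⟨y, x_j⟩|²|² ≥ a₀ (‖x − y‖² ‖x + y‖² − 4 (Im⟨x, y⟩)²). -/
open scoped ComplexInnerProductSpace


noncomputable section BalanAux
variable {n : ℕ}
local notation "E" => EuclideanSpace ℂ (Fin n)

def TOp (u v : E) : E →ₗ[ℂ] E where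
  toFun w := ⟪u, w⟫ • u - ⟪v, w⟫ • v
  map_add' w z := by simp [inner_add_right]; module
  map_smul' c w := by simp [inner_smul_right]; module

lemma TOp_apply (u v w : E) : TOp u v w = ⟪u, w⟫ • u - ⟪v, w⟫ • v := rfl

lemma TOp_symm (u v : E) : (TOp u v).IsSymmetric := by
  intro w z
  rw [TOp_apply, TOp_apply]
  simp only [inner_sub_left, inner_sub_right, inner_smul_left, inner_smul_right,
    inner_conj_symm]
  ring

lemma TOp_quad (u v w : E) : ⟪w, TOp u v w⟫ = ((‖⟪u, w⟫‖^2 - ‖⟪v, w⟫‖^2 : ℝ) : ℂ) := by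
  rw [TOp_apply]
  simp only [inner_sub_right, inner_smul_right]
  rw [← inner_conj_symm u w, ← inner_conj_symm v w, Complex.conj_mul', Complex.conj_mul']
  simp only [RCLike.norm_conj]
  push_cast
  ring

lemma TOp_neg (u v w : E) : TOp v u w = - TOp u v w := by
  rw [TOp_apply, TOp_apply, neg_sub]

-- no two positive eigenvalues
lemma auxA (u v e f : E) (α β : ℝ) (hef : ⟪e, f⟫ = 0) (he : ‖e‖ = 1) (hf : ‖f‖ = 1)
    (hα : 0 < α) (hβ : 0 < β)
    (hTe : TOp u v e = (α : ℂ) • e) (hTf : TOp u v f = (β : ℂ) • f) : False := by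
  have hfe : ⟪f, e⟫ = 0 := by rw [← inner_conj_symm, hef]; simp
  have hαe : α = ‖⟪u, e⟫‖^2 - ‖⟪v, e⟫‖^2 := by
    have h1 := TOp_quad u v e
    rw [hTe, inner_smul_right, inner_self_eq_norm_sq_to_K, he] at h1
    have : (α : ℂ) = ((‖⟪u, e⟫‖^2 - ‖⟪v, e⟫‖^2 : ℝ) : ℂ) := by
      rw [← h1]; push_cast; ring
    exact_mod_cast this
  have hue : ⟪u, e⟫ ≠ 0 := by
    intro h
    rw [h, norm_zero] at hαe
    nlinarith [sq_nonneg ‖⟪v, e⟫‖]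
  set y : E := ⟪u, f⟫ • e - ⟪u, e⟫ • f with hy
  have huy : ⟪u, y⟫ = 0 := by
    simp only [hy, inner_sub_right, inner_smul_right]; ring
  have h2 : ⟪y, TOp u v y⟫ = ((0 - ‖⟪v, y⟫‖^2 : ℝ) : ℂ) := by
    rw [TOp_quad, huy, norm_zero]
    norm_num
  have h3 : TOp u v y = ⟪u, f⟫ • (α : ℂ) • e - ⟪u, e⟫ • (β : ℂ) • f := by
    rw [hy, map_sub, map_smul, map_smul, hTe, hTf]
  have h4 : ⟪y, TOp u v y⟫ = ((α * ‖⟪u, f⟫‖^2 + β * ‖⟪u, e⟫‖^2 : ℝ) : ℂ) := by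
    rw [h3, hy]
    simp only [inner_sub_left, inner_sub_right, inner_smul_left, inner_smul_right,
      hef, hfe, inner_self_eq_norm_sq_to_K, he, hf]
    push_cast
    linear_combination (α:ℂ) * Complex.mul_conj' ⟪u, f⟫ + (β:ℂ) * Complex.mul_conj' ⟪u, e⟫
  have h5 : (0 - ‖⟪v, y⟫‖^2 : ℝ) = α * ‖⟪u, f⟫‖^2 + β * ‖⟪u, e⟫‖^2 := by
    have := h2.symm.trans h4
    exact_mod_cast this
  have : 0 < ‖⟪u, e⟫‖ := norm_pos_iff.mpr hue
  nlinarith [sq_nonneg ‖⟪v, y⟫‖, sq_nonneg ‖⟪u, f⟫‖]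

lemma inner_self_complex (z : EuclideanSpace ℂ (Fin n)) : ⟪z, z⟫ = ((‖z‖^2 : ℝ) : ℂ) := by
  rw [inner_self_eq_norm_sq_to_K]; norm_cast

lemma parseval (b : OrthonormalBasis (Fin n) ℂ (EuclideanSpace ℂ (Fin n))) (z : E) :
    ∑ i, ‖⟪z, b i⟫‖^2 = ‖z‖^2 := by
  have h := b.sum_inner_mul_inner z z
  have h2 : ∀ i ∈ Finset.univ, ⟪z, b i⟫ * ⟪b i, z⟫ = ((‖⟪z, b i⟫‖^2 : ℝ) : ℂ) := by
    intro i _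
    rw [← inner_conj_symm z (b i), Complex.conj_mul', RCLike.norm_conj]
    push_cast
    rw [norm_inner_symm]
  rw [Finset.sum_congr rfl h2, inner_self_eq_norm_sq_to_K, ← Complex.ofReal_sum] at h
  exact Complex.ofReal_inj.mp (by rw [h]; norm_cast)

-- trace identity for eigenvalues
lemma trace_id (u v : E) (b : OrthonormalBasis (Fin n) ℂ (EuclideanSpace ℂ (Fin n)))
    (μ : Fin n → ℝ) (hbe : ∀ i, TOp u v (b i) = (μ i : ℂ) • b i) :
    ∑ i, μ i = ‖u‖^2 - ‖v‖^2 := by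
  have key : ∀ i, μ i = ‖⟪u, b i⟫‖^2 - ‖⟪v, b i⟫‖^2 := by
    intro i
    have h1 := TOp_quad u v (b i)
    rw [hbe i, inner_smul_right, inner_self_eq_norm_sq_to_K, b.orthonormal.1 i] at h1
    have : ((μ i : ℝ) : ℂ) = ((‖⟪u, b i⟫‖^2 - ‖⟪v, b i⟫‖^2 : ℝ) : ℂ) := by
      rw [← h1]; norm_cast; simp
    exact_mod_cast this
  rw [Finset.sum_congr rfl (fun i _ => key i), Finset.sum_sub_distrib,
    parseval b u, parseval b v]

lemma frob_id (u v : E) (b : OrthonormalBasis (Fin n) ℂ (EuclideanSpace ℂ (Fin n)))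
    (μ : Fin n → ℝ) (hbe : ∀ i, TOp u v (b i) = (μ i : ℂ) • b i) :
    ∑ i, (μ i)^2 = ‖u‖^2 * ‖u‖^2 + ‖v‖^2 * ‖v‖^2 - 2 * ‖⟪u, v⟫‖^2 := by
  have perI : ∀ i ∈ Finset.univ, ⟪TOp u v (b i), TOp u v (b i)⟫ =
      ((‖u‖^2 : ℝ) : ℂ) * (⟪u, b i⟫ * ⟪b i, u⟫) + ((‖v‖^2 : ℝ) : ℂ) * (⟪v, b i⟫ * ⟪b i, v⟫)
        - ⟪u, v⟫ * (⟪v, b i⟫ * ⟪b i, u⟫) - ⟪v, u⟫ * (⟪u, b i⟫ * ⟪b i, v⟫) := by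
    intro i _
    rw [TOp_apply]
    simp only [inner_sub_left, inner_sub_right, inner_smul_left, inner_smul_right,
      inner_conj_symm]
    simp only [inner_self_complex]
    push_cast
    ring
  have perI' : ∀ i ∈ Finset.univ, ⟪TOp u v (b i), TOp u v (b i)⟫ = (((μ i)^2 : ℝ) : ℂ) := by
    intro i _
    rw [hbe i, inner_smul_left, inner_smul_right, inner_self_eq_norm_sq_to_K,
      b.orthonormal.1 i, Complex.conj_ofReal]
    push_cast; ring
  have hsum := (Finset.sum_congr rfl perI').symm.trans (Finset.sum_congr rfl perI)
  rw [← Complex.ofReal_sum] at hsum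
  simp only [Finset.sum_add_distrib, Finset.sum_sub_distrib, ← Finset.mul_sum] at hsum
  rw [b.sum_inner_mul_inner u u, b.sum_inner_mul_inner v v, b.sum_inner_mul_inner v u,
    b.sum_inner_mul_inner u v, inner_self_complex, inner_self_complex] at hsum
  have hz : ⟪u, v⟫ * ⟪v, u⟫ = ((‖⟪u, v⟫‖ : ℂ))^2 := by
    rw [← inner_conj_symm v u]
    exact Complex.mul_conj' _
  have : ((∑ i, (μ i)^2 : ℝ) : ℂ) = ((‖u‖^2 * ‖u‖^2 + ‖v‖^2 * ‖v‖^2 - 2 * ‖⟪u, v⟫‖^2 : ℝ) : ℂ) := by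
    rw [hsum]
    push_cast
    linear_combination (-2 : ℂ) * hz
  exact_mod_cast this

-- helper: single/empty combination
lemma helper_comb (b : OrthonormalBasis (Fin n) ℂ (EuclideanSpace ℂ (Fin n)))
    (c : Finset (Fin n)) (hc : c.card ≤ 1) (g : Fin n → ℝ) (hg : ∀ i ∈ c, 0 ≤ g i) :
    (∀ w : E, ⟪(∑ i ∈ c, (Real.sqrt (g i) : ℂ) • b i : E), w⟫ •
        (∑ i ∈ c, (Real.sqrt (g i) : ℂ) • b i : E)
      = ∑ i ∈ c, (g i : ℂ) • ⟪b i, w⟫ • b i) ∧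
    ‖(∑ i ∈ c, (Real.sqrt (g i) : ℂ) • b i : E)‖ ^ 2 = ∑ i ∈ c, g i := by
  rcases c.eq_empty_or_nonempty with rfl | ⟨p, hp⟩
  · simp
  · have hcs : c = {p} := Finset.eq_singleton_iff_unique_mem.mpr
      ⟨hp, fun y hy => Finset.card_le_one.1 hc y hy p hp⟩
    subst hcs
    have hgp : 0 ≤ g p := hg p (Finset.mem_singleton_self p)
    constructor
    · intro w
      simp only [Finset.sum_singleton, inner_smul_left, Complex.conj_ofReal, smul_smul]
      congr 1
      rw [mul_comm, ← mul_assoc, ← Complex.ofReal_mul, Real.mul_self_sqrt hgp]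
    · simp only [Finset.sum_singleton, norm_smul, Complex.norm_real]
      rw [b.orthonormal.1 p]
      rw [Real.norm_eq_abs, abs_of_nonneg (Real.sqrt_nonneg _)]
      simp [Real.sq_sqrt hgp]

lemma sum_sq_card_le_one {c : Finset (Fin n)} (hc : c.card ≤ 1) (g : Fin n → ℝ) :
    (∑ i ∈ c, g i)^2 = ∑ i ∈ c, (g i)^2 := by
  rcases c.eq_empty_or_nonempty with rfl | ⟨p, hp⟩
  · simp
  · have hcs : c = {p} := Finset.eq_singleton_iff_unique_mem.mpr
      ⟨hp, fun y hy => Finset.card_le_one.1 hc y hy p hp⟩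
    subst hcs; simp

lemma spectral (u v : E) :
    ∃ u' v' : E, ⟪u', v'⟫ = 0 ∧ (∀ w : E, TOp u v w = TOp u' v' w) ∧
      ‖u'‖^2 - ‖v'‖^2 = ‖u‖^2 - ‖v‖^2 ∧
      ‖u'‖^2 * ‖u'‖^2 + ‖v'‖^2 * ‖v'‖^2
        = ‖u‖^2 * ‖u‖^2 + ‖v‖^2 * ‖v‖^2 - 2 * ‖⟪u, v⟫‖^2 := by
  set b := (TOp_symm u v).eigenvectorBasis finrank_euclideanSpace_fin with hb
  set μ := (TOp_symm u v).eigenvalues finrank_euclideanSpace_fin with hμ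
  have hbe : ∀ i, TOp u v (b i) = (μ i : ℂ) • b i :=
    fun i => (TOp_symm u v).apply_eigenvectorBasis finrank_euclideanSpace_fin i
  -- positive and negative index sets
  set s : Finset (Fin n) := Finset.univ.filter (fun i => 0 < μ i) with hs
  set t : Finset (Fin n) := Finset.univ.filter (fun i => μ i < 0) with ht
  have hscard : s.card ≤ 1 := by
    rw [Finset.card_le_one]
    intro a ha a' ha'
    by_contra hne
    have haa : ⟪b a, b a'⟫ = 0 := b.orthonormal.2 hne
    exact auxA u v (b a) (b a') (μ a) (μ a') haa (b.orthonormal.1 a) (b.orthonormal.1 a')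
      (Finset.mem_filter.1 ha).2 (Finset.mem_filter.1 ha').2 (hbe a) (hbe a')
  have htcard : t.card ≤ 1 := by
    rw [Finset.card_le_one]
    intro a ha a' ha'
    by_contra hne
    have haa : ⟪b a, b a'⟫ = 0 := b.orthonormal.2 hne
    have h1 : TOp v u (b a) = ((-μ a : ℝ) : ℂ) • b a := by
      rw [TOp_neg, hbe a]; push_cast; rw [← neg_smul]
    have h2 : TOp v u (b a') = ((-μ a' : ℝ) : ℂ) • b a' := by
      rw [TOp_neg, hbe a']; push_cast; rw [← neg_smul]
    exact auxA v u (b a) (b a') (-μ a) (-μ a') haa (b.orthonormal.1 a) (b.orthonormal.1 a')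
      (by linarith [(Finset.mem_filter.1 ha).2]) (by linarith [(Finset.mem_filter.1 ha').2]) h1 h2
  have hdisj : Disjoint s t := by
    rw [Finset.disjoint_left]
    intro i hi1 hi2
    have := (Finset.mem_filter.1 hi1).2
    have := (Finset.mem_filter.1 hi2).2
    linarith
  have hzero : ∀ i, i ∉ s → i ∉ t → μ i = 0 := by
    intro i h1 h2
    simp only [hs, ht, Finset.mem_filter, Finset.mem_univ, true_and, not_lt] at h1 h2
    linarith
  have hsg : ∀ i ∈ s, 0 ≤ μ i := fun i hi => le_of_lt (Finset.mem_filter.1 hi).2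
  have htg : ∀ i ∈ t, 0 ≤ -μ i := fun i hi => by linarith [(Finset.mem_filter.1 hi).2]
  obtain ⟨hu'rep, hu'norm⟩ := helper_comb b s hscard μ hsg
  obtain ⟨hv'rep, hv'norm⟩ := helper_comb b t htcard (fun i => -μ i) htg
  refine ⟨∑ i ∈ s, (Real.sqrt (μ i) : ℂ) • b i, ∑ i ∈ t, (Real.sqrt (-μ i) : ℂ) • b i,
    ?_, ?_, ?_, ?_⟩
  · -- orthogonality
    rw [sum_inner]
    apply Finset.sum_eq_zero
    intro i hi
    rw [inner_sum]
    apply Finset.sum_eq_zero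
    intro j hj
    have hne : i ≠ j := fun h => Finset.disjoint_left.mp hdisj hi (h ▸ hj)
    rw [inner_smul_left, inner_smul_right, b.orthonormal.2 hne]
    ring
  · -- same operator
    intro w
    have hexp : TOp u v w = ∑ i, (μ i : ℂ) • ⟪b i, w⟫ • b i := by
      conv_lhs => rw [← b.sum_repr' w, map_sum]
      refine Finset.sum_congr rfl (fun i _ => ?_)
      rw [map_smul, hbe i, smul_comm]
    have hsub : (∑ i, (μ i : ℂ) • ⟪b i, w⟫ • b i)
        = ∑ i ∈ s ∪ t, (μ i : ℂ) • ⟪b i, w⟫ • b i := by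
      refine (Finset.sum_subset (Finset.subset_univ _) ?_).symm
      intro i _ hi
      rw [Finset.mem_union] at hi
      push_neg at hi
      rw [hzero i hi.1 hi.2]
      simp
    rw [hexp, hsub, Finset.sum_union hdisj, TOp_apply, hu'rep w, hv'rep w, sub_eq_add_neg,
      ← Finset.sum_neg_distrib]
    congr 1
    refine Finset.sum_congr rfl (fun i hi => ?_)
    push_cast
    rw [neg_smul, neg_neg]
  · rw [hu'norm, hv'norm, Finset.sum_neg_distrib]
    rw [← trace_id u v b μ hbe]
    rw [show (∑ i, μ i) = ∑ i ∈ s ∪ t, μ i from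
      (Finset.sum_subset (Finset.subset_univ _) (by
        intro i _ hi
        rw [Finset.mem_union] at hi
        push_neg at hi
        exact hzero i hi.1 hi.2)).symm]
    rw [Finset.sum_union hdisj]
    ring
  · rw [hu'norm, hv'norm, Finset.sum_neg_distrib, ← frob_id u v b μ hbe]
    have hA : (∑ i ∈ s, μ i) * (∑ i ∈ s, μ i) = ∑ i ∈ s, (μ i)^2 := by
      rw [← sq, sum_sq_card_le_one hscard]
    have hB : (-∑ i ∈ t, μ i) * (-∑ i ∈ t, μ i) = ∑ i ∈ t, (μ i)^2 := by
      rw [neg_mul_neg, ← sq, sum_sq_card_le_one htcard]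
    have hC : (∑ i, (μ i)^2) = ∑ i ∈ s ∪ t, (μ i)^2 := by
      refine (Finset.sum_subset (Finset.subset_univ _) ?_).symm
      intro i _ hi
      rw [Finset.mem_union] at hi
      push_neg at hi
      rw [hzero i hi.1 hi.2]
      ring
    rw [hA, hB, hC, Finset.sum_union hdisj]

lemma G_formula (u v : E) :
    ‖u - v‖^2 * ‖u + v‖^2 - 4 * (⟪u, v⟫.im)^2
      = (‖u‖^2 + ‖v‖^2)^2 - 4 * ‖⟪u, v⟫‖^2 := by
  have h1 : ‖u - v‖^2 = ‖u‖^2 - 2 * (⟪u, v⟫).re + ‖v‖^2 := by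
    rw [@norm_sub_sq ℂ]
    simp
  have h2 : ‖u + v‖^2 = ‖u‖^2 + 2 * (⟪u, v⟫).re + ‖v‖^2 := by
    rw [@norm_add_sq ℂ]
    simp
  have h3 : ‖⟪u, v⟫‖^2 = (⟪u, v⟫).re^2 + (⟪u, v⟫).im^2 := by
    rw [Complex.sq_norm, Complex.normSq_apply]
    ring
  rw [h1, h2, h3]
  ring

lemma quad_transfer (u v u' v' : E) (h : ∀ w : E, TOp u v w = TOp u' v' w) (w : E) :
    ‖⟪u, w⟫‖^2 - ‖⟪v, w⟫‖^2 = ‖⟪u', w⟫‖^2 - ‖⟪v', w⟫‖^2 := by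
  have ha := TOp_quad u v w
  have hb := TOp_quad u' v' w
  rw [h w] at ha
  exact_mod_cast ha.symm.trans hb

end BalanAux

/-- A family `(x j)` in `ℂⁿ` does phase retrieval if whenever the magnitudes of the
coefficients of `u` and `v` agree, `u = λ • v` for some unimodular `λ`. -/
def DoesPhaseRetrieval {n m : ℕ} (x : Fin m → EuclideanSpace ℂ (Fin n)) : Prop :=
  ∀ u v : EuclideanSpace ℂ (Fin n),
    (∀ j, ‖⟪u, x j⟫‖ = ‖⟪v, x j⟫‖) → ∃ lam : ℂ, ‖lam‖ = 1 ∧ u = lam • v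

/-- **Balan's stability lemma.** A frame `(x j)_{j=1}^m` of `ℂⁿ` does phase retrieval if and
only if there is a constant `a₀ > 0` such that for all `u, v ∈ ℂⁿ`,
`∑ⱼ ||⟨u,xⱼ⟩|² - |⟨v,xⱼ⟩|²|² ≥ a₀ (‖u-v‖²‖u+v‖² - 4 (Im⟨u,v⟩)²)`. -/
theorem stmt_8 {n m : ℕ} (x : Fin m → EuclideanSpace ℂ (Fin n))
    (hframe : ∃ A B : ℝ, 0 < A ∧ A ≤ B ∧ ∀ u : EuclideanSpace ℂ (Fin n),
      A * ‖u‖ ^ 2 ≤ ∑ j, ‖⟪u, x j⟫‖ ^ 2 ∧ ∑ j, ‖⟪u, x j⟫‖ ^ 2 ≤ B * ‖u‖ ^ 2) :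
    DoesPhaseRetrieval x ↔
      ∃ a₀ : ℝ, 0 < a₀ ∧ ∀ u v : EuclideanSpace ℂ (Fin n),
        a₀ * (‖u - v‖ ^ 2 * ‖u + v‖ ^ 2 - 4 * (⟪u, v⟫.im) ^ 2) ≤
          ∑ j, (‖⟪u, x j⟫‖ ^ 2 - ‖⟪v, x j⟫‖ ^ 2) ^ 2 := by
  classical
  constructor
  · intro hPR
    by_cases hn : n = 0
    · subst hn
      refine ⟨1, one_pos, fun u v => ?_⟩
      have hu : u = 0 := by ext i; exact Fin.elim0 i
      have hv : v = 0 := by ext i; exact Fin.elim0 i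
      subst hu; subst hv
      simp
    · -- the compact set of orthogonal normalized pairs
      set K : Set (EuclideanSpace ℂ (Fin n) × EuclideanSpace ℂ (Fin n)) :=
        {p | ⟪p.1, p.2⟫ = 0 ∧ ‖p.1‖^2 + ‖p.2‖^2 = 1} with hKdef
      set F : EuclideanSpace ℂ (Fin n) × EuclideanSpace ℂ (Fin n) → ℝ :=
        fun p => ∑ j, (‖⟪p.1, x j⟫‖^2 - ‖⟪p.2, x j⟫‖^2)^2 with hFdef
      have hFc : Continuous F := by
        apply continuous_finset_sum
        intro j _
        exact (((continuous_fst.inner continuous_const).norm.pow 2).sub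
          ((continuous_snd.inner continuous_const).norm.pow 2)).pow 2
      have hKclosed : IsClosed K := by
        have h1 : IsClosed {p : EuclideanSpace ℂ (Fin n) × EuclideanSpace ℂ (Fin n) |
            ⟪p.1, p.2⟫ = 0} := isClosed_eq (continuous_fst.inner continuous_snd) continuous_const
        have h2 : IsClosed {p : EuclideanSpace ℂ (Fin n) × EuclideanSpace ℂ (Fin n) |
            ‖p.1‖^2 + ‖p.2‖^2 = 1} :=
          isClosed_eq ((continuous_fst.norm.pow 2).add (continuous_snd.norm.pow 2)) continuous_const
        exact h1.inter h2
      have hKsub : K ⊆ Metric.closedBall 0 1 := by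
        rintro ⟨p1, p2⟩ ⟨h1, h2⟩
        rw [Metric.mem_closedBall, dist_zero_right, Prod.norm_def]
        apply max_le <;> nlinarith [norm_nonneg p1, norm_nonneg p2, sq_nonneg ‖p1‖, sq_nonneg ‖p2‖]
      have hK : IsCompact K :=
        (isCompact_closedBall (0 : EuclideanSpace ℂ (Fin n) × EuclideanSpace ℂ (Fin n)) 1).of_isClosed_subset
          hKclosed hKsub
      have hKne : K.Nonempty := by
        refine ⟨(EuclideanSpace.single ⟨0, Nat.pos_of_ne_zero hn⟩ (1 : ℂ), 0), ?_, ?_⟩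
        · exact inner_zero_right _
        · simp [EuclideanSpace.norm_single]
      obtain ⟨p₀, hp₀, hmin'⟩ := hK.exists_isMinOn hKne hFc.continuousOn
      have hmin : ∀ q ∈ K, F p₀ ≤ F q := fun q hq => hmin' hq
      have hFnonneg : ∀ p, 0 ≤ F p := fun p => Finset.sum_nonneg fun j _ => sq_nonneg _
      have ha₀pos : 0 < F p₀ := by
        rcases eq_or_lt_of_le (hFnonneg p₀) with h0 | h
        · exfalso
          have h0' : ∑ j, (‖⟪p₀.1, x j⟫‖^2 - ‖⟪p₀.2, x j⟫‖^2)^2 = 0 := h0.symm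
          have hterm := (Finset.sum_eq_zero_iff_of_nonneg (fun j _ => sq_nonneg _)).mp h0'
          have hmageq : ∀ j, ‖⟪p₀.1, x j⟫‖ = ‖⟪p₀.2, x j⟫‖ := by
            intro j
            have hd : ‖⟪p₀.1, x j⟫‖^2 - ‖⟪p₀.2, x j⟫‖^2 = 0 :=
              pow_eq_zero_iff two_ne_zero |>.mp (hterm j (Finset.mem_univ j))
            have hsq : ‖⟪p₀.1, x j⟫‖^2 = ‖⟪p₀.2, x j⟫‖^2 := by linarith
            exact (sq_eq_sq₀ (norm_nonneg _) (norm_nonneg _)).mp hsq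
          obtain ⟨lam, hlam, hlv⟩ := hPR p₀.1 p₀.2 hmageq
          obtain ⟨ho, hnrm⟩ := hp₀
          rw [hlv, inner_smul_left, inner_self_complex] at ho
          have hlam0 : (starRingEnd ℂ) lam ≠ 0 := by
            simp only [ne_eq, map_eq_zero]
            intro h
            rw [h, norm_zero] at hlam
            norm_num at hlam
          have hv2 : ((‖p₀.2‖^2 : ℝ) : ℂ) = 0 := by
            rcases mul_eq_zero.mp ho with h | h
            · exact absurd h hlam0
            · exact h
          have hv0 : p₀.2 = 0 := by
            have : ‖p₀.2‖^2 = 0 := by exact_mod_cast hv2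
            have : ‖p₀.2‖ = 0 := by nlinarith [norm_nonneg p₀.2]
            exact norm_eq_zero.mp this
          rw [hv0, smul_zero] at hlv
          rw [hlv, hv0, norm_zero] at hnrm
          norm_num at hnrm
        · exact h
      refine ⟨F p₀, ha₀pos, fun u v => ?_⟩
      obtain ⟨u', v', hov, hTeq, htr, hfr⟩ := spectral u v
      have hG : ‖u - v‖^2 * ‖u + v‖^2 - 4 * (⟪u, v⟫.im)^2 = (‖u'‖^2 + ‖v'‖^2)^2 := by
        rw [G_formula]
        linear_combination ((‖u'‖^2 - ‖v'‖^2) + (‖u‖^2 - ‖v‖^2)) * htr - 2 * hfr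
      have hFeq : (∑ j, (‖⟪u, x j⟫‖^2 - ‖⟪v, x j⟫‖^2)^2)
          = ∑ j, (‖⟪u', x j⟫‖^2 - ‖⟪v', x j⟫‖^2)^2 := by
        refine Finset.sum_congr rfl (fun j _ => ?_)
        rw [quad_transfer u v u' v' hTeq (x j)]
      have htt : 0 ≤ ‖u'‖^2 + ‖v'‖^2 := by positivity
      rcases eq_or_lt_of_le htt with h0 | hpos
      · rw [hG, ← h0]
        norm_num
        exact Finset.sum_nonneg fun j _ => sq_nonneg _
      · set tt : ℝ := ‖u'‖^2 + ‖v'‖^2 with httdef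
        set c : ℝ := (Real.sqrt tt)⁻¹ with hcdef
        have hst : 0 < Real.sqrt tt := Real.sqrt_pos.mpr hpos
        have hc : 0 < c := inv_pos.mpr hst
        have hc2 : c^2 * tt = 1 := by
          rw [hcdef, ← Real.sq_sqrt (le_of_lt hpos)]
          field_simp
          rw [Real.sqrt_sq hst.le]
        have hmem : (((c : ℂ) • u', (c : ℂ) • v') :
            EuclideanSpace ℂ (Fin n) × EuclideanSpace ℂ (Fin n)) ∈ K := by
          constructor
          · show ⟪(c : ℂ) • u', (c : ℂ) • v'⟫ = 0
            rw [inner_smul_left, inner_smul_right, hov]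
            ring
          · show ‖(c : ℂ) • u'‖^2 + ‖(c : ℂ) • v'‖^2 = 1
            rw [norm_smul, norm_smul, Complex.norm_real, Real.norm_eq_abs,
              abs_of_pos hc]
            calc (c * ‖u'‖)^2 + (c * ‖v'‖)^2 = c^2 * (‖u'‖^2 + ‖v'‖^2) := by ring
            _ = 1 := hc2
        have hle := hmin _ hmem
        have hFs : F ((c : ℂ) • u', (c : ℂ) • v')
            = (c^2)^2 * ∑ j, (‖⟪u', x j⟫‖^2 - ‖⟪v', x j⟫‖^2)^2 := by
          show (∑ j, (‖⟪(c : ℂ) • u', x j⟫‖^2 - ‖⟪(c : ℂ) • v', x j⟫‖^2)^2) = _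
          rw [Finset.mul_sum]
          refine Finset.sum_congr rfl fun j _ => ?_
          rw [inner_smul_left, inner_smul_left, Complex.conj_ofReal, norm_mul, norm_mul,
            Complex.norm_real, Real.norm_eq_abs, abs_of_pos hc]
          ring
        rw [hFs] at hle
        have hle2 : F p₀ * tt^2 ≤ ((c^2)^2 * ∑ j, (‖⟪u', x j⟫‖^2 - ‖⟪v', x j⟫‖^2)^2) * tt^2 :=
          mul_le_mul_of_nonneg_right hle (by positivity)
        have heq2 : ((c^2)^2 * ∑ j, (‖⟪u', x j⟫‖^2 - ‖⟪v', x j⟫‖^2)^2) * tt^2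
            = (c^2 * tt)^2 * ∑ j, (‖⟪u', x j⟫‖^2 - ‖⟪v', x j⟫‖^2)^2 := by ring
        rw [heq2, hc2, one_pow, one_mul] at hle2
        rw [hG, hFeq]
        exact hle2
  · rintro ⟨a₀, ha₀, hineq⟩ u v hmag
    have hF0 : ∑ j, (‖⟪u, x j⟫‖^2 - ‖⟪v, x j⟫‖^2)^2 = 0 :=
      Finset.sum_eq_zero fun j _ => by rw [hmag j]; ring
    have hG0 : ‖u - v‖^2 * ‖u + v‖^2 - 4 * (⟪u, v⟫.im)^2 ≤ 0 := by
      have h := hineq u v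
      rw [hF0] at h
      nlinarith
    rw [G_formula] at hG0
    have hcs : ‖⟪u, v⟫‖ ≤ ‖u‖ * ‖v‖ := norm_inner_le_norm u v
    have hZ : ‖⟪u, v⟫‖^2 ≤ (‖u‖ * ‖v‖)^2 := by
      have := norm_nonneg (⟪u, v⟫ : ℂ)
      nlinarith
    have hab : ‖u‖^2 = ‖v‖^2 := by nlinarith [sq_nonneg (‖u‖^2 - ‖v‖^2)]
    have hnueq : ‖u‖ = ‖v‖ := by
      have h1 := norm_nonneg u
      have h2 := norm_nonneg v
      nlinarith
    by_cases hv : v = 0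
    · refine ⟨1, by norm_num, ?_⟩
      have : ‖u‖ = 0 := by rw [hnueq, hv, norm_zero]
      rw [norm_eq_zero.mp this, hv]
      simp
    · have hu : u ≠ 0 := by
        intro h
        rw [h, norm_zero] at hnueq
        exact hv (norm_eq_zero.mp hnueq.symm)
      have hZge : ‖u‖ * ‖v‖ ≤ ‖⟪u, v⟫‖ := by
        have h1 := norm_nonneg (⟪u, v⟫ : ℂ)
        have h2 : 0 ≤ ‖u‖ * ‖v‖ := mul_nonneg (norm_nonneg u) (norm_nonneg v)
        nlinarith
      have hZeq : ‖⟪u, v⟫‖ = ‖u‖ * ‖v‖ := le_antisymm hcs hZge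
      obtain ⟨r, hr0, hvr⟩ := (norm_inner_eq_norm_iff hu hv).1 hZeq
      have hrn : ‖r‖ = 1 := by
        have : ‖v‖ = ‖r‖ * ‖u‖ := by rw [hvr, norm_smul]
        have hupos : 0 < ‖u‖ := norm_pos_iff.mpr hu
        rw [← hnueq] at this
        exact (mul_right_cancel₀ (ne_of_gt hupos) (by rw [one_mul, ← this])).symm
      refine ⟨r⁻¹, by rw [norm_inv, hrn]; norm_num, ?_⟩
      rw [hvr, smul_smul, inv_mul_cancel₀ hr0, one_smul]
end

section
/- Let X = (x_j)_{j=1}^m be a frame of ℂⁿ with upper frame bound B which does phase retrieval, and let a₀(X) be the optimal constant such that Σ_{j=1}^m ||⟨x, x_j⟩|² − |⟨y, x_j⟩|²|² ≥ a₀(X)(‖x − y‖²‖x + y‖² − 4(Im⟨x, y⟩)²) holds for all x, y ∈ ℂⁿ. Let ρ = min(1/√m, a₀(X)/(2√2 (3B + 2)^{3/2})). If Y = (y_j)_{j=1}^m ⊆ ℂⁿ satisfies ‖x_j − y_j‖ < ρ for all 1 ≤ j ≤ m, then (y_j)_{j=1}^m is a frame of ℂⁿ which does phase retrieval and a₀(Y)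 > a₀(X)/2. -/
open scoped ComplexInnerProductSpace

/-- The set of constants `a ≥ 0` witnessing Balan's stability inequality for the family
`(z j)`. The optimal constant `a₀(Z)` is the greatest element of this set. -/
def balanSet {n m : ℕ} (z : Fin m → EuclideanSpace ℂ (Fin n)) : Set ℝ :=
  {a : ℝ | 0 ≤ a ∧ ∀ u v : EuclideanSpace ℂ (Fin n),
    a * (‖u - v‖ ^ 2 * ‖u + v‖ ^ 2 - 4 * (⟪u, v⟫.im) ^ 2) ≤
      ∑ j, (‖⟪u, z j⟫‖ ^ 2 - ‖⟪v, z j⟫‖ ^ 2) ^ 2}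

section BalanAux

lemma normSq_euclid {n : ℕ} (w : EuclideanSpace ℂ (Fin n)) : ‖w‖ ^ 2 = ∑ k, ‖w k‖ ^ 2 := by
  rw [EuclideanSpace.norm_eq, Real.sq_sqrt]; positivity

lemma D_eq {n : ℕ} (u v : EuclideanSpace ℂ (Fin n)) :
    ‖u - v‖ ^ 2 * ‖u + v‖ ^ 2 - 4 * (⟪u, v⟫.im) ^ 2
      = (‖u‖ ^ 2 + ‖v‖ ^ 2) ^ 2 - 4 * ‖⟪u, v⟫‖ ^ 2 := by
  rw [@norm_sub_sq ℂ, @norm_add_sq ℂ]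
  have h : ‖⟪u, v⟫‖ ^ 2 = (⟪u, v⟫.re) ^ 2 + (⟪u, v⟫.im) ^ 2 := by
    rw [Complex.sq_norm, Complex.normSq_apply]; ring
  rw [h]
  simp only [RCLike.re_to_complex]
  ring

lemma D_nonneg {n : ℕ} (u v : EuclideanSpace ℂ (Fin n)) :
    0 ≤ (‖u‖ ^ 2 + ‖v‖ ^ 2) ^ 2 - 4 * ‖⟪u, v⟫‖ ^ 2 := by
  have h := norm_inner_le_norm (𝕜 := ℂ) u v
  have h2 : (0:ℝ) ≤ ‖⟪u,v⟫‖ := norm_nonneg _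
  nlinarith [norm_nonneg u, norm_nonneg v, sq_nonneg (‖u‖^2 - ‖v‖^2), sq_nonneg (‖u‖*‖v‖)]

lemma l2_triangle {m : ℕ} {𝕜 : Type*} [RCLike 𝕜] (f g : Fin m → 𝕜) :
    Real.sqrt (∑ j, ‖f j + g j‖ ^ 2)
      ≤ Real.sqrt (∑ j, ‖f j‖ ^ 2) + Real.sqrt (∑ j, ‖g j‖ ^ 2) := by
  have h := norm_add_le ((WithLp.equiv 2 (Fin m → 𝕜)).symm f) ((WithLp.equiv 2 (Fin m → 𝕜)).symm g)
  have he : (WithLp.equiv 2 (Fin m → 𝕜)).symm f + (WithLp.equiv 2 (Fin m → 𝕜)).symm g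
      = (WithLp.equiv 2 (Fin m → 𝕜)).symm (f + g) := rfl
  rw [he] at h
  simpa only [EuclideanSpace.norm_eq, WithLp.equiv_symm_apply, WithLp.ofLp_toLp, Pi.add_apply] using h

lemma sum_T_le {n m : ℕ} (z : Fin m → EuclideanSpace ℂ (Fin n)) (C : ℝ) (hC0 : 0 ≤ C)
    (hC : ∀ w : EuclideanSpace ℂ (Fin n), ∑ j, ‖⟪w, z j⟫‖ ^ 2 ≤ C * ‖w‖ ^ 2)
    (u v : EuclideanSpace ℂ (Fin n)) :
    ∑ j, ‖⟪u, z j⟫ • u - ⟪v, z j⟫ • v‖ ^ 2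
      ≤ C * ((‖u‖ ^ 2 + ‖v‖ ^ 2) ^ 2 - 4 * ‖⟪u, v⟫‖ ^ 2) := by
  classical
  set c := ⟪u, v⟫ with hc
  set s : Fin n → EuclideanSpace ℂ (Fin n) :=
    fun k => (starRingEnd ℂ (u k)) • u - (starRingEnd ℂ (v k)) • v with hs
  have hcoord : ∀ j k, (⟪u, z j⟫ • u - ⟪v, z j⟫ • v) k = ⟪s k, z j⟫ := by
    intro j k
    have : (⟪u, z j⟫ • u - ⟪v, z j⟫ • v) k = ⟪u, z j⟫ * u k - ⟪v, z j⟫ * v k := rfl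
    rw [this, hs]
    simp only [inner_sub_left, inner_smul_left, RingHom.id_apply, starRingEnd_self_apply]
    ring
  have step1 : ∑ j, ‖⟪u, z j⟫ • u - ⟪v, z j⟫ • v‖ ^ 2 = ∑ k, ∑ j, ‖⟪s k, z j⟫‖ ^ 2 := by
    rw [Finset.sum_comm]
    refine Finset.sum_congr rfl fun j _ => ?_
    rw [normSq_euclid]
    exact Finset.sum_congr rfl fun k _ => by rw [hcoord]
  rw [step1]
  have step2 : ∑ k, ∑ j, ‖⟪s k, z j⟫‖ ^ 2 ≤ C * ∑ k, ‖s k‖ ^ 2 := by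
    rw [Finset.mul_sum]
    exact Finset.sum_le_sum fun k _ => hC (s k)
  refine step2.trans ?_
  have hsk : ∀ k, ‖s k‖ ^ 2 = ‖u k‖ ^ 2 * ‖u‖ ^ 2 + ‖v k‖ ^ 2 * ‖v‖ ^ 2
      - 2 * (u k * starRingEnd ℂ (v k) * c).re := by
    intro k
    rw [hs]
    rw [@norm_sub_sq ℂ]
    have h1 : ⟪(starRingEnd ℂ (u k)) • u, (starRingEnd ℂ (v k)) • v⟫
        = u k * starRingEnd ℂ (v k) * c := by
      rw [inner_smul_left, inner_smul_right, starRingEnd_self_apply, ← hc]; ring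
    rw [h1, norm_smul, norm_smul]
    simp only [RCLike.norm_conj, RCLike.re_to_complex]
    ring
  have hre : ∑ k, (u k * (starRingEnd ℂ) (v k) * c).re = ‖c‖ ^ 2 := by
    rw [← Complex.re_sum, ← Finset.sum_mul]
    have h : ∑ k, u k * (starRingEnd ℂ) (v k) = starRingEnd ℂ c := by
      rw [hc, PiLp.inner_apply, map_sum]
      refine Finset.sum_congr rfl fun k _ => ?_
      simp only [RCLike.inner_apply, map_mul, starRingEnd_self_apply]
      ring
    rw [h, mul_comm, Complex.mul_conj, Complex.ofReal_re, Complex.sq_norm]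
  have hsum : ∑ k, ‖s k‖ ^ 2 = ‖u‖ ^ 2 * ‖u‖ ^ 2 + ‖v‖ ^ 2 * ‖v‖ ^ 2 - 2 * ‖c‖ ^ 2 := by
    rw [Finset.sum_congr rfl fun k _ => hsk k, Finset.sum_sub_distrib, Finset.sum_add_distrib,
      ← Finset.sum_mul, ← Finset.sum_mul, ← normSq_euclid, ← normSq_euclid,
      ← Finset.mul_sum, hre]
  rw [hsum]
  have hCS : ‖c‖ ≤ ‖u‖ * ‖v‖ := hc ▸ norm_inner_le_norm u v
  have h0 : (0:ℝ) ≤ ‖c‖ := norm_nonneg _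
  have key : ‖c‖ * ‖c‖ ≤ (‖u‖*‖v‖) * (‖u‖*‖v‖) :=
    mul_le_mul hCS hCS h0 (mul_nonneg (norm_nonneg u) (norm_nonneg v))
  refine mul_le_mul_of_nonneg_left ?_ hC0
  nlinarith [key]

lemma delta_re {n : ℕ} (x y u v : EuclideanSpace ℂ (Fin n)) :
    ((‖⟪u,x⟫‖^2 - ‖⟪v,x⟫‖^2) - (‖⟪u,y⟫‖^2 - ‖⟪v,y⟫‖^2) : ℝ)
      = (⟪x - y, ⟪u,x⟫•u - ⟪v,x⟫•v⟫ + ⟪⟪u,y⟫•u - ⟪v,y⟫•v, x - y⟫).re := by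
  have e1 : ⟪x,u⟫ = starRingEnd ℂ ⟪u,x⟫ := (inner_conj_symm x u).symm
  have e2 : ⟪y,u⟫ = starRingEnd ℂ ⟪u,y⟫ := (inner_conj_symm y u).symm
  have e3 : ⟪x,v⟫ = starRingEnd ℂ ⟪v,x⟫ := (inner_conj_symm x v).symm
  have e4 : ⟪y,v⟫ = starRingEnd ℂ ⟪v,y⟫ := (inner_conj_symm y v).symm
  simp only [inner_sub_left, inner_sub_right, inner_smul_left, inner_smul_right,
    e1, e2, e3, e4]
  set A := ⟪u,x⟫; set A' := ⟪u,y⟫; set B := ⟪v,x⟫; set B' := ⟪v,y⟫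
  have hA : ‖A‖^2 = (A * starRingEnd ℂ A).re := by
    rw [Complex.mul_conj, Complex.ofReal_re, Complex.sq_norm]
  have hA' : ‖A'‖^2 = (A' * starRingEnd ℂ A').re := by
    rw [Complex.mul_conj, Complex.ofReal_re, Complex.sq_norm]
  have hB : ‖B‖^2 = (B * starRingEnd ℂ B).re := by
    rw [Complex.mul_conj, Complex.ofReal_re, Complex.sq_norm]
  have hB' : ‖B'‖^2 = (B' * starRingEnd ℂ B').re := by
    rw [Complex.mul_conj, Complex.ofReal_re, Complex.sq_norm]
  rw [hA, hA', hB, hB']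
  simp only [Complex.add_re, Complex.sub_re, Complex.sub_im, Complex.mul_re, Complex.mul_im,
    Complex.conj_re, Complex.conj_im]
  ring

lemma core_bound {n m : ℕ} (x y : Fin m → EuclideanSpace ℂ (Fin n)) (B ρ : ℝ) (hB : 0 < B)
    (hρ : 0 ≤ ρ)
    (hx_upper : ∀ u : EuclideanSpace ℂ (Fin n), ∑ j, ‖⟪u, x j⟫‖ ^ 2 ≤ B * ‖u‖ ^ 2)
    (hy_upper : ∀ u : EuclideanSpace ℂ (Fin n), ∑ j, ‖⟪u, y j⟫‖ ^ 2 ≤ (2*B+2) * ‖u‖ ^ 2)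
    (hd : ∀ j, ‖x j - y j‖ ≤ ρ) (u v : EuclideanSpace ℂ (Fin n)) :
    ∑ j, ((‖⟪u, x j⟫‖^2 - ‖⟪v, x j⟫‖^2) - (‖⟪u, y j⟫‖^2 - ‖⟪v, y j⟫‖^2))^2
      ≤ (2*ρ^2*(3*B+2)) * ((‖u‖ ^ 2 + ‖v‖ ^ 2) ^ 2 - 4 * ‖⟪u, v⟫‖ ^ 2) := by
  have hTx := sum_T_le x B hB.le hx_upper u v
  have hTy := sum_T_le y (2*B+2) (by linarith) hy_upper u v
  have step : ∀ j, ((‖⟪u, x j⟫‖^2 - ‖⟪v, x j⟫‖^2) - (‖⟪u, y j⟫‖^2 - ‖⟪v, y j⟫‖^2))^2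
      ≤ 2*ρ^2 * (‖⟪u, x j⟫ • u - ⟪v, x j⟫ • v‖^2 + ‖⟪u, y j⟫ • u - ⟪v, y j⟫ • v‖^2) := by
    intro j
    set Tx := ⟪u, x j⟫ • u - ⟪v, x j⟫ • v
    set Ty := ⟪u, y j⟫ • u - ⟪v, y j⟫ • v
    have heq := delta_re (x j) (y j) u v
    have habs : |((‖⟪u, x j⟫‖^2 - ‖⟪v, x j⟫‖^2) - (‖⟪u, y j⟫‖^2 - ‖⟪v, y j⟫‖^2))|
        ≤ ρ * (‖Tx‖ + ‖Ty‖) := by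
      rw [heq]
      have h1 : |(⟪x j - y j, Tx⟫ + ⟪Ty, x j - y j⟫).re|
          ≤ ‖⟪x j - y j, Tx⟫ + ⟪Ty, x j - y j⟫‖ := Complex.abs_re_le_norm _
      refine h1.trans ((norm_add_le _ _).trans ?_)
      have h2 : ‖⟪x j - y j, Tx⟫‖ ≤ ‖x j - y j‖ * ‖Tx‖ := norm_inner_le_norm _ _
      have h3 : ‖⟪Ty, x j - y j⟫‖ ≤ ‖Ty‖ * ‖x j - y j‖ := norm_inner_le_norm _ _
      have hdj := hd j
      have h4 : (0:ℝ) ≤ ‖x j - y j‖ := norm_nonneg _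
      nlinarith [norm_nonneg Tx, norm_nonneg Ty]
    have h5 := abs_nonneg ((‖⟪u, x j⟫‖^2 - ‖⟪v, x j⟫‖^2) - (‖⟪u, y j⟫‖^2 - ‖⟪v, y j⟫‖^2))
    nlinarith [sq_abs ((‖⟪u, x j⟫‖^2 - ‖⟪v, x j⟫‖^2) - (‖⟪u, y j⟫‖^2 - ‖⟪v, y j⟫‖^2)),
      sq_nonneg (‖Tx‖ - ‖Ty‖), mul_nonneg hρ (add_nonneg (norm_nonneg Tx) (norm_nonneg Ty)),
      sq_nonneg ρ, norm_nonneg Tx, norm_nonneg Ty]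
  calc ∑ j, ((‖⟪u, x j⟫‖^2 - ‖⟪v, x j⟫‖^2) - (‖⟪u, y j⟫‖^2 - ‖⟪v, y j⟫‖^2))^2
      ≤ ∑ j, 2*ρ^2 * (‖⟪u, x j⟫ • u - ⟪v, x j⟫ • v‖^2 + ‖⟪u, y j⟫ • u - ⟪v, y j⟫ • v‖^2) :=
        Finset.sum_le_sum fun j _ => step j
    _ = 2*ρ^2 * (∑ j, ‖⟪u, x j⟫ • u - ⟪v, x j⟫ • v‖^2
          + ∑ j, ‖⟪u, y j⟫ • u - ⟪v, y j⟫ • v‖^2) := by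
        rw [← Finset.mul_sum, Finset.sum_add_distrib]
    _ ≤ (2*ρ^2*(3*B+2)) * ((‖u‖ ^ 2 + ‖v‖ ^ 2) ^ 2 - 4 * ‖⟪u, v⟫‖ ^ 2) := by
        have hρ2 : (0:ℝ) ≤ 2*ρ^2 := by positivity
        nlinarith [mul_le_mul_of_nonneg_left (add_le_add hTx hTy) hρ2]

lemma y_upper_bound {n m : ℕ} (x y : Fin m → EuclideanSpace ℂ (Fin n)) (B ρ : ℝ)
    (hB : 0 < B)
    (hx_upper : ∀ u : EuclideanSpace ℂ (Fin n), ∑ j, ‖⟪u, x j⟫‖ ^ 2 ≤ B * ‖u‖ ^ 2)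
    (hd : ∀ j, ‖x j - y j‖ ≤ ρ) (hmρ2 : (m : ℝ) * ρ ^ 2 ≤ 1)
    (w : EuclideanSpace ℂ (Fin n)) :
    ∑ j, ‖⟪w, y j⟫‖ ^ 2 ≤ (2 * B + 2) * ‖w‖ ^ 2 := by
  have htri := l2_triangle (fun j => ⟪w, x j⟫) (fun j => ⟪w, y j - x j⟫)
  have hfg : ∀ j : Fin m, ⟪w, x j⟫ + ⟪w, y j - x j⟫ = ⟪w, y j⟫ := fun j => by
    rw [inner_sub_right]; ring
  simp only [hfg] at htri
  have hx2 : Real.sqrt (∑ j, ‖⟪w, x j⟫‖ ^ 2) ≤ Real.sqrt B * ‖w‖ := by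
    have := Real.sqrt_le_sqrt (hx_upper w)
    rwa [Real.sqrt_mul hB.le, Real.sqrt_sq (norm_nonneg w)] at this
  have hyx : Real.sqrt (∑ j, ‖⟪w, y j - x j⟫‖ ^ 2) ≤ ‖w‖ := by
    have hb : ∑ j, ‖⟪w, y j - x j⟫‖ ^ 2 ≤ ‖w‖ ^ 2 := by
      have hstep : ∀ j : Fin m, ‖⟪w, y j - x j⟫‖ ^ 2 ≤ ‖w‖ ^ 2 * ρ ^ 2 := by
        intro j
        have h1 : ‖⟪w, y j - x j⟫‖ ≤ ‖w‖ * ‖y j - x j‖ := norm_inner_le_norm _ _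
        have h2 : ‖y j - x j‖ ≤ ρ := by rw [norm_sub_rev]; exact hd j
        have h3 : ‖⟪w, y j - x j⟫‖ ^ 2 ≤ (‖w‖ * ‖y j - x j‖) ^ 2 :=
          pow_le_pow_left₀ (norm_nonneg _) h1 2
        have h4 : ‖y j - x j‖ ^ 2 ≤ ρ ^ 2 := pow_le_pow_left₀ (norm_nonneg _) h2 2
        nlinarith [h3, h4, sq_nonneg ‖w‖]
      calc ∑ j, ‖⟪w, y j - x j⟫‖ ^ 2 ≤ ∑ _j : Fin m, ‖w‖ ^ 2 * ρ ^ 2 :=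
            Finset.sum_le_sum fun j _ => hstep j
        _ = (m : ℝ) * ρ ^ 2 * ‖w‖ ^ 2 := by
            rw [Finset.sum_const, Finset.card_univ, Fintype.card_fin]; ring
        _ ≤ ‖w‖ ^ 2 := by nlinarith [sq_nonneg ‖w‖, hmρ2]
    calc Real.sqrt (∑ j, ‖⟪w, y j - x j⟫‖ ^ 2) ≤ Real.sqrt (‖w‖ ^ 2) := Real.sqrt_le_sqrt hb
      _ = ‖w‖ := Real.sqrt_sq (norm_nonneg w)
  have h5 : Real.sqrt (∑ j, ‖⟪w, y j⟫‖ ^ 2) ≤ Real.sqrt B * ‖w‖ + ‖w‖ := by linarith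
  have h6 : ∑ j, ‖⟪w, y j⟫‖ ^ 2 = (Real.sqrt (∑ j, ‖⟪w, y j⟫‖ ^ 2)) ^ 2 :=
    (Real.sq_sqrt (by positivity)).symm
  have hsB2 : (Real.sqrt B) ^ 2 = B := Real.sq_sqrt hB.le
  have h7 : 0 ≤ Real.sqrt (∑ j, ‖⟪w, y j⟫‖ ^ 2) := Real.sqrt_nonneg _
  nlinarith [h5, hsB2, Real.sqrt_nonneg B, norm_nonneg w, sq_nonneg (Real.sqrt B - 1),
    sq_nonneg (Real.sqrt B * ‖w‖ + ‖w‖), mul_nonneg (Real.sqrt_nonneg B) (norm_nonneg w)]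

lemma numeric_key (B a₀X ρ : ℝ) (hB : 0 < B) (ha0pos : 0 < a₀X) (hBsq : a₀X ≤ B ^ 2)
    (hρ0 : 0 ≤ ρ)
    (hρle : ρ ≤ a₀X / (2 * Real.sqrt 2 * (3 * B + 2) ^ (3 / 2 : ℝ))) :
    Real.sqrt a₀X / Real.sqrt 2 < Real.sqrt a₀X - ρ * Real.sqrt (2 * (3 * B + 2)) := by
  set s := Real.sqrt a₀X with hs
  set ε := ρ * Real.sqrt (2 * (3 * B + 2)) with hεdef
  have htpos : (0:ℝ) < 3 * B + 2 := by linarith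
  have hspos : 0 < s := Real.sqrt_pos.mpr ha0pos
  have hss : s * s = a₀X := Real.mul_self_sqrt ha0pos.le
  have hsB : s ≤ B := by
    calc s ≤ Real.sqrt (B ^ 2) := Real.sqrt_le_sqrt hBsq
      _ = B := Real.sqrt_sq hB.le
  have hεnn : 0 ≤ ε := by positivity
  have hrt : (3 * B + 2) ^ (3 / 2 : ℝ) = (3 * B + 2) * Real.sqrt (3 * B + 2) := by
    rw [show (3 / 2 : ℝ) = 1 + 1 / 2 by norm_num, Real.rpow_add htpos, Real.rpow_one,
      ← Real.sqrt_eq_rpow]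
  have hεle : ε ≤ a₀X / (2 * (3 * B + 2)) := by
    have h1 : ε ≤ (a₀X / (2 * Real.sqrt 2 * (3 * B + 2) ^ (3 / 2 : ℝ))) *
        Real.sqrt (2 * (3 * B + 2)) := by
      rw [hεdef]
      exact mul_le_mul_of_nonneg_right hρle (Real.sqrt_nonneg _)
    refine h1.trans_eq ?_
    rw [hrt, Real.sqrt_mul (by norm_num : (0:ℝ) ≤ 2)]
    have h2 : Real.sqrt 2 * Real.sqrt 2 = 2 := Real.mul_self_sqrt (by norm_num)
    have h3 : Real.sqrt (3 * B + 2) * Real.sqrt (3 * B + 2) = 3 * B + 2 :=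
      Real.mul_self_sqrt htpos.le
    have h4 : (0:ℝ) < Real.sqrt 2 := by positivity
    have h5 : (0:ℝ) < Real.sqrt (3 * B + 2) := Real.sqrt_pos.mpr htpos
    field_simp
  have h14 : (1.4 : ℝ) ≤ Real.sqrt 2 := by
    rw [show (1.4 : ℝ) = Real.sqrt (1.4 ^ 2) by rw [Real.sqrt_sq]; norm_num]
    exact Real.sqrt_le_sqrt (by norm_num)
  have hsqrt2pos : (0:ℝ) < Real.sqrt 2 := by positivity
  have e1 : s / Real.sqrt 2 ≤ s / 1.4 :=
    div_le_div_of_nonneg_left hspos.le (by norm_num) h14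
  have e2 : ε * (2 * (3 * B + 2)) ≤ a₀X := by
    rw [← le_div_iff₀ (by linarith)]; exact hεle
  have e3 : s / 1.4 = s * (5 / 7) := by ring
  have e4 : ε * (6 * B + 4) ≤ s * B := by nlinarith [e2, hss, hsB, hspos]
  nlinarith [e1, e3, e4, hspos, hB, mul_pos hspos hB]

lemma mem_balan_aux {n m : ℕ} (x y : Fin m → EuclideanSpace ℂ (Fin n)) (B ρ a₀X s ε : ℝ)
    (hB : 0 < B) (hρ : 0 ≤ ρ) (ha0 : 0 < a₀X)
    (hx_upper : ∀ u : EuclideanSpace ℂ (Fin n), ∑ j, ‖⟪u, x j⟫‖ ^ 2 ≤ B * ‖u‖ ^ 2)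
    (hy_upper : ∀ u : EuclideanSpace ℂ (Fin n), ∑ j, ‖⟪u, y j⟫‖ ^ 2 ≤ (2*B+2) * ‖u‖ ^ 2)
    (hd : ∀ j, ‖x j - y j‖ ≤ ρ)
    (hX : ∀ u v : EuclideanSpace ℂ (Fin n),
      a₀X * ((‖u‖ ^ 2 + ‖v‖ ^ 2) ^ 2 - 4 * ‖⟪u, v⟫‖ ^ 2)
        ≤ ∑ j, (‖⟪u, x j⟫‖ ^ 2 - ‖⟪v, x j⟫‖ ^ 2) ^ 2)
    (hs : s = Real.sqrt a₀X) (hεdef : ε = ρ * Real.sqrt (2 * (3 * B + 2)))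
    (hsε : 0 ≤ s - ε) (u v : EuclideanSpace ℂ (Fin n)) :
    (s - ε) ^ 2 * ((‖u‖ ^ 2 + ‖v‖ ^ 2) ^ 2 - 4 * ‖⟪u, v⟫‖ ^ 2)
      ≤ ∑ j, (‖⟪u, y j⟫‖ ^ 2 - ‖⟪v, y j⟫‖ ^ 2) ^ 2 := by
  have hεnn : 0 ≤ ε := by rw [hεdef]; positivity
  have hε2 : ε ^ 2 = 2 * ρ ^ 2 * (3 * B + 2) := by
    rw [hεdef, mul_pow, Real.sq_sqrt (by positivity)]; ring
  have hD0 : 0 ≤ (‖u‖ ^ 2 + ‖v‖ ^ 2) ^ 2 - 4 * ‖⟪u, v⟫‖ ^ 2 := D_nonneg u v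
  have hcore := core_bound x y B ρ hB hρ hx_upper hy_upper hd u v
  have htri := l2_triangle (𝕜 := ℝ) (fun j => (‖⟪u, y j⟫‖ ^ 2 - ‖⟪v, y j⟫‖ ^ 2))
    (fun j => (‖⟪u, x j⟫‖ ^ 2 - ‖⟪v, x j⟫‖ ^ 2) - (‖⟪u, y j⟫‖ ^ 2 - ‖⟪v, y j⟫‖ ^ 2))
  simp only [add_sub_cancel, Real.norm_eq_abs, sq_abs] at htri
  have h1 : s * Real.sqrt ((‖u‖ ^ 2 + ‖v‖ ^ 2) ^ 2 - 4 * ‖⟪u, v⟫‖ ^ 2)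
      ≤ Real.sqrt (∑ j, (‖⟪u, x j⟫‖ ^ 2 - ‖⟪v, x j⟫‖ ^ 2) ^ 2) := by
    have h := Real.sqrt_le_sqrt (hX u v)
    rwa [Real.sqrt_mul ha0.le, ← hs] at h
  have h2 : Real.sqrt (∑ j, ((‖⟪u, x j⟫‖ ^ 2 - ‖⟪v, x j⟫‖ ^ 2)
        - (‖⟪u, y j⟫‖ ^ 2 - ‖⟪v, y j⟫‖ ^ 2)) ^ 2)
      ≤ ε * Real.sqrt ((‖u‖ ^ 2 + ‖v‖ ^ 2) ^ 2 - 4 * ‖⟪u, v⟫‖ ^ 2) := by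
    have hc2 : ∑ j, ((‖⟪u, x j⟫‖ ^ 2 - ‖⟪v, x j⟫‖ ^ 2)
          - (‖⟪u, y j⟫‖ ^ 2 - ‖⟪v, y j⟫‖ ^ 2)) ^ 2
        ≤ ε ^ 2 * ((‖u‖ ^ 2 + ‖v‖ ^ 2) ^ 2 - 4 * ‖⟪u, v⟫‖ ^ 2) := by rw [hε2]; exact hcore
    calc Real.sqrt (∑ j, ((‖⟪u, x j⟫‖ ^ 2 - ‖⟪v, x j⟫‖ ^ 2)
          - (‖⟪u, y j⟫‖ ^ 2 - ‖⟪v, y j⟫‖ ^ 2)) ^ 2)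
        ≤ Real.sqrt (ε ^ 2 * ((‖u‖ ^ 2 + ‖v‖ ^ 2) ^ 2 - 4 * ‖⟪u, v⟫‖ ^ 2)) :=
          Real.sqrt_le_sqrt hc2
      _ = ε * Real.sqrt ((‖u‖ ^ 2 + ‖v‖ ^ 2) ^ 2 - 4 * ‖⟪u, v⟫‖ ^ 2) := by
          rw [Real.sqrt_mul (sq_nonneg ε), Real.sqrt_sq hεnn]
  have h3 : (s - ε) * Real.sqrt ((‖u‖ ^ 2 + ‖v‖ ^ 2) ^ 2 - 4 * ‖⟪u, v⟫‖ ^ 2)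
      ≤ Real.sqrt (∑ j, (‖⟪u, y j⟫‖ ^ 2 - ‖⟪v, y j⟫‖ ^ 2) ^ 2) := by
    nlinarith [htri, h1, h2]
  have h4 : 0 ≤ (s - ε) * Real.sqrt ((‖u‖ ^ 2 + ‖v‖ ^ 2) ^ 2 - 4 * ‖⟪u, v⟫‖ ^ 2) :=
    mul_nonneg hsε (Real.sqrt_nonneg _)
  calc (s - ε) ^ 2 * ((‖u‖ ^ 2 + ‖v‖ ^ 2) ^ 2 - 4 * ‖⟪u, v⟫‖ ^ 2)
      = ((s - ε) * Real.sqrt ((‖u‖ ^ 2 + ‖v‖ ^ 2) ^ 2 - 4 * ‖⟪u, v⟫‖ ^ 2)) ^ 2 := by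
        rw [mul_pow, Real.sq_sqrt hD0]
    _ ≤ (Real.sqrt (∑ j, (‖⟪u, y j⟫‖ ^ 2 - ‖⟪v, y j⟫‖ ^ 2) ^ 2)) ^ 2 :=
        pow_le_pow_left₀ h4 h3 2
    _ = ∑ j, (‖⟪u, y j⟫‖ ^ 2 - ‖⟪v, y j⟫‖ ^ 2) ^ 2 := Real.sq_sqrt (by positivity)

end BalanAux

set_option maxHeartbeats 4000000 in
/-- **Balan's perturbation theorem.** If `X = (x j)` is a frame of `ℂⁿ` with upper frame
bound `B` doing phase retrieval with optimal stability constant `a₀(X)`, and the family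
`Y = (y j)` satisfies `‖x j - y j‖ < ρ := min(1/√m, a₀(X)/(2√2(3B+2)^{3/2}))` for all `j`,
then `Y` is a frame of `ℂⁿ` doing phase retrieval with `a₀(Y) > a₀(X)/2`. -/
theorem stmt_9 {n m : ℕ} (x y : Fin m → EuclideanSpace ℂ (Fin n)) (B a₀X : ℝ) (hB : 0 < B)
    (hx_span : Submodule.span ℂ (Set.range x) = ⊤)
    (hx_upper : ∀ u : EuclideanSpace ℂ (Fin n), ∑ j, ‖⟪u, x j⟫‖ ^ 2 ≤ B * ‖u‖ ^ 2)
    (hx_pr : DoesPhaseRetrieval x)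
    (ha₀X : IsGreatest (balanSet x) a₀X)
    (hpert : ∀ j, ‖x j - y j‖ <
      min (1 / Real.sqrt m) (a₀X / (2 * Real.sqrt 2 * (3 * B + 2) ^ (3 / 2 : ℝ)))) :
    Submodule.span ℂ (Set.range y) = ⊤ ∧ DoesPhaseRetrieval y ∧
      ∃ a₀Y : ℝ, IsGreatest (balanSet y) a₀Y ∧ a₀X / 2 < a₀Y := by
  rcases subsingleton_or_nontrivial (EuclideanSpace ℂ (Fin n)) with hsub | hnt
  · exfalso
    have hmem : a₀X + 1 ∈ balanSet x := by
      refine ⟨by linarith [ha₀X.1.1], fun u v => ?_⟩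
      have hu : u = 0 := Subsingleton.elim u 0
      have hv : v = 0 := Subsingleton.elim v 0
      rw [hu, hv]
      simp
    have := ha₀X.2 hmem
    linarith
  rcases Nat.eq_zero_or_pos m with hm | hm
  · exfalso
    have hempty : IsEmpty (Fin m) := by rw [hm]; infer_instance
    have : (⊥ : Submodule ℂ (EuclideanSpace ℂ (Fin n))) = ⊤ := by
      rw [← Submodule.span_empty, ← Set.range_eq_empty x, hx_span]
    exact absurd this bot_ne_top
  set ρ := min (1 / Real.sqrt m) (a₀X / (2 * Real.sqrt 2 * (3 * B + 2) ^ (3 / 2 : ℝ))) with hρdef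
  have hρpos : 0 < ρ := lt_of_le_of_lt (norm_nonneg _) (hpert ⟨0, hm⟩)
  have htpos : (0:ℝ) < 3 * B + 2 := by linarith
  have hden : 0 < 2 * Real.sqrt 2 * (3 * B + 2) ^ (3 / 2 : ℝ) := by positivity
  have ha0pos : 0 < a₀X := by
    have h2 : 0 < a₀X / (2 * Real.sqrt 2 * (3 * B + 2) ^ (3 / 2 : ℝ)) :=
      lt_of_lt_of_le hρpos (min_le_right _ _)
    rcases div_pos_iff.mp h2 with ⟨h, _⟩ | ⟨_, h⟩
    · exact h
    · linarith
  obtain ⟨u₀, hu₀⟩ := exists_ne (0 : EuclideanSpace ℂ (Fin n))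
  set u₁ : EuclideanSpace ℂ (Fin n) := (↑‖u₀‖ : ℂ)⁻¹ • u₀ with hu₁def
  have hu₁ : ‖u₁‖ = 1 := norm_smul_inv_norm hu₀
  have hX : ∀ u v : EuclideanSpace ℂ (Fin n),
      a₀X * ((‖u‖ ^ 2 + ‖v‖ ^ 2) ^ 2 - 4 * ‖⟪u, v⟫‖ ^ 2)
        ≤ ∑ j, (‖⟪u, x j⟫‖ ^ 2 - ‖⟪v, x j⟫‖ ^ 2) ^ 2 := by
    intro u v
    have h := ha₀X.1.2 u v
    rwa [D_eq] at h
  have hBsq : a₀X ≤ B ^ 2 := by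
    have h := hX u₁ 0
    simp only [inner_zero_right, inner_zero_left, norm_zero, hu₁, one_pow, ne_eq,
      OfNat.ofNat_ne_zero, not_false_eq_true, zero_pow, add_zero, mul_zero, sub_zero,
      mul_one] at h
    have h2 : ∑ j, (‖⟪u₁, x j⟫‖ ^ 2) ^ 2 ≤ (∑ j, ‖⟪u₁, x j⟫‖ ^ 2) ^ 2 :=
      Finset.sum_sq_le_sq_sum_of_nonneg (fun j _ => by positivity)
    have h3 := hx_upper u₁
    rw [hu₁] at h3
    have h4 : (0:ℝ) ≤ ∑ j, ‖⟪u₁, x j⟫‖ ^ 2 := by positivity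
    nlinarith [h, h2, h3]
  have hsm : (0:ℝ) < Real.sqrt m := Real.sqrt_pos.mpr (by exact_mod_cast hm)
  have hmρ2 : (m : ℝ) * ρ ^ 2 ≤ 1 := by
    have h1 : ρ ≤ 1 / Real.sqrt m := min_le_left _ _
    have h2 : Real.sqrt m * ρ ≤ 1 := by
      rw [le_div_iff₀ hsm] at h1; linarith [mul_comm ρ (Real.sqrt m)]
    have h3 : (Real.sqrt m * ρ) ^ 2 ≤ 1 := by nlinarith [mul_nonneg hsm.le hρpos.le]
    have h4 : (Real.sqrt m) ^ 2 = (m : ℝ) := Real.sq_sqrt (by positivity)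
    nlinarith [h3, h4]
  have hd : ∀ j, ‖x j - y j‖ ≤ ρ := fun j => (hpert j).le
  have hy_upper : ∀ w : EuclideanSpace ℂ (Fin n),
      ∑ j, ‖⟪w, y j⟫‖ ^ 2 ≤ (2 * B + 2) * ‖w‖ ^ 2 :=
    y_upper_bound x y B ρ hB hx_upper hd hmρ2
  have hkey := numeric_key B a₀X ρ hB ha0pos hBsq hρpos.le (min_le_right _ _)
  set s := Real.sqrt a₀X with hs
  set ε := ρ * Real.sqrt (2 * (3 * B + 2)) with hεdef
  have hsd : 0 ≤ s / Real.sqrt 2 := by positivity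
  have hsε : 0 < s - ε := lt_of_le_of_lt hsd hkey
  set a₁ := (s - ε) ^ 2 with ha₁def
  have ha₁gt : a₀X / 2 < a₁ := by
    have h := pow_lt_pow_left₀ hkey hsd two_ne_zero
    have h2 : (s / Real.sqrt 2) ^ 2 = a₀X / 2 := by
      rw [div_pow, Real.sq_sqrt (by norm_num : (0:ℝ) ≤ 2), hs, Real.sq_sqrt ha0pos.le]
    rw [ha₁def]; linarith
  have ha₁mem : a₁ ∈ balanSet y := by
    refine ⟨sq_nonneg _, fun u v => ?_⟩
    rw [D_eq]
    exact mem_balan_aux x y B ρ a₀X s ε hB hρpos.le ha0pos hx_upper hy_upper hd hX hs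
      hεdef hsε.le u v
  have ha₁pos : 0 < a₁ := by rw [ha₁def]; positivity
  refine ⟨?_, ?_, ?_⟩
  · rw [← Submodule.orthogonal_eq_bot_iff, Submodule.eq_bot_iff]
    intro w hw
    have hw0 : ∀ j, ⟪w, y j⟫ = (0:ℂ) := by
      intro j
      have h := (Submodule.mem_orthogonal _ w).mp hw (y j)
        (Submodule.subset_span (Set.mem_range_self j))
      rw [← inner_conj_symm w (y j), h, map_zero]
    have h := ha₁mem.2 w 0
    simp only [sub_zero, add_zero, inner_zero_right, inner_zero_left, norm_zero,
      Complex.zero_im] at h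
    have hz : ∑ j, (‖⟪w, y j⟫‖ ^ 2 - 0 ^ 2) ^ 2 = 0 :=
      Finset.sum_eq_zero fun j _ => by rw [hw0 j]; simp
    rw [hz] at h
    by_contra hne
    have hpos : 0 < ‖w‖ := (norm_nonneg w).lt_of_ne (fun hc => hne (norm_eq_zero.mp hc.symm))
    nlinarith [h, mul_pos ha₁pos (mul_pos (mul_pos hpos hpos) (mul_pos hpos hpos))]
  · intro u v hmag
    have h := ha₁mem.2 u v
    have hz : ∑ j, (‖⟪u, y j⟫‖ ^ 2 - ‖⟪v, y j⟫‖ ^ 2) ^ 2 = 0 :=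
      Finset.sum_eq_zero fun j _ => by rw [hmag j]; ring
    rw [hz, D_eq] at h
    have hD0 := D_nonneg u v
    have hDz : (‖u‖ ^ 2 + ‖v‖ ^ 2) ^ 2 - 4 * ‖⟪u, v⟫‖ ^ 2 = 0 := by nlinarith [ha₁pos]
    have hCS := norm_inner_le_norm (𝕜 := ℂ) u v
    have hn2 : ‖u‖ ^ 2 = ‖v‖ ^ 2 := by
      nlinarith [norm_nonneg u, norm_nonneg v, norm_nonneg (⟪u, v⟫ : ℂ),
        sq_nonneg (‖u‖ ^ 2 - ‖v‖ ^ 2), sq_nonneg (‖u‖ * ‖v‖)]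
    have hnorm : ‖u‖ = ‖v‖ := by
      rw [← Real.sqrt_sq (norm_nonneg u), hn2, Real.sqrt_sq (norm_nonneg v)]
    by_cases hv : v = 0
    · refine ⟨1, by norm_num, ?_⟩
      have hu0 : ‖u‖ = 0 := by rw [hnorm, hv, norm_zero]
      rw [hv, norm_eq_zero.mp hu0, smul_zero]
    · have hu : u ≠ 0 := by
        intro h0
        apply hv
        have hvv : ‖v‖ = 0 := by rw [← hnorm, h0, norm_zero]
        exact norm_eq_zero.mp hvv
      have hinner : ‖⟪u, v⟫‖ = ‖u‖ * ‖v‖ := by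
        have hp : (0:ℝ) ≤ ‖⟪u, v⟫‖ := norm_nonneg _
        have hq : (0:ℝ) ≤ ‖u‖ * ‖v‖ := by positivity
        nlinarith [hDz, hn2]
      obtain ⟨r, hr0, hvr⟩ := (norm_inner_eq_norm_iff hu hv).mp hinner
      have hrn : ‖r‖ = 1 := by
        have h1 : ‖v‖ = ‖r‖ * ‖u‖ := by rw [hvr, norm_smul]
        have h2 : ‖v‖ ≠ 0 := fun hc => hv (norm_eq_zero.mp hc)
        rw [hnorm] at h1
        have h3 : ‖v‖ > 0 := lt_of_le_of_ne (norm_nonneg v) (Ne.symm h2)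
        nlinarith [h1, h3]
      refine ⟨r⁻¹, by rw [norm_inv, hrn]; norm_num, ?_⟩
      rw [hvr, smul_smul, inv_mul_cancel₀ hr0, one_smul]
  · have hbdd : BddAbove (balanSet y) := by
      refine ⟨∑ j, (‖⟪u₁, y j⟫‖ ^ 2 - 0 ^ 2) ^ 2, fun a ha => ?_⟩
      have h := ha.2 u₁ 0
      simp only [sub_zero, add_zero, inner_zero_right, inner_zero_left, norm_zero,
        Complex.zero_im, hu₁] at h
      nlinarith [h]
    have hclosed : IsClosed (balanSet y) := by
      have heq : balanSet y = {a : ℝ | 0 ≤ a} ∩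
          ⋂ (u : EuclideanSpace ℂ (Fin n)) (v : EuclideanSpace ℂ (Fin n)),
            {a : ℝ | a * (‖u - v‖ ^ 2 * ‖u + v‖ ^ 2 - 4 * (⟪u, v⟫.im) ^ 2) ≤
              ∑ j, (‖⟪u, y j⟫‖ ^ 2 - ‖⟪v, y j⟫‖ ^ 2) ^ 2} := by
        ext a
        simp only [balanSet, Set.mem_setOf_eq, Set.mem_inter_iff, Set.mem_iInter]
      rw [heq]
      exact (isClosed_le continuous_const continuous_id).inter
        (isClosed_iInter fun u => isClosed_iInter fun v =>
          isClosed_le (continuous_id.mul continuous_const) continuous_const)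
    have hne : (balanSet y).Nonempty := ⟨a₁, ha₁mem⟩
    exact ⟨sSup (balanSet y), ⟨hclosed.csSup_mem hne hbdd, fun b hb => le_csSup hbdd hb⟩,
      lt_of_lt_of_le ha₁gt (le_csSup hbdd ha₁mem)⟩
end

section
/- Let X = (x_j)_{j=1}^m be a frame of ℂⁿ with upper frame bound B which does phase retrieval, and let a₀(X) be the optimal constant such that Σ_{j=1}^m ||⟨x, x_j⟩|² − |⟨y, x_j⟩|²|² ≥ a₀(X)(‖x − y‖²‖x + y‖² − 4(Im⟨x, y⟩)²) holds for all x, y ∈ ℂⁿ. Let ρ = min(1, (a₀(X))²/(8(3B + 2)³)). If Y = (y_j)_{j=1}^m ⊆ ℂⁿ satisfies Σ_{j=1}^m ‖x_j − y_j‖² < ρ, then (y_j)_{j=1}^m is a frame of ℂⁿ which does phase retrieval and a₀(Y) > a₀(X)/2. -/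
open scoped ComplexInnerProductSpace

lemma re_decomp (a b : ℂ) : ‖a‖^2 - ‖b‖^2 = ((a-b) * (starRingEnd ℂ) (a+b)).re := by
  simp [Complex.mul_re, Complex.sq_norm, Complex.normSq_apply]
  ring

-- componentwise bound

lemma abs_term_est {n : ℕ} (u v xj yj : EuclideanSpace ℂ (Fin n)) :
    |(‖⟪u, xj⟫‖^2 - ‖⟪v, xj⟫‖^2) - (‖⟪u, yj⟫‖^2 - ‖⟪v, yj⟫‖^2)| ≤
      ‖⟪u-v, xj⟫‖ * (‖u+v‖ * ‖xj - yj‖) + (‖u-v‖ * ‖xj - yj‖) * ‖⟪u+v, yj⟫‖ := by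
  have e2 : ‖⟪u, xj⟫‖^2 - ‖⟪v, xj⟫‖^2 = (⟪u-v, xj⟫ * (starRingEnd ℂ) ⟪u+v, xj⟫).re := by
    rw [inner_sub_left, inner_add_left]; exact re_decomp _ _
  have e3 : ‖⟪u, yj⟫‖^2 - ‖⟪v, yj⟫‖^2 = (⟪u-v, yj⟫ * (starRingEnd ℂ) ⟪u+v, yj⟫).re := by
    rw [inner_sub_left, inner_add_left]; exact re_decomp _ _
  have e4 : ⟪u+v, xj - yj⟫ = ⟪u+v, xj⟫ - ⟪u+v, yj⟫ := inner_sub_right _ _ _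
  have e5 : ⟪u-v, xj - yj⟫ = ⟪u-v, xj⟫ - ⟪u-v, yj⟫ := inner_sub_right _ _ _
  have hid : (‖⟪u, xj⟫‖^2 - ‖⟪v, xj⟫‖^2) - (‖⟪u, yj⟫‖^2 - ‖⟪v, yj⟫‖^2) =
      (⟪u-v, xj⟫ * (starRingEnd ℂ) ⟪u+v, xj - yj⟫
        + ⟪u-v, xj - yj⟫ * (starRingEnd ℂ) ⟪u+v, yj⟫).re := by
    rw [e2, e3, ← Complex.sub_re]
    congr 1
    rw [e4, e5, map_sub]
    ring
  rw [hid]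
  have hre : |(⟪u-v, xj⟫ * (starRingEnd ℂ) ⟪u+v, xj - yj⟫
        + ⟪u-v, xj - yj⟫ * (starRingEnd ℂ) ⟪u+v, yj⟫).re| ≤
      ‖(⟪u-v, xj⟫ * (starRingEnd ℂ) ⟪u+v, xj - yj⟫
        + ⟪u-v, xj - yj⟫ * (starRingEnd ℂ) ⟪u+v, yj⟫ : ℂ)‖ := by
    exact Complex.abs_re_le_norm _
  refine le_trans hre (le_trans (norm_add_le _ _) ?_)
  rw [norm_mul, norm_mul, RCLike.norm_conj, RCLike.norm_conj]
  exact add_le_add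
    (mul_le_mul_of_nonneg_left (norm_inner_le_norm _ _) (norm_nonneg _))
    (mul_le_mul_of_nonneg_right (norm_inner_le_norm _ _) (norm_nonneg _))

-- pure real arithmetic for the squared term

lemma real_term {t a b P Q D ε : ℝ} (ha : 0 ≤ a) (hb : 0 ≤ b) (hP : 0 ≤ P) (hQ : 0 ≤ Q)
    (hD : 0 ≤ D) (habs : |t| ≤ a*(P*D) + (Q*D)*b) (hDε : D^2 ≤ ε) :
    t^2 ≤ 2*P^2*ε*a^2 + 2*Q^2*ε*b^2 := by
  have h1 : t^2 ≤ (a*(P*D) + (Q*D)*b)^2 := by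
    have := mul_self_le_mul_self (abs_nonneg t) habs
    nlinarith [sq_abs t]
  nlinarith [sq_nonneg (a*P*D - Q*D*b), mul_nonneg (mul_nonneg (sq_nonneg a) (sq_nonneg P)) (sub_nonneg.mpr hDε),
    mul_nonneg (mul_nonneg (sq_nonneg b) (sq_nonneg Q)) (sub_nonneg.mpr hDε)]

-- pure real: final combination

lemma real_final {Nx Ny r δ Q P a₀X : ℝ} (hr0 : 0 ≤ r) (hr2 : r^2 = a₀X)
    (hQ0 : 0 ≤ Q) (hP0 : 0 ≤ P) (hNy : 0 ≤ Ny)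
    (hlb : r * Q * P ≤ Nx) (htri : Nx - Ny ≤ δ * (P * Q)) (hδr : δ ≤ r/6) (hδ0 : 0 ≤ δ) :
    25/36 * a₀X * (Q^2 * P^2) ≤ Ny^2 := by
  subst hr2
  have hPQ : 0 ≤ P * Q := mul_nonneg hP0 hQ0
  have h1 : (5/6) * r * (Q*P) ≤ Ny := by nlinarith
  have hc0 : 0 ≤ (5/6) * r * (Q*P) := by
    have := mul_nonneg hr0 (mul_nonneg hQ0 hP0); nlinarith
  have h2 := mul_self_le_mul_self hc0 h1
  nlinarith [h2]

-- pure real: upper-bound transfer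

lemma eucl_norm_sq_real {m : ℕ} (c : EuclideanSpace ℝ (Fin m)) : ‖c‖^2 = ∑ j, (c j)^2 := by
  rw [EuclideanSpace.norm_eq, Real.sq_sqrt (by positivity)]
  simp [sq_abs]

lemma eucl_norm_sq_cplx {m : ℕ} (c : EuclideanSpace ℂ (Fin m)) : ‖c‖^2 = ∑ j, ‖c j‖^2 := by
  rw [EuclideanSpace.norm_eq, Real.sq_sqrt (by positivity)]

lemma le_of_sq_le' {a b : ℝ} (hb : 0 ≤ b) (h : a^2 ≤ b^2) : a ≤ b := by
  nlinarith [sq_nonneg (a-b), sq_nonneg (a+b)]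

lemma real_upper {Ny s W B dd : ℝ} (hs0 : 0 ≤ s) (hs2 : s^2 = B) (hW : 0 ≤ W)
    (hNy0 : 0 ≤ Ny) (hNy : Ny ≤ s*W + dd) (hdd : dd ≤ W) :
    Ny^2 ≤ (2*B+2) * W^2 := by
  subst hs2
  nlinarith [sq_nonneg (s-1), sq_nonneg ((s+1)*W), mul_nonneg hs0 hW]

-- upper frame bound for the perturbed family

lemma y_upper {n m : ℕ} (x y : Fin m → EuclideanSpace ℂ (Fin n)) (B : ℝ) (hB : 0 < B)
    (hx_upper : ∀ u : EuclideanSpace ℂ (Fin n), ∑ j, ‖⟪u, x j⟫‖ ^ 2 ≤ B * ‖u‖ ^ 2)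
    (hε1 : ∑ j, ‖x j - y j‖ ^ 2 ≤ 1) (w : EuclideanSpace ℂ (Fin n)) :
    ∑ j, ‖⟪w, y j⟫‖ ^ 2 ≤ (2*B+2) * ‖w‖^2 := by
  classical
  let vx : EuclideanSpace ℂ (Fin m) := WithLp.toLp 2 (fun j => ⟪w, x j⟫)
  let vy : EuclideanSpace ℂ (Fin m) := WithLp.toLp 2 (fun j => ⟪w, y j⟫)
  have hxn : ‖vx‖^2 ≤ B * ‖w‖^2 := by
    rw [eucl_norm_sq_cplx]; exact hx_upper w
  have hd : ‖vx - vy‖^2 ≤ ‖w‖^2 := by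
    rw [eucl_norm_sq_cplx]
    have hterm : ∀ j ∈ Finset.univ, ‖(vx - vy) j‖^2 ≤ ‖x j - y j‖^2 * ‖w‖^2 := by
      intro j _
      have h1 : (vx - vy) j = ⟪w, x j - y j⟫ := by
        show vx j - vy j = _
        rw [inner_sub_right]
      rw [h1]
      have h2 : ‖⟪w, x j - y j⟫‖ ≤ ‖w‖ * ‖x j - y j‖ := norm_inner_le_norm _ _
      nlinarith [norm_nonneg (x j - y j), norm_nonneg w, norm_nonneg (⟪w, x j - y j⟫ : ℂ)]
    calc ∑ j, ‖(vx - vy) j‖^2 ≤ ∑ j, ‖x j - y j‖^2 * ‖w‖^2 := Finset.sum_le_sum hterm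
    _ = (∑ j, ‖x j - y j‖^2) * ‖w‖^2 := by rw [← Finset.sum_mul]
    _ ≤ 1 * ‖w‖^2 := by nlinarith [sq_nonneg ‖w‖]
    _ = ‖w‖^2 := one_mul _
  have hs0 : 0 ≤ Real.sqrt B := Real.sqrt_nonneg _
  have hs2 : (Real.sqrt B)^2 = B := Real.sq_sqrt hB.le
  have hxn' : ‖vx‖ ≤ Real.sqrt B * ‖w‖ :=
    le_of_sq_le' (mul_nonneg hs0 (norm_nonneg w)) (by nlinarith)
  have hd' : ‖vx - vy‖ ≤ ‖w‖ := le_of_sq_le' (norm_nonneg w) hd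
  have htri : ‖vy‖ ≤ Real.sqrt B * ‖w‖ + ‖vx - vy‖ := by
    calc ‖vy‖ = ‖vx - (vx - vy)‖ := by rw [sub_sub_cancel]
    _ ≤ ‖vx‖ + ‖vx - vy‖ := norm_sub_le _ _
    _ ≤ Real.sqrt B * ‖w‖ + ‖vx - vy‖ := by linarith
  have := real_upper hs0 hs2 (norm_nonneg w) (norm_nonneg vy) htri hd'
  calc ∑ j, ‖⟪w, y j⟫‖ ^ 2 = ‖vy‖^2 := (eucl_norm_sq_cplx vy).symm
  _ ≤ (2*B+2) * ‖w‖^2 := this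

lemma key_estimate {n m : ℕ} (x y : Fin m → EuclideanSpace ℂ (Fin n)) (B a₀X : ℝ) (hB : 0 < B)
    (hx_upper : ∀ u : EuclideanSpace ℂ (Fin n), ∑ j, ‖⟪u, x j⟫‖ ^ 2 ≤ B * ‖u‖ ^ 2)
    (ha : ∀ u v : EuclideanSpace ℂ (Fin n),
      a₀X * (‖u - v‖ ^ 2 * ‖u + v‖ ^ 2 - 4 * (⟪u, v⟫.im) ^ 2) ≤
        ∑ j, (‖⟪u, x j⟫‖ ^ 2 - ‖⟪v, x j⟫‖ ^ 2) ^ 2)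
    (ha0 : 0 ≤ a₀X)
    (hε1 : ∑ j, ‖x j - y j‖ ^ 2 ≤ 1)
    (hδ : Real.sqrt (2 * (∑ j, ‖x j - y j‖ ^ 2) * (3*B+2)) ≤ Real.sqrt a₀X / 6)
    (u v : EuclideanSpace ℂ (Fin n)) (him : (⟪u, v⟫).im = 0) :
    25/36 * a₀X * (‖u - v‖ ^ 2 * ‖u + v‖ ^ 2) ≤
      ∑ j, (‖⟪u, y j⟫‖ ^ 2 - ‖⟪v, y j⟫‖ ^ 2) ^ 2 := by
  classical
  have hε0 : 0 ≤ ∑ j, ‖x j - y j‖ ^ 2 := by positivity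
  have hδ0 : 0 ≤ Real.sqrt (2 * (∑ j, ‖x j - y j‖ ^ 2) * (3*B+2)) := Real.sqrt_nonneg _
  have hδ2 : (Real.sqrt (2 * (∑ j, ‖x j - y j‖ ^ 2) * (3*B+2)))^2
      = 2 * (∑ j, ‖x j - y j‖ ^ 2) * (3*B+2) := Real.sq_sqrt (by nlinarith)
  have hr0 : 0 ≤ Real.sqrt a₀X := Real.sqrt_nonneg _
  have hr2 : (Real.sqrt a₀X)^2 = a₀X := Real.sq_sqrt ha0
  let cx : EuclideanSpace ℝ (Fin m) := WithLp.toLp 2 (fun j => ‖⟪u, x j⟫‖ ^ 2 - ‖⟪v, x j⟫‖ ^ 2)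
  let cy : EuclideanSpace ℝ (Fin m) := WithLp.toLp 2 (fun j => ‖⟪u, y j⟫‖ ^ 2 - ‖⟪v, y j⟫‖ ^ 2)
  have hcxn : ‖cx‖^2 = ∑ j, (‖⟪u, x j⟫‖ ^ 2 - ‖⟪v, x j⟫‖ ^ 2) ^ 2 := eucl_norm_sq_real cx
  have hcyn : ‖cy‖^2 = ∑ j, (‖⟪u, y j⟫‖ ^ 2 - ‖⟪v, y j⟫‖ ^ 2) ^ 2 := eucl_norm_sq_real cy
  have hFx : a₀X * (‖u-v‖^2 * ‖u+v‖^2) ≤ ‖cx‖^2 := by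
    have h := ha u v
    rw [him] at h
    rw [hcxn]
    calc a₀X * (‖u-v‖^2*‖u+v‖^2) = a₀X * (‖u-v‖^2*‖u+v‖^2 - 4*(0:ℝ)^2) := by ring
    _ ≤ _ := h
  have hcx_lb : Real.sqrt a₀X * ‖u-v‖ * ‖u+v‖ ≤ ‖cx‖ := by
    apply le_of_sq_le' (norm_nonneg _)
    calc (Real.sqrt a₀X * ‖u-v‖ * ‖u+v‖)^2
        = (Real.sqrt a₀X)^2 * (‖u-v‖^2 * ‖u+v‖^2) := by ring
    _ = a₀X * (‖u-v‖^2 * ‖u+v‖^2) := by rw [hr2]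
    _ ≤ ‖cx‖^2 := hFx
  have hdiff : ‖cx - cy‖^2 ≤ 2 * (∑ j, ‖x j - y j‖ ^ 2) * (3*B+2) * (‖u+v‖^2 * ‖u-v‖^2) := by
    rw [eucl_norm_sq_real]
    have hterm : ∀ j ∈ Finset.univ, ((cx - cy) j)^2 ≤
        2*‖u+v‖^2*(∑ i, ‖x i - y i‖ ^ 2)*‖⟪u-v, x j⟫‖^2
          + 2*‖u-v‖^2*(∑ i, ‖x i - y i‖ ^ 2)*‖⟪u+v, y j⟫‖^2 := by
      intro j _
      have hdjε : ‖x j - y j‖^2 ≤ ∑ i, ‖x i - y i‖ ^ 2 :=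
        Finset.single_le_sum (f := fun i => ‖x i - y i‖^2) (fun i _ => sq_nonneg _)
          (Finset.mem_univ j)
      have hj : (cx - cy) j =
          (‖⟪u, x j⟫‖^2 - ‖⟪v, x j⟫‖^2) - (‖⟪u, y j⟫‖^2 - ‖⟪v, y j⟫‖^2) := by
        rw [PiLp.sub_apply]
      have habs : |(cx - cy) j| ≤
          ‖⟪u-v, x j⟫‖ * (‖u+v‖ * ‖x j - y j‖) + (‖u-v‖ * ‖x j - y j‖) * ‖⟪u+v, y j⟫‖ := by
        rw [hj]; exact abs_term_est u v (x j) (y j)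
      exact real_term (norm_nonneg (⟪u-v, x j⟫ : ℂ)) (norm_nonneg (⟪u+v, y j⟫ : ℂ))
        (norm_nonneg (u+v)) (norm_nonneg (u-v)) (norm_nonneg (x j - y j)) habs hdjε
    have c1 : 0 ≤ 2*‖u+v‖^2*(∑ i, ‖x i - y i‖ ^ 2) :=
      mul_nonneg (mul_nonneg (by norm_num) (sq_nonneg _)) hε0
    have c2 : 0 ≤ 2*‖u-v‖^2*(∑ i, ‖x i - y i‖ ^ 2) :=
      mul_nonneg (mul_nonneg (by norm_num) (sq_nonneg _)) hε0
    calc ∑ j, ((cx - cy) j)^2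
        ≤ ∑ j, (2*‖u+v‖^2*(∑ i, ‖x i - y i‖ ^ 2)*‖⟪u-v, x j⟫‖^2
          + 2*‖u-v‖^2*(∑ i, ‖x i - y i‖ ^ 2)*‖⟪u+v, y j⟫‖^2) := Finset.sum_le_sum hterm
      _ = 2*‖u+v‖^2*(∑ i, ‖x i - y i‖ ^ 2)*(∑ j, ‖⟪u-v, x j⟫‖^2)
          + 2*‖u-v‖^2*(∑ i, ‖x i - y i‖ ^ 2)*(∑ j, ‖⟪u+v, y j⟫‖^2) := by
          rw [Finset.sum_add_distrib, ← Finset.mul_sum, ← Finset.mul_sum]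
      _ ≤ 2*‖u+v‖^2*(∑ i, ‖x i - y i‖ ^ 2)*(B * ‖u-v‖^2)
          + 2*‖u-v‖^2*(∑ i, ‖x i - y i‖ ^ 2)*((2*B+2) * ‖u+v‖^2) :=
          add_le_add (mul_le_mul_of_nonneg_left (hx_upper (u-v)) c1)
            (mul_le_mul_of_nonneg_left (y_upper x y B hB hx_upper hε1 (u+v)) c2)
      _ = 2 * (∑ i, ‖x i - y i‖ ^ 2) * (3*B+2) * (‖u+v‖^2 * ‖u-v‖^2) := by ring
  have hdN : ‖cx - cy‖ ≤ Real.sqrt (2 * (∑ j, ‖x j - y j‖ ^ 2) * (3*B+2)) * (‖u+v‖ * ‖u-v‖) := by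
    apply le_of_sq_le' (mul_nonneg hδ0 (mul_nonneg (norm_nonneg _) (norm_nonneg _)))
    calc ‖cx - cy‖^2 ≤ 2 * (∑ j, ‖x j - y j‖ ^ 2) * (3*B+2) * (‖u+v‖^2 * ‖u-v‖^2) := hdiff
    _ = (Real.sqrt (2 * (∑ j, ‖x j - y j‖ ^ 2) * (3*B+2)) * (‖u+v‖ * ‖u-v‖))^2 := by
        rw [mul_pow, hδ2]; ring
  have htri : ‖cx‖ - ‖cy‖ ≤
      Real.sqrt (2 * (∑ j, ‖x j - y j‖ ^ 2) * (3*B+2)) * (‖u+v‖ * ‖u-v‖) :=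
    le_trans (norm_sub_norm_le cx cy) hdN
  have hfin := real_final hr0 hr2 (norm_nonneg (u-v)) (norm_nonneg (u+v)) (norm_nonneg cy)
    hcx_lb htri hδ hδ0
  rw [hcyn] at hfin
  exact hfin

lemma Gfun_eq {n : ℕ} (u v : EuclideanSpace ℂ (Fin n)) :
    ‖u - v‖ ^ 2 * ‖u + v‖ ^ 2 - 4 * (⟪u, v⟫.im) ^ 2
      = (‖u‖^2 + ‖v‖^2)^2 - 4 * ‖⟪u,v⟫‖^2 := by
  have h1 := @norm_sub_sq ℂ _ _ _ _ u v
  have h2 := @norm_add_sq ℂ _ _ _ _ u v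
  have h3 : ‖⟪u,v⟫‖^2 = (⟪u,v⟫.re)^2 + (⟪u,v⟫.im)^2 := by
    rw [Complex.sq_norm, Complex.normSq_apply]; ring
  simp only [RCLike.re_to_complex] at h1 h2
  rw [h1, h2, h3]; ring

/-- Reduction: it suffices to verify the Balan inequality for pairs with real inner product. -/

lemma balan_mem_of_im_zero {n m : ℕ} (z : Fin m → EuclideanSpace ℂ (Fin n)) (a : ℝ)
    (ha0 : 0 ≤ a)
    (key : ∀ u v : EuclideanSpace ℂ (Fin n), (⟪u, v⟫).im = 0 →
      a * (‖u - v‖ ^ 2 * ‖u + v‖ ^ 2) ≤ ∑ j, (‖⟪u, z j⟫‖ ^ 2 - ‖⟪v, z j⟫‖ ^ 2) ^ 2) :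
    a ∈ balanSet z := by
  refine ⟨ha0, fun u v => ?_⟩
  by_cases h0 : (⟪u, v⟫ : ℂ) = 0
  · have him : (⟪u, v⟫).im = 0 := by rw [h0]; rfl
    have hk := key u v him
    rw [him]
    calc a * (‖u - v‖ ^ 2 * ‖u + v‖ ^ 2 - 4 * (0:ℝ) ^ 2)
        = a * (‖u - v‖ ^ 2 * ‖u + v‖ ^ 2) := by ring
    _ ≤ _ := hk
  · set lam : ℂ := (‖⟪u, v⟫‖ : ℂ) / ⟪u, v⟫ with hlamdef
    have hnz : ‖(⟪u, v⟫ : ℂ)‖ ≠ 0 := norm_ne_zero_iff.mpr h0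
    have hlam : ‖lam‖ = 1 := by
      rw [hlamdef, norm_div, Complex.norm_real, norm_norm, div_self hnz]
    have hinner : ⟪u, lam • v⟫ = ((‖⟪u, v⟫‖ : ℝ) : ℂ) := by
      rw [inner_smul_right, hlamdef, div_mul_cancel₀ _ h0]
    have him : (⟪u, lam • v⟫).im = 0 := by rw [hinner]; exact Complex.ofReal_im _
    have hk := key u (lam • v) him
    have hnw : ‖lam • v‖ = ‖v‖ := by rw [norm_smul, hlam, one_mul]
    have hniw : ‖⟪u, lam • v⟫‖ = ‖⟪u, v⟫‖ := by
      rw [hinner, Complex.norm_real, norm_norm]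
    have hG : ‖u - v‖ ^ 2 * ‖u + v‖ ^ 2 - 4 * (⟪u, v⟫.im) ^ 2
        = ‖u - lam • v‖ ^ 2 * ‖u + lam • v‖ ^ 2 := by
      have g1 := Gfun_eq u v
      have g2 := Gfun_eq u (lam • v)
      rw [him, hnw, hniw] at g2
      rw [g1]
      linarith [g2]
    have hR : ∀ j, ‖⟪lam • v, z j⟫‖ = ‖⟪v, z j⟫‖ := by
      intro j
      rw [inner_smul_left, norm_mul, RCLike.norm_conj, hlam, one_mul]
    rw [hG]
    calc a * (‖u - lam • v‖ ^ 2 * ‖u + lam • v‖ ^ 2)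
        ≤ ∑ j, (‖⟪u, z j⟫‖ ^ 2 - ‖⟪lam • v, z j⟫‖ ^ 2) ^ 2 := hk
    _ = ∑ j, (‖⟪u, z j⟫‖ ^ 2 - ‖⟪v, z j⟫‖ ^ 2) ^ 2 := by
        refine Finset.sum_congr rfl fun j _ => ?_
        rw [hR j]

lemma parallel_of_G_eq_zero (u v : EuclideanSpace ℂ (Fin n))
    (h : (‖u‖^2 + ‖v‖^2)^2 - 4 * ‖⟪u,v⟫‖^2 ≤ 0) :
    ∃ lam : ℂ, ‖lam‖ = 1 ∧ u = lam • v := by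
  have hcs : ‖⟪u,v⟫‖ ≤ ‖u‖ * ‖v‖ := norm_inner_le_norm u v
  have hnu : 0 ≤ ‖u‖ := norm_nonneg u
  have hnv : 0 ≤ ‖v‖ := norm_nonneg v
  have hni : 0 ≤ ‖⟪u,v⟫‖ := norm_nonneg _
  have hII : ‖⟪u,v⟫‖^2 ≤ (‖u‖*‖v‖)^2 := by nlinarith
  have hsq : ‖u‖^2 = ‖v‖^2 := by nlinarith [sq_nonneg (‖u‖^2 - ‖v‖^2)]
  have heqn : ‖u‖ = ‖v‖ := by nlinarith [sq_nonneg (‖u‖ - ‖v‖), sq_nonneg (‖u‖ + ‖v‖)]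
  have heqi : ‖⟪u,v⟫‖ = ‖u‖ * ‖v‖ := by nlinarith [sq_nonneg (‖⟪u,v⟫‖ - ‖u‖*‖v‖), sq_nonneg (‖⟪u,v⟫‖ + ‖u‖*‖v‖)]
  by_cases hv : v = 0
  · refine ⟨1, by simp, ?_⟩
    have : ‖u‖ = 0 := by rw [heqn, hv, norm_zero]
    simp [hv, norm_eq_zero.mp this]
  · by_cases hu : u = 0
    · rw [hu, norm_zero] at heqn
      exact absurd (norm_eq_zero.mp heqn.symm) hv
    · obtain ⟨r, hr0, hvu⟩ := (norm_inner_eq_norm_iff hu hv).mp heqi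
      have hu0 : ‖u‖ ≠ 0 := norm_ne_zero_iff.mpr hu
      have hru : ‖r‖ = 1 := by
        have h1 : ‖v‖ = ‖r‖ * ‖u‖ := by rw [hvu, norm_smul]
        have h2 : ‖r‖ * ‖u‖ = 1 * ‖u‖ := by rw [one_mul, ← h1, ← heqn]
        exact mul_right_cancel₀ hu0 h2
      refine ⟨r⁻¹, by simp [norm_inv, hru], ?_⟩
      rw [hvu, smul_smul, inv_mul_cancel₀ hr0, one_smul]

lemma sum_sq_le_sq_sum {m : ℕ} (f : Fin m → ℝ) (hf : ∀ j, 0 ≤ f j) :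
    ∑ j, (f j)^2 ≤ (∑ j, f j)^2 := by
  calc ∑ j, (f j)^2 ≤ ∑ j, (f j * ∑ i, f i) := by
        refine Finset.sum_le_sum fun j _ => ?_
        have h1 : f j ≤ ∑ i, f i :=
          Finset.single_le_sum (fun i _ => hf i) (Finset.mem_univ j)
        nlinarith [hf j]
  _ = (∑ j, f j)^2 := by rw [← Finset.sum_mul]; ring

/-- **Balan's perturbation theorem.** If `X = (x j)` is a frame of `ℂⁿ` with upper frame
bound `B` doing phase retrieval with optimal stability constant `a₀(X)`, and the family
`Y = (y j)` satisfies `∑ⱼ ‖x j - y j‖² < ρ := min(1, a₀(X)²/(8(3B+2)³))`,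
then `Y` is a frame of `ℂⁿ` doing phase retrieval with `a₀(Y) > a₀(X)/2`. -/
theorem stmt_10 {n m : ℕ} (x y : Fin m → EuclideanSpace ℂ (Fin n)) (B a₀X : ℝ) (hB : 0 < B)
    (hx_span : Submodule.span ℂ (Set.range x) = ⊤)
    (hx_upper : ∀ u : EuclideanSpace ℂ (Fin n), ∑ j, ‖⟪u, x j⟫‖ ^ 2 ≤ B * ‖u‖ ^ 2)
    (hx_pr : DoesPhaseRetrieval x)
    (ha₀X : IsGreatest (balanSet x) a₀X)
    (hpert : ∑ j, ‖x j - y j‖ ^ 2 <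
      min 1 (a₀X ^ 2 / (8 * (3 * B + 2) ^ 3))) :
    Submodule.span ℂ (Set.range y) = ⊤ ∧ DoesPhaseRetrieval y ∧
      ∃ a₀Y : ℝ, IsGreatest (balanSet y) a₀Y ∧ a₀X / 2 < a₀Y := by
  classical
  have ha0 : 0 ≤ a₀X := ha₀X.1.1
  have hax := ha₀X.1.2
  have hε0 : 0 ≤ ∑ j, ‖x j - y j‖ ^ 2 := Finset.sum_nonneg fun j _ => sq_nonneg _
  have hQpos : (0:ℝ) < 8 * (3 * B + 2) ^ 3 := by positivity
  have hε1 : ∑ j, ‖x j - y j‖ ^ 2 ≤ 1 := le_of_lt (lt_of_lt_of_le hpert (min_le_left _ _))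
  have hε8 : (∑ j, ‖x j - y j‖ ^ 2) * (8 * (3 * B + 2) ^ 3) < a₀X ^ 2 :=
    (lt_div_iff₀ hQpos).mp (lt_of_lt_of_le hpert (min_le_right _ _))
  have haXpos : 0 < a₀X := by nlinarith
  -- n = 0 is degenerate: balanSet x has no greatest element
  rcases Nat.eq_zero_or_pos n with hn | hn
  · exfalso
    subst hn
    have hmem : (a₀X + 1) ∈ balanSet x := by
      refine ⟨by linarith, fun u v => ?_⟩
      have hu : u = 0 := Subsingleton.elim u 0
      have hv : v = 0 := Subsingleton.elim v 0
      subst hu; subst hv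
      simp
    linarith [ha₀X.2 hmem]
  -- the distinguished unit vector
  set e : EuclideanSpace ℂ (Fin n) := EuclideanSpace.single ⟨0, hn⟩ 1 with hedef
  have he : ‖e‖ = 1 := by
    rw [hedef, EuclideanSpace.norm_single, norm_one]
  have hmem_bound : ∀ (z : Fin m → EuclideanSpace ℂ (Fin n)) (a : ℝ), a ∈ balanSet z →
      a ≤ ∑ j, (‖⟪e, z j⟫‖^2)^2 := by
    intro z a haz
    have h := haz.2 e 0
    simp only [sub_zero, add_zero, inner_zero_right, inner_zero_left, Complex.zero_im,
      norm_zero] at h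
    rw [he] at h
    calc a = a * (1^2 * 1^2 - 4*(0:ℝ)^2) := by ring
    _ ≤ ∑ j, (‖⟪e, z j⟫‖^2 - 0^2)^2 := h
    _ = ∑ j, (‖⟪e, z j⟫‖^2)^2 := by
        refine Finset.sum_congr rfl fun j _ => ?_
        norm_num
  -- a₀X ≤ B²
  have haB : a₀X ≤ B^2 := by
    have h1 := hmem_bound x a₀X ha₀X.1
    have h2 : ∑ j, (‖⟪e, x j⟫‖^2)^2 ≤ (∑ j, ‖⟪e, x j⟫‖^2)^2 :=
      sum_sq_le_sq_sum _ (fun j => sq_nonneg _)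
    have h3 : ∑ j, ‖⟪e, x j⟫‖^2 ≤ B * ‖e‖^2 := hx_upper e
    rw [he] at h3
    have h4 : 0 ≤ ∑ j, ‖⟪e, x j⟫‖^2 := Finset.sum_nonneg fun j _ => sq_nonneg _
    nlinarith
  -- the sqrt bound
  have hδ : Real.sqrt (2 * (∑ j, ‖x j - y j‖ ^ 2) * (3*B+2)) ≤ Real.sqrt a₀X / 6 := by
    have hq2 : (0:ℝ) < (3*B+2)^2 := by positivity
    have hkey : 72 * (∑ j, ‖x j - y j‖ ^ 2) * (3*B+2) * (3*B+2)^2 < a₀X * (3*B+2)^2 := by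
      nlinarith [mul_le_mul_of_nonneg_left haB ha0]
    have h72 : 72 * (∑ j, ‖x j - y j‖ ^ 2) * (3*B+2) < a₀X := by nlinarith
    have h36 : 2 * (∑ j, ‖x j - y j‖ ^ 2) * (3*B+2) ≤ a₀X/36 := by linarith
    calc Real.sqrt (2 * (∑ j, ‖x j - y j‖ ^ 2) * (3*B+2))
        ≤ Real.sqrt (a₀X/36) := Real.sqrt_le_sqrt h36
    _ = Real.sqrt a₀X / 6 := by
        rw [show a₀X/36 = (Real.sqrt a₀X / 6)^2 by rw [div_pow, Real.sq_sqrt ha0]; norm_num]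
        exact Real.sqrt_sq (by positivity)
  -- the key membership
  have hkeymem : (25/36 * a₀X) ∈ balanSet y := by
    refine balan_mem_of_im_zero y _ (by positivity) ?_
    exact key_estimate x y B a₀X hB hx_upper hax ha0 hε1 hδ
  have hkeypos : 0 < 25/36 * a₀X := by positivity
  -- phase retrieval for y
  have hy_pr : DoesPhaseRetrieval y := by
    intro u v huv
    have h := hkeymem.2 u v
    have hz : ∑ j, (‖⟪u, y j⟫‖ ^ 2 - ‖⟪v, y j⟫‖ ^ 2) ^ 2 = 0 := by
      refine Finset.sum_eq_zero fun j _ => ?_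
      rw [huv j]; ring
    rw [hz, Gfun_eq] at h
    refine parallel_of_G_eq_zero u v ?_
    rcases mul_nonpos_iff.mp h with ⟨_, h2⟩ | ⟨h2, _⟩
    · exact h2
    · linarith
  -- spanning
  have hy_span : Submodule.span ℂ (Set.range y) = ⊤ := by
    by_contra hKT
    have hbot : (Submodule.span ℂ (Set.range y))ᗮ ≠ ⊥ := by
      intro hb
      exact hKT (Submodule.orthogonal_eq_bot_iff.mp hb)
    obtain ⟨u, huK, hu0⟩ := (Submodule.ne_bot_iff _).mp hbot
    have hzero : ∀ j, ‖⟪u, y j⟫‖ = ‖⟪(0 : EuclideanSpace ℂ (Fin n)), y j⟫‖ := by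
      intro j
      have hyK : y j ∈ Submodule.span ℂ (Set.range y) :=
        Submodule.subset_span (Set.mem_range_self j)
      have h1 : ⟪y j, u⟫ = 0 := (Submodule.mem_orthogonal _ _).mp huK _ hyK
      have h2 : (⟪u, y j⟫ : ℂ) = 0 := by
        rw [← inner_conj_symm, h1, map_zero]
      rw [h2, inner_zero_left]
    obtain ⟨lam, _, hulam⟩ := hy_pr u 0 hzero
    rw [smul_zero] at hulam
    exact hu0 hulam
  -- greatest element of balanSet y
  have h0mem : (0:ℝ) ∈ balanSet y := by
    refine ⟨le_refl 0, fun u v => ?_⟩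
    rw [zero_mul]
    exact Finset.sum_nonneg fun j _ => sq_nonneg _
  have hne : (balanSet y).Nonempty := ⟨0, h0mem⟩
  have hbdd : BddAbove (balanSet y) :=
    ⟨∑ j, (‖⟪e, y j⟫‖^2)^2, fun a haz => hmem_bound y a haz⟩
  set a₀Y := sSup (balanSet y) with ha₀Ydef
  have hYge : 25/36 * a₀X ≤ a₀Y := le_csSup hbdd hkeymem
  have hYmem : a₀Y ∈ balanSet y := by
    constructor
    · exact le_trans (le_of_lt hkeypos) hYge
    · intro u v
      by_cases hG : 0 < ‖u - v‖ ^ 2 * ‖u + v‖ ^ 2 - 4 * (⟪u, v⟫.im) ^ 2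
      · have hub : a₀Y ≤ (∑ j, (‖⟪u, y j⟫‖ ^ 2 - ‖⟪v, y j⟫‖ ^ 2) ^ 2) /
            (‖u - v‖ ^ 2 * ‖u + v‖ ^ 2 - 4 * (⟪u, v⟫.im) ^ 2) := by
          refine csSup_le hne fun b hb => ?_
          exact (le_div_iff₀ hG).mpr (hb.2 u v)
        exact (le_div_iff₀ hG).mp hub
      · push_neg at hG
        have h1 : 0 ≤ a₀Y := le_trans (le_of_lt hkeypos) hYge
        have h2 : 0 ≤ ∑ j, (‖⟪u, y j⟫‖ ^ 2 - ‖⟪v, y j⟫‖ ^ 2) ^ 2 :=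
          Finset.sum_nonneg fun j _ => sq_nonneg _
        exact le_trans (mul_nonpos_iff.mpr (Or.inl ⟨h1, hG⟩)) h2
  refine ⟨hy_span, hy_pr, a₀Y, ⟨hYmem, fun b hb => le_csSup hbdd hb⟩, ?_⟩
  calc a₀X / 2 < 25/36 * a₀X := by linarith
  _ ≤ a₀Y := hYge
end

section
/- Let (x_j)_{j∈J} be a frame of a Hilbert space H with upper frame bound B, and suppose there is a₀ > 0 such that Σ_{j∈J} ||⟨x, x_j⟩|² − |⟨y, x_j⟩|²|² ≥ a₀(‖x − y‖²‖x + y‖² − 4(Im⟨x, y⟩)²) for all x, y ∈ H. Then (x_j)_{j∈J} is a 4-frame of H with lower 4-frame bound a₀^{1/4} and upper 4-frame bound B^{1/2}; that is, a₀^{1/4}‖x‖ ≤ (Σ_{j∈J} |⟨x, x_j⟩|⁴)^{1/4} ≤ B^{1/2}‖x‖ for all x ∈ H. -/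
open scoped ComplexInnerProductSpace

/-!
Write `a j = |⟨u, x j⟩|²`. Since the `a j` are nonnegative, `∑ a j² ≤ (∑ a j)² ≤ (B ‖u‖²)²`,
which is the upper 4-frame bound. Balan's inequality at `v = 0` reads `a₀ ‖u‖⁴ ≤ ∑ a j²`,
which is the lower one.
-/

section NonnegSeries

variable {J : Type*} {f : J → ℝ}

lemma sq_le_mul_tsum_of_nonneg (hf0 : ∀ j, 0 ≤ f j) (hf : Summable f) (j : J) :
    f j ^ 2 ≤ f j * ∑' i, f i := by
  rw [sq]
  exact mul_le_mul_of_nonneg_left (hf.le_tsum j fun i _ => hf0 i) (hf0 j)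

lemma Summable.sq_of_nonneg (hf0 : ∀ j, 0 ≤ f j) (hf : Summable f) :
    Summable fun j => f j ^ 2 :=
  .of_nonneg_of_le (fun _ => sq_nonneg _) (sq_le_mul_tsum_of_nonneg hf0 hf) (hf.mul_right _)

lemma tsum_sq_le_sq_tsum_of_nonneg (hf0 : ∀ j, 0 ≤ f j) (hf : Summable f) :
    ∑' j, f j ^ 2 ≤ (∑' j, f j) ^ 2 :=
  calc ∑' j, f j ^ 2 ≤ ∑' j, f j * ∑' i, f i :=
        (hf.sq_of_nonneg hf0).tsum_le_tsum (sq_le_mul_tsum_of_nonneg hf0 hf) (hf.mul_right _)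
    _ = (∑' j, f j) ^ 2 := by rw [tsum_mul_right, sq]

end NonnegSeries

section FourFrame

variable {H : Type*} [NormedAddCommGroup H] [InnerProductSpace ℂ H] {J : Type*} (x : J → H)

lemma norm_inner_pow_four_eq_sq (u : H) (j : J) :
    ‖⟪u, x j⟫‖ ^ 4 = (‖⟪u, x j⟫‖ ^ 2) ^ 2 := by
  rw [← pow_mul]

lemma tsum_norm_inner_pow_four_le {B : ℝ} (hB : 0 ≤ B) {u : H}
    (hsum : Summable fun j => ‖⟪u, x j⟫‖ ^ 2) (hupper : ∑' j, ‖⟪u, x j⟫‖ ^ 2 ≤ B * ‖u‖ ^ 2) :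
    ∑' j, ‖⟪u, x j⟫‖ ^ 4 ≤ (Real.sqrt B * ‖u‖) ^ 4 :=
  calc ∑' j, ‖⟪u, x j⟫‖ ^ 4 = ∑' j, (‖⟪u, x j⟫‖ ^ 2) ^ 2 :=
        tsum_congr (norm_inner_pow_four_eq_sq x u)
    _ ≤ (∑' j, ‖⟪u, x j⟫‖ ^ 2) ^ 2 :=
        tsum_sq_le_sq_tsum_of_nonneg (fun j => sq_nonneg _) hsum
    _ ≤ (B * ‖u‖ ^ 2) ^ 2 := pow_le_pow_left₀ (tsum_nonneg fun j => sq_nonneg _) hupper 2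
    _ = (Real.sqrt B ^ 2 * ‖u‖ ^ 2) ^ 2 := by rw [Real.sq_sqrt hB]
    _ = (Real.sqrt B * ‖u‖) ^ 4 := by ring

lemma mul_pow_four_le_tsum_norm_inner_pow_four {a₀ : ℝ}
    (hbalan : ∀ u v : H, a₀ * (‖u - v‖ ^ 2 * ‖u + v‖ ^ 2 - 4 * (⟪u, v⟫.im) ^ 2) ≤
      ∑' j, (‖⟪u, x j⟫‖ ^ 2 - ‖⟪v, x j⟫‖ ^ 2) ^ 2) (u : H) :
    a₀ * ‖u‖ ^ 4 ≤ ∑' j, ‖⟪u, x j⟫‖ ^ 4 := by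
  have h := hbalan u 0
  simp only [sub_zero, add_zero, inner_zero_right, inner_zero_left, Complex.zero_im, norm_zero]
    at h
  convert h using 1
  · ring
  · exact tsum_congr fun j => by rw [norm_inner_pow_four_eq_sq]; norm_num

end FourFrame

theorem stmt_11_general {H : Type*} [NormedAddCommGroup H] [InnerProductSpace ℂ H]
    {J : Type*} (x : J → H) (B a₀ : ℝ) (hB : 0 < B)
    (hx_summable : ∀ u : H, Summable fun j => ‖⟪u, x j⟫‖ ^ 2)
    (hx_upper : ∀ u : H, ∑' j, ‖⟪u, x j⟫‖ ^ 2 ≤ B * ‖u‖ ^ 2)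
    (ha₀ : 0 < a₀)
    (hbalan : ∀ u v : H,
      a₀ * (‖u - v‖ ^ 2 * ‖u + v‖ ^ 2 - 4 * (⟪u, v⟫.im) ^ 2) ≤
        ∑' j, (‖⟪u, x j⟫‖ ^ 2 - ‖⟪v, x j⟫‖ ^ 2) ^ 2) :
    ∀ u : H,
      a₀ ^ (1 / 4 : ℝ) * ‖u‖ ≤ (∑' j, ‖⟪u, x j⟫‖ ^ 4) ^ (1 / 4 : ℝ) ∧
        (∑' j, ‖⟪u, x j⟫‖ ^ 4) ^ (1 / 4 : ℝ) ≤ Real.sqrt B * ‖u‖ := by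
  intro u
  have hS : 0 ≤ ∑' j, ‖⟪u, x j⟫‖ ^ 4 := tsum_nonneg fun j => by positivity
  have hfour : (0 : ℝ) < 4 := by norm_num
  rw [one_div]
  constructor
  · rw [Real.le_rpow_inv_iff_of_pos (by positivity) hS hfour,
      Real.mul_rpow (by positivity) (norm_nonneg u), Real.rpow_inv_rpow ha₀.le hfour.ne',
      Real.rpow_ofNat]
    exact mul_pow_four_le_tsum_norm_inner_pow_four x hbalan u
  · rw [Real.rpow_inv_le_iff_of_pos hS (by positivity) hfour, Real.rpow_ofNat]
    exact tsum_norm_inner_pow_four_le x hB.le (hx_summable u) (hx_upper u)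

/-- If `(x j)` is a frame of a Hilbert space `H` with upper frame bound `B` satisfying
Balan's inequality with constant `a₀ > 0`, then `(x j)` is a 4-frame of `H` with lower
4-frame bound `a₀^{1/4}` and upper 4-frame bound `B^{1/2}`. -/
theorem stmt_11 {H : Type*} [NormedAddCommGroup H] [InnerProductSpace ℂ H] [CompleteSpace H]
    {J : Type*} (x : J → H) (B a₀ : ℝ) (hB : 0 < B)
    (hx_summable : ∀ u : H, Summable fun j => ‖⟪u, x j⟫‖ ^ 2)
    (hx_upper : ∀ u : H, ∑' j, ‖⟪u, x j⟫‖ ^ 2 ≤ B * ‖u‖ ^ 2)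
    (ha₀ : 0 < a₀)
    (hbalan : ∀ u v : H,
      a₀ * (‖u - v‖ ^ 2 * ‖u + v‖ ^ 2 - 4 * (⟪u, v⟫.im) ^ 2) ≤
        ∑' j, (‖⟪u, x j⟫‖ ^ 2 - ‖⟪v, x j⟫‖ ^ 2) ^ 2) :
    ∀ u : H,
      a₀ ^ (1 / 4 : ℝ) * ‖u‖ ≤ (∑' j, ‖⟪u, x j⟫‖ ^ 4) ^ (1 / 4 : ℝ) ∧
        (∑' j, ‖⟪u, x j⟫‖ ^ 4) ^ (1 / 4 : ℝ) ≤ Real.sqrt B * ‖u‖ :=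
  stmt_11_general x B a₀ hB hx_summable hx_upper ha₀ hbalan
end

section
/- Let (x_j)_{j∈J} be a frame of a Hilbert space H with upper frame bound B, and suppose there is a₀ > 0 such that Σ_{j∈J} ||⟨x, x_j⟩|² − |⟨y, x_j⟩|²|² ≥ a₀(‖x − y‖²‖x + y‖² − 4(Im⟨x, y⟩)²) for all x, y ∈ H. Then (x_j)_{j∈J} does (2 a₀⁻¹ B)^{1/2}-stable phase retrieval in ℓ₄(J); that is, min_{|λ|=1} ‖x − λy‖ ≤ (2 a₀⁻¹ B)^{1/2} (Σ_{j∈J} ||⟨x, x_j⟩| − |⟨y, x_j⟩||⁴)^{1/4} for all x, y ∈ H. -/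
open scoped ComplexInnerProductSpace

/-- Cauchy–Schwarz for tsums of nonnegative reals. -/
lemma my_tsum_cs {J : Type*} {f g : J → ℝ} (hf0 : ∀ j, 0 ≤ f j) (hg0 : ∀ j, 0 ≤ g j)
    (hf2 : Summable fun j => f j ^ 2) (hg2 : Summable fun j => g j ^ 2) :
    ∑' j, f j * g j ≤ Real.sqrt (∑' j, f j ^ 2) * Real.sqrt (∑' j, g j ^ 2) := by
  have hsum : Summable fun j => f j * g j := by
    refine Summable.of_nonneg_of_le (fun j => mul_nonneg (hf0 j) (hg0 j)) (fun j => ?_)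
      (hf2.add hg2)
    nlinarith [sq_nonneg (f j - g j)]
  refine Summable.tsum_le_of_sum_le hsum fun s => ?_
  have h1 : (∑ j ∈ s, f j * g j) ^ 2 ≤ (∑ j ∈ s, f j ^ 2) * ∑ j ∈ s, g j ^ 2 :=
    Finset.sum_mul_sq_le_sq_mul_sq s f g
  calc ∑ j ∈ s, f j * g j
      = Real.sqrt ((∑ j ∈ s, f j * g j) ^ 2) :=
        (Real.sqrt_sq (Finset.sum_nonneg fun j _ => mul_nonneg (hf0 j) (hg0 j))).symm
    _ ≤ Real.sqrt ((∑' j, f j ^ 2) * ∑' j, g j ^ 2) := by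
        refine Real.sqrt_le_sqrt (h1.trans ?_)
        exact mul_le_mul (Summable.sum_le_tsum s (fun j _ => sq_nonneg _) hf2)
          (Summable.sum_le_tsum s (fun j _ => sq_nonneg _) hg2)
          (Finset.sum_nonneg fun j _ => sq_nonneg (g j))
          (tsum_nonneg fun j => sq_nonneg _)
    _ = Real.sqrt (∑' j, f j ^ 2) * Real.sqrt (∑' j, g j ^ 2) :=
        Real.sqrt_mul (tsum_nonneg fun j => sq_nonneg _) _

lemma my_exists_lam {H : Type*} [NormedAddCommGroup H] [InnerProductSpace ℂ H] (u v : H) :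
    ∃ c : ℂ, ‖c‖ = 1 ∧ ‖u - c • v‖ ^ 2 = ‖u‖ ^ 2 + ‖v‖ ^ 2 - 2 * ‖⟪u, v⟫‖ := by
  set z := ⟪u, v⟫ with hz
  have hc1 : ‖(if z = 0 then 1 else (starRingEnd ℂ) z / (‖z‖ : ℂ))‖ = 1 := by
    by_cases h : z = 0
    · simp [h]
    · simp [h, norm_div, Complex.norm_real, norm_ne_zero_iff.mpr h]
  refine ⟨if z = 0 then 1 else (starRingEnd ℂ z) / (‖z‖ : ℂ), hc1, ?_⟩
  have hc : (if z = 0 then 1 else (starRingEnd ℂ) z / (‖z‖ : ℂ)) * z = (‖z‖ : ℂ) := by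
    by_cases h : z = 0
    · simp [h]
    · rw [if_neg h, div_mul_eq_mul_div, ← Complex.normSq_eq_conj_mul_self,
        Complex.normSq_eq_norm_sq]
      have : (‖z‖ : ℝ) ≠ 0 := by
        simpa using norm_ne_zero_iff.mpr h
      push_cast
      rw [sq, mul_div_assoc, div_self (by exact_mod_cast this), mul_one]
  rw [@norm_sub_sq ℂ, inner_smul_right, ← hz, hc, norm_smul, hc1]
  simp
  ring

set_option maxHeartbeats 1000000 in
/-- If `(x j)` is a frame of a Hilbert space `H` with upper frame bound `B` satisfying
Balan's inequality with constant `a₀ > 0`, then `(x j)` does `(2a₀⁻¹B)^{1/2}`-stable phase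
retrieval in `ℓ₄(J)`: `min_{|λ|=1} ‖u - λv‖ ≤ (2a₀⁻¹B)^{1/2} (∑ⱼ ||⟨u,xⱼ⟩|-|⟨v,xⱼ⟩||⁴)^{1/4}`
for all `u, v ∈ H`. -/
theorem stmt_12 {H : Type*} [NormedAddCommGroup H] [InnerProductSpace ℂ H] [CompleteSpace H]
    {J : Type*} (x : J → H) (B a₀ : ℝ) (hB : 0 < B)
    (hx_summable : ∀ u : H, Summable fun j => ‖⟪u, x j⟫‖ ^ 2)
    (hx_upper : ∀ u : H, ∑' j, ‖⟪u, x j⟫‖ ^ 2 ≤ B * ‖u‖ ^ 2)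
    (ha₀ : 0 < a₀)
    (hbalan : ∀ u v : H,
      a₀ * (‖u - v‖ ^ 2 * ‖u + v‖ ^ 2 - 4 * (⟪u, v⟫.im) ^ 2) ≤
        ∑' j, (‖⟪u, x j⟫‖ ^ 2 - ‖⟪v, x j⟫‖ ^ 2) ^ 2) :
    ∀ u v : H,
      (⨅ lam : {c : ℂ // ‖c‖ = 1}, ‖u - (lam : ℂ) • v‖) ≤
        Real.sqrt (2 * a₀⁻¹ * B) *
          (∑' j, |‖⟪u, x j⟫‖ - ‖⟪v, x j⟫‖| ^ 4) ^ (1 / 4 : ℝ) := by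
  intro u v
  set a : J → ℝ := fun j => ‖⟪u, x j⟫‖ with ha
  set b : J → ℝ := fun j => ‖⟪v, x j⟫‖ with hb
  have ha0 : ∀ j, 0 ≤ a j := fun j => norm_nonneg _
  have hb0 : ∀ j, 0 ≤ b j := fun j => norm_nonneg _
  set S : ℝ := ‖u‖ ^ 2 + ‖v‖ ^ 2 with hS
  set t : ℝ := ‖⟪u, v⟫‖ with htdef
  have ht0 : 0 ≤ t := norm_nonneg _
  have hS0 : 0 ≤ S := by positivity
  set m : ℝ := S - 2 * t with hm
  -- pointwise bound (a j + b j)^2 ≤ 2 * B * S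
  have hSa : Summable fun j => a j ^ 2 := hx_summable u
  have hSb : Summable fun j => b j ^ 2 := hx_summable v
  have hpt : ∀ j, (a j + b j) ^ 2 ≤ 2 * B * S := by
    intro j
    have h1 : a j ^ 2 ≤ B * ‖u‖ ^ 2 :=
      le_trans (Summable.le_tsum hSa j fun i _ => sq_nonneg _) (hx_upper u)
    have h2 : b j ^ 2 ≤ B * ‖v‖ ^ 2 :=
      le_trans (Summable.le_tsum hSb j fun i _ => sq_nonneg _) (hx_upper v)
    nlinarith [sq_nonneg (a j - b j)]
  have hBS0 : 0 ≤ 2 * B * S := by positivity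
  -- summabilities
  have hsub2 : Summable fun j => (a j - b j) ^ 2 := by
    refine Summable.of_nonneg_of_le (fun j => sq_nonneg _) (fun j => ?_)
      (((hSa.add hSb)).mul_left 2)
    nlinarith [sq_nonneg (a j + b j)]
  have hadd2 : Summable fun j => (a j + b j) ^ 2 := by
    refine Summable.of_nonneg_of_le (fun j => sq_nonneg _) (fun j => ?_)
      (((hSa.add hSb)).mul_left 2)
    nlinarith [sq_nonneg (a j - b j)]
  have hsub4 : Summable fun j => (a j - b j) ^ 4 := by
    refine Summable.of_nonneg_of_le (fun j => by positivity) (fun j => ?_)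
      (hsub2.mul_left (2 * B * S))
    have hab : (a j - b j) ^ 2 ≤ 2 * B * S := by
      nlinarith [hpt j, mul_nonneg (ha0 j) (hb0 j)]
    calc (a j - b j) ^ 4 = (a j - b j) ^ 2 * (a j - b j) ^ 2 := by ring
      _ ≤ 2 * B * S * (a j - b j) ^ 2 := mul_le_mul_of_nonneg_right hab (sq_nonneg _)
  have hadd4 : Summable fun j => (a j + b j) ^ 4 := by
    refine Summable.of_nonneg_of_le (fun j => by positivity) (fun j => ?_)
      (hadd2.mul_left (2 * B * S))
    nlinarith [sq_nonneg (a j + b j), hpt j]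
  -- D₄
  set D : ℝ := ∑' j, (a j - b j) ^ 4 with hD
  have hD0 : 0 ≤ D := tsum_nonneg fun j => by positivity
  have hsqrtD0 : 0 ≤ Real.sqrt D := Real.sqrt_nonneg _
  -- ∑ (a+b)^4 ≤ (2BS)^2
  have hadd2le : (∑' j, (a j + b j) ^ 2) ≤ 2 * B * S := by
    have : (∑' j, (a j + b j) ^ 2) ≤ ∑' j, (2 * (a j ^ 2 + b j ^ 2)) := by
      refine Summable.tsum_le_tsum (fun j => by nlinarith [sq_nonneg (a j - b j)]) hadd2
        ((hSa.add hSb).mul_left 2)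
    rw [tsum_mul_left, Summable.tsum_add hSa hSb] at this
    calc (∑' j, (a j + b j) ^ 2) ≤ 2 * ((∑' j, a j ^ 2) + ∑' j, b j ^ 2) := this
      _ ≤ 2 * (B * ‖u‖ ^ 2 + B * ‖v‖ ^ 2) := by
          have := hx_upper u; have := hx_upper v
          gcongr <;> assumption
      _ = 2 * B * S := by rw [hS]; ring
  have hadd4le : (∑' j, (a j + b j) ^ 4) ≤ (2 * B * S) ^ 2 := by
    calc (∑' j, (a j + b j) ^ 4) ≤ ∑' j, (2 * B * S) * (a j + b j) ^ 2 := by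
          refine Summable.tsum_le_tsum (fun j => ?_) hadd4 (hadd2.mul_left _)
          nlinarith [sq_nonneg (a j + b j), hpt j]
      _ = (2 * B * S) * ∑' j, (a j + b j) ^ 2 := tsum_mul_left
      _ ≤ (2 * B * S) * (2 * B * S) := by gcongr
      _ = (2 * B * S) ^ 2 := (sq _).symm
  -- Cauchy–Schwarz step
  have hCS : (∑' j, (a j ^ 2 - b j ^ 2) ^ 2) ≤ Real.sqrt D * (2 * B * S) := by
    have heq : (∑' j, (a j ^ 2 - b j ^ 2) ^ 2)
        = ∑' j, ((a j - b j) ^ 2 * (a j + b j) ^ 2) := by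
      exact tsum_congr fun j => by ring
    have hcs := my_tsum_cs (f := fun j => (a j - b j) ^ 2) (g := fun j => (a j + b j) ^ 2)
      (fun j => sq_nonneg _) (fun j => sq_nonneg _)
      (by simpa [← pow_mul] using hsub4) (by simpa [← pow_mul] using hadd4)
    rw [heq]
    refine hcs.trans ?_
    have h4 : Real.sqrt (∑' j, ((a j + b j) ^ 2) ^ 2) ≤ 2 * B * S := by
      rw [show (fun j => ((a j + b j) ^ 2) ^ 2) = fun j => (a j + b j) ^ 4 by
        funext j; ring]
      exact (Real.sqrt_le_sqrt hadd4le).trans_eq (Real.sqrt_sq hBS0)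
    have h5 : Real.sqrt (∑' j, ((a j - b j) ^ 2) ^ 2) = Real.sqrt D := by
      rw [show (fun j => ((a j - b j) ^ 2) ^ 2) = fun j => (a j - b j) ^ 4 by
        funext j; ring]
    rw [h5]
    exact mul_le_mul_of_nonneg_left h4 hsqrtD0
  -- identity for Balan's LHS
  have hid : ‖u - v‖ ^ 2 * ‖u + v‖ ^ 2 - 4 * (⟪u, v⟫.im) ^ 2 = m * (S + 2 * t) := by
    have h1 : ‖u - v‖ ^ 2 = S - 2 * (⟪u, v⟫.re) := by
      rw [@norm_sub_sq ℂ]; simp [hS]; ring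
    have h2 : ‖u + v‖ ^ 2 = S + 2 * (⟪u, v⟫.re) := by
      rw [@norm_add_sq ℂ]; simp [hS]; ring
    have h3 : t ^ 2 = (⟪u, v⟫.re) ^ 2 + (⟪u, v⟫.im) ^ 2 := by
      rw [htdef, Complex.sq_norm, Complex.normSq_apply]; ring
    rw [h1, h2, hm]; nlinarith [h3]
  -- key inequality: m ≤ 2 a₀⁻¹ B √D
  have hkey : m ≤ 2 * a₀⁻¹ * B * Real.sqrt D := by
    have hbal := hbalan u v
    rw [hid] at hbal
    have hchain : a₀ * (m * (S + 2 * t)) ≤ (Real.sqrt D * (2 * B)) * (S + 2 * t) := by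
      refine hbal.trans (hCS.trans ?_)
      have : 2 * B * S ≤ 2 * B * (S + 2 * t) := by nlinarith
      calc Real.sqrt D * (2 * B * S) ≤ Real.sqrt D * (2 * B * (S + 2 * t)) :=
            mul_le_mul_of_nonneg_left this hsqrtD0
        _ = (Real.sqrt D * (2 * B)) * (S + 2 * t) := by ring
    rcases eq_or_lt_of_le (by positivity : (0:ℝ) ≤ S + 2 * t) with h | h
    · -- S + 2t = 0 : then S = 0 and t = 0, so m = 0
      have hSz : S = 0 := by linarith
      have htz : t = 0 := by linarith
      have hmz : m = 0 := by rw [hm, hSz, htz]; ring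
      rw [hmz]
      positivity
    · have h6 : a₀ * m ≤ Real.sqrt D * (2 * B) := by
        refine le_of_mul_le_mul_right ?_ h
        calc a₀ * m * (S + 2 * t) = a₀ * (m * (S + 2 * t)) := by ring
          _ ≤ Real.sqrt D * (2 * B) * (S + 2 * t) := hchain
      have h7 := mul_le_mul_of_nonneg_left h6 (inv_pos.mpr ha₀).le
      calc m = a₀⁻¹ * (a₀ * m) := by
            rw [← mul_assoc, inv_mul_cancel₀ ha₀.ne', one_mul]
        _ ≤ a₀⁻¹ * (Real.sqrt D * (2 * B)) := h7
        _ = 2 * a₀⁻¹ * B * Real.sqrt D := by ring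
  -- pick the optimal phase
  obtain ⟨c, hc1, hc2⟩ := my_exists_lam u v
  have hm0 : 0 ≤ m := by rw [hm, hS, htdef, ← hc2]; positivity
  have hnormc : ‖u - c • v‖ = Real.sqrt m := by
    rw [← Real.sqrt_sq (norm_nonneg (u - c • v)), hc2, hm, hS, htdef]
  have hinf : (⨅ lam : {c : ℂ // ‖c‖ = 1}, ‖u - (lam : ℂ) • v‖) ≤ Real.sqrt m := by
    have : (⨅ lam : {c : ℂ // ‖c‖ = 1}, ‖u - (lam : ℂ) • v‖) ≤ ‖u - c • v‖ := by
      refine ciInf_le ⟨0, ?_⟩ (⟨c, hc1⟩ : {c : ℂ // ‖c‖ = 1})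
      rintro y ⟨lam, rfl⟩
      exact norm_nonneg _
    exact this.trans_eq hnormc
  refine hinf.trans ?_
  -- final computation
  have hDeq : (∑' j, |a j - b j| ^ 4) = D := by
    rw [hD]; exact tsum_congr fun j => (even_two.mul_right 2).pow_abs _
  have hfin : Real.sqrt m ≤ Real.sqrt (2 * a₀⁻¹ * B) * D ^ (1 / 4 : ℝ) := by
    have h1 : Real.sqrt m ≤ Real.sqrt (2 * a₀⁻¹ * B * Real.sqrt D) := Real.sqrt_le_sqrt hkey
    have h2 : Real.sqrt (2 * a₀⁻¹ * B * Real.sqrt D)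
        = Real.sqrt (2 * a₀⁻¹ * B) * Real.sqrt (Real.sqrt D) :=
      Real.sqrt_mul (by positivity) _
    have h3 : Real.sqrt (Real.sqrt D) = D ^ (1 / 4 : ℝ) := by
      rw [Real.sqrt_eq_rpow, Real.sqrt_eq_rpow, ← Real.rpow_mul hD0]
      norm_num
    rw [h2, h3] at h1
    exact h1
  rw [hDeq]
  exact hfin
end

section
/- The family of six vectors F = ((1,0), (0,1), (1,1), (1,−1), (1,i), (1,−i)) in ℂ² does phase retrieval: if x, y ∈ ℂ² satisfy |⟨x, v⟩| = |⟨y, v⟩| for all v ∈ F, then x = λy for some scalar λ with |λ| = 1. -/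
open scoped ComplexInnerProductSpace
open Complex

/-- The vector `(a, b)` in `ℂ²`. -/
noncomputable def vec2 (a b : ℂ) : EuclideanSpace ℂ (Fin 2) :=
  (WithLp.equiv 2 (Fin 2 → ℂ)).symm ![a, b]

/-- The six-vector family `F = ((1,0), (0,1), (1,1), (1,-1), (1,i), (1,-i))` in `ℂ²`. -/
noncomputable def F : Fin 6 → EuclideanSpace ℂ (Fin 2) :=
  ![vec2 1 0, vec2 0 1, vec2 1 1, vec2 1 (-1), vec2 1 I, vec2 1 (-I)]

lemma phase_retrieval_key (a b c d : ℂ) (h1 : ‖a‖ = ‖c‖) (h2 : ‖b‖ = ‖d‖)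
    (h3 : a * starRingEnd ℂ b = c * starRingEnd ℂ d) :
    ∃ lam : ℂ, ‖lam‖ = 1 ∧ a = lam * c ∧ b = lam * d := by
  by_cases hc : c = 0
  · have ha : a = 0 := by rw [← norm_eq_zero, h1, hc, norm_zero]
    by_cases hd : d = 0
    · exact ⟨1, by simp, by simp [ha, hc], by
        have : b = 0 := by rw [← norm_eq_zero, h2, hd, norm_zero]
        simp [this, hd]⟩
    · refine ⟨b / d, ?_, by simp [ha, hc], by field_simp⟩
      rw [norm_div, h2, div_self (by simpa using hd)]
  · have ha : a ≠ 0 := by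
      intro h; apply hc; rw [← norm_eq_zero, ← h1, h, norm_zero]
    refine ⟨a / c, ?_, by field_simp, ?_⟩
    · rw [norm_div, h1, div_self (by simpa using hc)]
    · have hns : Complex.normSq a = Complex.normSq c := by
        rw [← Complex.sq_norm, ← Complex.sq_norm,
          h1]
      have hnorm : a * starRingEnd ℂ a = c * starRingEnd ℂ c := by
        rw [Complex.mul_conj, Complex.mul_conj, hns]
      have key2 : starRingEnd ℂ c * starRingEnd ℂ b = starRingEnd ℂ a * starRingEnd ℂ d := by
        apply mul_left_cancel₀ hc
        linear_combination (starRingEnd ℂ a) * h3 - (starRingEnd ℂ b) * hnorm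
      apply (starRingEnd ℂ).injective
      rw [map_mul, map_div₀]
      have hcc : starRingEnd ℂ c ≠ 0 := by simpa using hc
      field_simp
      linear_combination key2

lemma nsq_of_norm_eq {z w : ℂ} (h : ‖z‖ = ‖w‖) : Complex.normSq z = Complex.normSq w := by
  rw [← Complex.sq_norm, ← Complex.sq_norm, h]

/-- The family `F = ((1,0), (0,1), (1,1), (1,-1), (1,i), (1,-i))` does phase retrieval
in `ℂ²`. -/
theorem stmt_13 (u v : EuclideanSpace ℂ (Fin 2))
    (h : ∀ j : Fin 6, ‖⟪u, F j⟫‖ = ‖⟪v, F j⟫‖) :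
    ∃ lam : ℂ, ‖lam‖ = 1 ∧ u = lam • v := by
  have e0 := h 0; have e1 := h 1; have e2 := h 2; have e3 := h 3
  have e4 := h 4; have e5 := h 5
  simp [F, vec2, PiLp.inner_apply, Fin.sum_univ_two, RCLike.inner_apply] at e0 e1 e2 e3 e4 e5
  have f2 := nsq_of_norm_eq e2; have f3 := nsq_of_norm_eq e3
  have f4 := nsq_of_norm_eq e4; have f5 := nsq_of_norm_eq e5
  have key3 : u 0 * starRingEnd ℂ (u 1) = v 0 * starRingEnd ℂ (v 1) := by
    apply Complex.ext <;>
    · simp only [Complex.normSq_apply, Complex.add_re, Complex.add_im, Complex.mul_re,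
        Complex.mul_im, Complex.conj_re, Complex.conj_im, Complex.I_re, Complex.I_im,
        Complex.neg_re, Complex.neg_im, Complex.sub_re, Complex.sub_im] at f2 f3 f4 f5 ⊢
      ring_nf at f2 f3 f4 f5 ⊢
      linarith
  have h1 : ‖u 0‖ = ‖v 0‖ := by simpa using e0
  have h2 : ‖u 1‖ = ‖v 1‖ := by simpa using e1
  obtain ⟨lam, hl, ha, hb⟩ := phase_retrieval_key (u 0) (u 1) (v 0) (v 1) h1 h2 key3
  refine ⟨lam, hl, ?_⟩
  ext i
  fin_cases i
  · simpa using ha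
  · simpa using hb
end

section
/- Let k ∈ ℕ and let (x_j)_{j∈J} be the family in ℂ² consisting of k copies of (k^{−1/2}, 0), k copies of (0, k^{−1/2}), and the four vectors (1,1), (1,−1), (1,i), (1,−i). Then (x_j)_{j∈J} is a tight frame of ℂ² with frame bound 5, i.e. Σ_{j∈J} |⟨x, x_j⟩|² = 5‖x‖² for all x ∈ ℂ², and for every p > 2 it has upper p-frame bound 5^{1/2} and lower p-frame bound 1, i.e. ‖x‖ ≤ (Σ_{j∈J} |⟨x, x_j⟩|^p)^{1/p} ≤ 5^{1/2}‖x‖ for all x ∈ ℂ². -/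
open scoped ComplexInnerProductSpace
open Complex

/-- The family in `ℂ²` consisting of `k` copies of `(k^{-1/2}, 0)`, `k` copies of
`(0, k^{-1/2})`, and the four vectors `(1,1), (1,-1), (1,i), (1,-i)`. -/
noncomputable def exFrame (k : ℕ) : Fin k ⊕ Fin k ⊕ Fin 4 → EuclideanSpace ℂ (Fin 2) :=
  Sum.elim (fun _ => vec2 (((Real.sqrt k)⁻¹ : ℝ) : ℂ) 0)
    (Sum.elim (fun _ => vec2 0 (((Real.sqrt k)⁻¹ : ℝ) : ℂ))
      ![vec2 1 1, vec2 1 (-1), vec2 1 I, vec2 1 (-I)])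

lemma inner_vec2 (u : EuclideanSpace ℂ (Fin 2)) (a b : ℂ) :
    ⟪u, vec2 a b⟫ = starRingEnd ℂ (u 0) * a + starRingEnd ℂ (u 1) * b := by
  simp [vec2, PiLp.inner_apply, Fin.sum_univ_two]
  ring

lemma sum_split (k : ℕ) (f : Fin k ⊕ Fin k ⊕ Fin 4 → ℝ) :
    ∑ j, f j = (∑ i : Fin k, f (.inl i)) + (∑ i : Fin k, f (.inr (.inl i)))
      + (f (.inr (.inr 0)) + f (.inr (.inr 1)) + f (.inr (.inr 2)) + f (.inr (.inr 3))) := by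
  rw [Fintype.sum_sum_type, Fintype.sum_sum_type, Fin.sum_univ_four]
  ring

lemma exFrame_inl (k : ℕ) (i : Fin k) :
    exFrame k (.inl i) = vec2 (((Real.sqrt k)⁻¹ : ℝ) : ℂ) 0 := rfl
lemma exFrame_inrl (k : ℕ) (i : Fin k) :
    exFrame k (.inr (.inl i)) = vec2 0 (((Real.sqrt k)⁻¹ : ℝ) : ℂ) := rfl
lemma exFrame_inr0 (k : ℕ) : exFrame k (.inr (.inr 0)) = vec2 1 1 := rfl
lemma exFrame_inr1 (k : ℕ) : exFrame k (.inr (.inr 1)) = vec2 1 (-1) := rfl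
lemma exFrame_inr2 (k : ℕ) : exFrame k (.inr (.inr 2)) = vec2 1 I := rfl
lemma exFrame_inr3 (k : ℕ) : exFrame k (.inr (.inr 3)) = vec2 1 (-I) := rfl

lemma norm_sq_eq (u : EuclideanSpace ℂ (Fin 2)) : ‖u‖^2 = ‖u 0‖^2 + ‖u 1‖^2 := by
  rw [EuclideanSpace.norm_eq, Real.sq_sqrt (by positivity)]
  simp [Fin.sum_univ_two]

lemma sum_sq (k : ℕ) (hk : 0 < k) (u : EuclideanSpace ℂ (Fin 2)) :
    ∑ j, ‖⟪u, exFrame k j⟫‖ ^ 2 = 5 * ‖u‖ ^ 2 := by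
  have hs : (0:ℝ) < Real.sqrt k := Real.sqrt_pos.2 (by exact_mod_cast hk)
  have hs2 : (Real.sqrt k) ^ 2 = (k:ℝ) := Real.sq_sqrt (by positivity)
  have hk' : (0:ℝ) < k := by exact_mod_cast hk
  rw [sum_split, norm_sq_eq]
  simp only [exFrame_inl, exFrame_inrl, exFrame_inr0, exFrame_inr1, exFrame_inr2,
    exFrame_inr3, inner_vec2, Finset.sum_const, Finset.card_univ, Fintype.card_fin,
    nsmul_eq_mul, mul_zero, add_zero, zero_add, mul_one, mul_neg]
  have e1 : ∀ z : ℂ, ‖z * ((Real.sqrt k)⁻¹:ℝ)‖^2 = ‖z‖^2 / k := by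
    intro z
    rw [norm_mul, Complex.norm_real, norm_inv, Real.norm_of_nonneg hs.le, mul_pow, inv_pow, hs2]
    ring
  rw [e1, e1, RCLike.norm_conj, RCLike.norm_conj]
  simp only [← Complex.normSq_eq_norm_sq, Complex.normSq_apply,
    Complex.add_re, Complex.add_im, Complex.sub_re, Complex.sub_im, Complex.mul_re,
    Complex.mul_im, Complex.I_re, Complex.I_im, Complex.conj_re, Complex.conj_im,
    Complex.neg_re, Complex.neg_im]
  field_simp
  ring

open Finset in
lemma sum_rpow_le_rpow_sum' {ι : Type*} (s : Finset ι) (g : ι → ℝ)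
    (hg : ∀ i ∈ s, 0 ≤ g i) {q : ℝ} (hq : 1 ≤ q) :
    (∑ i ∈ s, g i ^ q) ≤ (∑ i ∈ s, g i) ^ q := by
  have hq0 : (0:ℝ) < q := lt_of_lt_of_le one_pos hq
  set T := ∑ i ∈ s, g i with hT
  have hT0 : 0 ≤ T := Finset.sum_nonneg hg
  rcases eq_or_lt_of_le hT0 with h0 | hpos
  · have : ∀ i ∈ s, g i = 0 := by
      intro i hi
      exact (Finset.sum_eq_zero_iff_of_nonneg hg).1 h0.symm i hi
    rw [Finset.sum_congr rfl (fun i hi => by rw [this i hi, Real.zero_rpow hq0.ne'])]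
    simp [← h0, Real.zero_rpow hq0.ne']
  · calc (∑ i ∈ s, g i ^ q) ≤ ∑ i ∈ s, T ^ (q-1) * g i := by
          apply Finset.sum_le_sum
          intro i hi
          rcases eq_or_lt_of_le (hg i hi) with h0 | hgi
          · rw [← h0, Real.zero_rpow hq0.ne', mul_zero]
          · have hle : g i ≤ T := Finset.single_le_sum hg hi
            calc g i ^ q = g i ^ (q-1) * g i := by
                  have h := (Real.rpow_add hgi (q-1) 1).symm
                  rw [Real.rpow_one, sub_add_cancel] at h
                  exact h.symm
              _ ≤ T ^ (q-1) * g i :=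
                  mul_le_mul_of_nonneg_right
                    (Real.rpow_le_rpow hgi.le hle (by linarith)) (hg i hi)
      _ = T ^ q := by
          have h := (Real.rpow_add hpos (q-1) 1).symm
          rw [Real.rpow_one, sub_add_cancel] at h
          rw [← Finset.mul_sum, ← hT, ← h]

/-- `‖u‖ ≤ max` of the two inner products with `(1,1)` and `(1,-1)`. -/
lemma norm_le_max (k : ℕ) (u : EuclideanSpace ℂ (Fin 2)) :
    ‖u‖ ≤ max ‖⟪u, exFrame k (.inr (.inr 0))⟫‖ ‖⟪u, exFrame k (.inr (.inr 1))⟫‖ := by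
  set m := max ‖⟪u, exFrame k (.inr (.inr 0))⟫‖ ‖⟪u, exFrame k (.inr (.inr 1))⟫‖ with hm
  have hm0 : 0 ≤ m := le_trans (norm_nonneg _) (le_max_left _ _)
  have hpar : ‖⟪u, exFrame k (.inr (.inr 0))⟫‖^2 + ‖⟪u, exFrame k (.inr (.inr 1))⟫‖^2
      = 2 * ‖u‖^2 := by
    rw [norm_sq_eq, exFrame_inr0, exFrame_inr1, inner_vec2, inner_vec2]
    simp only [mul_one, mul_neg]
    simp only [← Complex.normSq_eq_norm_sq, Complex.normSq_apply,
      Complex.add_re, Complex.add_im, Complex.sub_re, Complex.sub_im,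
      Complex.conj_re, Complex.conj_im, Complex.neg_re, Complex.neg_im]
    ring
  have h1 : ‖u‖^2 ≤ m^2 := by
    have h0 : ‖⟪u, exFrame k (.inr (.inr 0))⟫‖ ≤ m := le_max_left _ _
    have h1 : ‖⟪u, exFrame k (.inr (.inr 1))⟫‖ ≤ m := le_max_right _ _
    nlinarith [norm_nonneg (⟪u, exFrame k (.inr (.inr 0))⟫),
      norm_nonneg (⟪u, exFrame k (.inr (.inr 1))⟫)]
  calc ‖u‖ = Real.sqrt (‖u‖^2) := (Real.sqrt_sq (norm_nonneg u)).symm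
    _ ≤ Real.sqrt (m^2) := Real.sqrt_le_sqrt h1
    _ = m := Real.sqrt_sq hm0

/-- The family `exFrame k` is a tight frame of `ℂ²` with frame bound `5` and, for every
`p > 2`, has upper `p`-frame bound `5^{1/2}` and lower `p`-frame bound `1`. -/
theorem stmt_14 (k : ℕ) (hk : 0 < k) :
    (∀ u : EuclideanSpace ℂ (Fin 2),
      ∑ j, ‖⟪u, exFrame k j⟫‖ ^ 2 = 5 * ‖u‖ ^ 2) ∧
    (∀ p : ℝ, 2 < p → ∀ u : EuclideanSpace ℂ (Fin 2),
      ‖u‖ ≤ (∑ j, ‖⟪u, exFrame k j⟫‖ ^ p) ^ (1 / p) ∧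
        (∑ j, ‖⟪u, exFrame k j⟫‖ ^ p) ^ (1 / p) ≤ Real.sqrt 5 * ‖u‖) := by
  refine ⟨fun u => sum_sq k hk u, fun p hp u => ?_⟩
  have hp0 : (0:ℝ) < p := by linarith
  set f : Fin k ⊕ Fin k ⊕ Fin 4 → ℝ := fun j => ‖⟪u, exFrame k j⟫‖ with hf
  have hfnn : ∀ j, 0 ≤ f j := fun j => norm_nonneg _
  have hSnn : 0 ≤ ∑ j, f j ^ p :=
    Finset.sum_nonneg fun j _ => Real.rpow_nonneg (hfnn j) p
  -- rewrite f j ^ p as (f j ^ 2) ^ (p/2)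
  have hrw : ∀ j, f j ^ p = (f j ^ 2) ^ (p/2) := by
    intro j
    rw [← Real.rpow_natCast (f j) 2, ← Real.rpow_mul (hfnn j)]
    congr 1
    ring
  constructor
  · -- lower bound
    have hmax := norm_le_max k u
    have key : ‖u‖ ^ p ≤ ∑ j, f j ^ p := by
      rcases max_cases (f (.inr (.inr 0))) (f (.inr (.inr 1))) with ⟨he, _⟩ | ⟨he, _⟩
      · calc ‖u‖ ^ p ≤ (f (.inr (.inr 0))) ^ p :=
              Real.rpow_le_rpow (norm_nonneg u) (by rw [← he]; exact hmax) hp0.le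
          _ ≤ ∑ j, f j ^ p := Finset.single_le_sum
              (fun j _ => Real.rpow_nonneg (hfnn j) p) (Finset.mem_univ _)
      · calc ‖u‖ ^ p ≤ (f (.inr (.inr 1))) ^ p :=
              Real.rpow_le_rpow (norm_nonneg u) (by rw [← he]; exact hmax) hp0.le
          _ ≤ ∑ j, f j ^ p := Finset.single_le_sum
              (fun j _ => Real.rpow_nonneg (hfnn j) p) (Finset.mem_univ _)
    calc ‖u‖ = (‖u‖ ^ p) ^ (1/p) := by
          rw [← Real.rpow_mul (norm_nonneg u), mul_one_div_cancel hp0.ne', Real.rpow_one]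
      _ ≤ (∑ j, f j ^ p) ^ (1/p) :=
          Real.rpow_le_rpow (Real.rpow_nonneg (norm_nonneg u) p) key (by positivity)
  · -- upper bound
    have hub : ∑ j, f j ^ p ≤ (5 * ‖u‖^2) ^ (p/2) := by
      calc ∑ j, f j ^ p = ∑ j, (f j ^ 2) ^ (p/2) := by
            exact Finset.sum_congr rfl fun j _ => hrw j
        _ ≤ (∑ j, f j ^ 2) ^ (p/2) :=
            sum_rpow_le_rpow_sum' _ _ (fun j _ => by positivity) (by linarith)
        _ = (5 * ‖u‖^2) ^ (p/2) := by rw [sum_sq k hk u]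
    calc (∑ j, f j ^ p) ^ (1/p) ≤ ((5 * ‖u‖^2) ^ (p/2)) ^ (1/p) :=
          Real.rpow_le_rpow hSnn hub (by positivity)
      _ = (5 * ‖u‖^2) ^ ((1:ℝ)/2) := by
          rw [← Real.rpow_mul (by positivity)]
          congr 1
          field_simp
      _ = Real.sqrt 5 * ‖u‖ := by
          rw [← Real.sqrt_eq_rpow, Real.sqrt_mul (by norm_num), Real.sqrt_sq (norm_nonneg u)]
end
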